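/- arXiv:1210.2694 — 14 statements merged into one kernel-verified Lean document; each statement's English description precedes it below -/
import Mathlib

section
/- (Lemma 2.1) For every integer n ≥ 1, dim_ℝ K(2n−1) ≥ n and dim_ℝ K(2n) ≥ n + 1. -/
open MvPolynomial

noncomputable section

/-- The polynomial ring `R = ℝ[x,y,z]`, with `x = X 0`, `y = X 1`, `z = X 2`. -/
abbrev R3 : Type := MvPolynomial (Fin 3) ℝ

/-- `J₁(r) = ⟨x^{r+1}, (x+y)^{r+1}⟩`. -/
def J1 (r : ℕ) : Ideal R3 :=
  Ideal.span {(X 0 : R3) ^ (r + 1), ((X 0 : R3) + X 1) ^ (r + 1)}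

/-- `J₂(r) = ⟨z^{r+1}, (z+y)^{r+1}⟩`. -/
def J2 (r : ℕ) : Ideal R3 :=
  Ideal.span {(X 2 : R3) ^ (r + 1), ((X 2 : R3) + X 1) ^ (r + 1)}

/-- `K(r)`: the ℝ-vector space of homogeneous polynomials `F` of degree `r` with
`y^{r+1}·F ∈ J₁(r) ∩ J₂(r)`, i.e. the degree-`r` homogeneous component of the
colon ideal `(J₁(r) ∩ J₂(r)) : ⟨y^{r+1}⟩`. -/
def K (r : ℕ) : Submodule ℝ R3 :=
  (homogeneousSubmodule (Fin 3) ℝ r) ⊓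
    (Submodule.comap (LinearMap.mulLeft ℝ ((X 1 : R3) ^ (r + 1)))
      ((J1 r ⊓ J2 r).restrictScalars ℝ))

open Submodule Finset Module

namespace Lem21


def em (a b c : ℕ) : Fin 3 →₀ ℕ :=
  Finsupp.single 0 a + Finsupp.single 1 b + Finsupp.single 2 c

def xm (a b c : ℕ) : R3 := monomial (em a b c) 1

lemma xm_eq_pow (a b c : ℕ) : xm a b c = X 0 ^ a * X 1 ^ b * X 2 ^ c := by
  simp [xm, em, X_pow_eq_monomial, monomial_mul]

lemma em_inj {a b c a' b' c' : ℕ} (h : em a b c = em a' b' c') :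
    a = a' ∧ b = b' ∧ c = c' := by
  have h0 : em a b c 0 = em a' b' c' 0 := by rw [h]
  have h1 : em a b c 1 = em a' b' c' 1 := by rw [h]
  have h2 : em a b c 2 = em a' b' c' 2 := by rw [h]
  simp [em, Finsupp.single_apply] at h0 h1 h2
  exact ⟨h0, h1, h2⟩

lemma xm_inj {a b c a' b' c' : ℕ} (h : xm a b c = xm a' b' c') :
    a = a' ∧ b = b' ∧ c = c' :=
  em_inj (monomial_left_injective (one_ne_zero) h)

lemma xm_mul (a b c a' b' c' : ℕ) :
    xm a b c * xm a' b' c' = xm (a+a') (b+b') (c+c') := by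
  simp [xm_eq_pow]; ring

lemma xm_isHomogeneous (a b c : ℕ) : (xm a b c).IsHomogeneous (a + b + c) := by
  have h := (((isHomogeneous_X ℝ (0 : Fin 3)).pow a).mul
    ((isHomogeneous_X ℝ (1 : Fin 3)).pow b)).mul ((isHomogeneous_X ℝ (2 : Fin 3)).pow c)
  rw [xm_eq_pow]
  simpa using h

def Dset (r : ℕ) : Finset ((_ : ℕ) × ℕ) := (range (r+1)).sigma (fun a => range (r+1-a))

def Mset (r : ℕ) : Finset R3 := (Dset r).image (fun p => xm p.1 p.2 (r - p.1 - p.2))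

lemma card_Mset (r : ℕ) : (Mset r).card * 2 = (r+1) * (r+2) := by
  have hinj : Set.InjOn (fun p : (_ : ℕ) × ℕ => xm p.1 p.2 (r - p.1 - p.2)) (Dset r) := by
    intro p hp q hq h
    obtain ⟨h1, h2, _⟩ := xm_inj h
    exact Sigma.ext h1 (by simp [h2])
  rw [Mset, Finset.card_image_of_injOn hinj, Dset, Finset.card_sigma]
  simp only [Finset.card_range]
  have h1 : ∑ a ∈ range (r+1), (r+1-a) = ∑ a ∈ range (r+1), (a+1) := by
    conv_lhs => rw [← Finset.sum_range_reflect]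
    apply Finset.sum_congr rfl
    intro i hi
    simp at hi
    omega
  have h2 : ∑ i ∈ range (r+2), i = ∑ a ∈ range (r+1), (a+1) := by
    rw [Finset.sum_range_succ' (fun i => i) (r+1)]
    simp
  have h3 := Finset.sum_range_id_mul_two (r+2)
  rw [h1, ← h2, h3]
  have h4 : r + 2 - 1 = r + 1 := by omega
  rw [h4]; ring

def V (r : ℕ) : Submodule ℝ R3 := homogeneousSubmodule (Fin 3) ℝ r

lemma mem_Mset {r a b c : ℕ} (h : a + b + c = r) : xm a b c ∈ Mset r := by
  apply Finset.mem_image.2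
  refine ⟨⟨a, b⟩, ?_, ?_⟩
  · simp [Dset, Finset.mem_sigma]
    omega
  · have : r - a - b = c := by omega
    simp only [this]

lemma V_eq_span (r : ℕ) : V r = span ℝ (Mset r : Set R3) := by
  apply le_antisymm
  · intro p hp
    rw [V, mem_homogeneousSubmodule] at hp
    rw [← MvPolynomial.support_sum_monomial_coeff p]
    apply Submodule.sum_mem
    intro d hd
    have hdeg : d 0 + d 1 + d 2 = r := by
      have := hp (MvPolynomial.mem_support_iff.1 hd)
      rw [← this]
      simp [Finsupp.weight, Finsupp.linearCombination, Finsupp.sum_fintype, Fin.sum_univ_three]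
    have hdm : d = em (d 0) (d 1) (d 2) := by
      ext i
      fin_cases i <;> simp [em, Finsupp.single_apply]
    have heq : monomial d (coeff d p) = (coeff d p) • xm (d 0) (d 1) (d 2) := by
      rw [xm, ← hdm, smul_monomial, smul_eq_mul, mul_one]
    rw [heq]
    exact Submodule.smul_mem _ _ (Submodule.subset_span (mem_Mset hdeg))
  · rw [Submodule.span_le]
    intro m hm
    obtain ⟨p, hp, rfl⟩ := Finset.mem_image.1 hm
    simp only [Dset, Finset.mem_sigma, Finset.mem_range] at hp
    rw [SetLike.mem_coe, V, mem_homogeneousSubmodule]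
    have hsum : p.1 + p.2 + (r - p.1 - p.2) = r := by omega
    have h := xm_isHomogeneous p.1 p.2 (r - p.1 - p.2)
    rwa [hsum] at h

lemma Mset_linearIndependent (r : ℕ) :
    LinearIndependent ℝ (fun x : (Mset r : Set R3) => (x : R3)) := by
  have hb : LinearIndependent ℝ (fun d : Fin 3 →₀ ℕ => (monomial d (1:ℝ) : R3)) := by
    have h := (MvPolynomial.basisMonomials (Fin 3) ℝ).linearIndependent
    have he : (fun d : Fin 3 →₀ ℕ => (monomial d (1:ℝ) : R3))
        = ⇑(MvPolynomial.basisMonomials (Fin 3) ℝ) := by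
      funext d
      rw [MvPolynomial.coe_basisMonomials]
    rw [he]
    exact h
  have h2 := hb.linearIndepOn_id
  apply h2.mono
  intro m hm
  obtain ⟨p, _, rfl⟩ := Finset.mem_image.1 hm
  exact ⟨em p.1 p.2 (r - p.1 - p.2), rfl⟩

lemma finrank_V_mul_two (r : ℕ) : finrank ℝ (V r) * 2 = (r+1)*(r+2) := by
  rw [V_eq_span, finrank_span_finset_eq_card (Mset_linearIndependent r), card_Mset]

instance V_fd (r : ℕ) : FiniteDimensional ℝ (V r) := by
  rw [V_eq_span]
  infer_instance



/-- generators with exponents bounded by r -/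
def Aset (r : ℕ) (xx yy zz : R3) (Cc D : ℕ) : Set R3 :=
  {f | ∃ p q, p ≤ r ∧ q ≤ r ∧ p + q = D ∧ f = xx^p * yy^q * zz^Cc}

lemma cong (r : ℕ) (xx yy zz : R3) (J : Ideal R3)
    (hJ : J = Ideal.span {xx^(r+1), (xx+yy)^(r+1)}) (Cc D : ℕ) :
    ∀ Q P, P + Q = D →
      xx^P * yy^Q * zz^Cc ∈ (J.restrictScalars ℝ) ⊔ span ℝ (Aset r xx yy zz Cc D) := by
  intro Q
  induction Q using Nat.strong_induction_on with
  | _ Q IH =>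
    intro P hPQ
    by_cases hQ : Q ≤ r
    · by_cases hP : P ≤ r
      · exact mem_sup_right (subset_span ⟨P, Q, hP, hQ, hPQ, rfl⟩)
      · apply mem_sup_left
        show xx^P * yy^Q * zz^Cc ∈ J
        have hP2 : xx^P = xx^(r+1) * xx^(P-(r+1)) := by
          rw [← pow_add]
          congr 1
          omega
        have hsp : xx^P * yy^Q * zz^Cc = (xx^(P-(r+1)) * yy^Q * zz^Cc) * xx^(r+1) := by
          rw [hP2]; ring
        rw [hsp]
        exact Ideal.mul_mem_left J _ (hJ ▸ Ideal.subset_span (by simp))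
    · -- Q ≥ r+1
      push_neg at hQ
      set Q' := Q - (r+1) with hQ'
      have hy : (yy:R3)^(r+1)
          = ∑ k ∈ range (r+2), (xx+yy)^k * (-xx)^(r+1-k) * ((r+1).choose k : R3) := by
        have h := add_pow (xx+yy) (-xx) (r+1)
        have he : xx + yy + -xx = yy := by ring
        rw [he] at h
        exact h
      have hsplit : xx^P * yy^Q * zz^Cc
          = ∑ k ∈ range (r+2), (xx^P * yy^Q' * zz^Cc)
              * ((xx+yy)^k * (-xx)^(r+1-k) * ((r+1).choose k : R3)) := by
        rw [← Finset.mul_sum, ← hy]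
        have hQQ : Q = Q' + (r+1) := by omega
        rw [hQQ, pow_add]
        ring
      rw [hsplit]
      apply Submodule.sum_mem
      intro k hk
      simp only [Finset.mem_range] at hk
      by_cases hkr : k = r+1
      · subst hkr
        apply mem_sup_left
        show _ ∈ J
        have : (xx^P * yy^Q' * zz^Cc) * ((xx+yy)^(r+1) * (-xx)^(r+1-(r+1))
              * ((r+1).choose (r+1) : R3))
            = ((xx^P * yy^Q' * zz^Cc) * ((-xx)^(r+1-(r+1)) * ((r+1).choose (r+1) : R3)))
              * (xx+yy)^(r+1) := by ring
        rw [this]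
        exact Ideal.mul_mem_left J _ (hJ ▸ Ideal.subset_span (by simp))
      · have hkle : k ≤ r := by omega
        have hexp : (xx+yy)^k = ∑ j ∈ range (k+1), xx^j * yy^(k-j) * (k.choose j : R3) :=
          add_pow xx yy k
        rw [hexp, Finset.sum_mul, Finset.sum_mul, Finset.mul_sum]
        apply Submodule.sum_mem
        intro j hj
        simp only [Finset.mem_range] at hj
        have heq : (xx^P * yy^Q' * zz^Cc)
              * ((xx^j * yy^(k-j) * (k.choose j : R3)) * (-xx)^(r+1-k) * ((r+1).choose k : R3))
            = ((-1:ℝ)^(r+1-k) * ((r+1).choose k : ℝ) * (k.choose j : ℝ))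
              • (xx^(P+(r+1-k)+j) * yy^(Q'+(k-j)) * zz^Cc) := by
          rw [smul_eq_C_mul]
          push_cast [map_mul, map_pow, map_neg, map_one, MvPolynomial.C_eq_coe_nat]
          ring
        rw [heq]
        apply Submodule.smul_mem
        apply IH
        · omega
        · omega



/-- the multiplication-then-quotient map -/
def Lmap (r : ℕ) (I : Ideal R3) : V r →ₗ[ℝ] (R3 ⧸ I.restrictScalars ℝ) :=
  ((I.restrictScalars ℝ).mkQ.comp (LinearMap.mulLeft ℝ ((X 1 : R3)^(r+1)))).comp
    (V r).subtype

open Classical in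
lemma rank_bound (r s : ℕ) (hs : s ≤ r + 1) (u t : Fin 3) (J : Ideal R3)
    (hJ : J = Ideal.span {(X u : R3)^(r+1), ((X u : R3) + X 1)^(r+1)})
    (hMg : ∀ m ∈ Mset r, ∃ a b c : ℕ, a + b + c = r ∧
        m = (X u : R3)^a * (X 1 : R3)^b * (X t : R3)^c) :
    finrank ℝ (LinearMap.range (Lmap r J))
      ≤ (∑ c ∈ range s, c) + (∑ k ∈ Icc 1 (r+1-s), k) := by
  set Jr := J.restrictScalars ℝ with hJr
  set mk := Jr.mkQ with hmk
  set GA : ℕ → Finset (R3 ⧸ Jr) := fun c =>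
    (Icc (r+1-c) r).image (fun p => mk ((X u : R3)^p * (X 1 : R3)^(2*r+1-c-p) * (X t : R3)^c))
    with hGA
  set GB : ℕ → Finset (R3 ⧸ Jr) := fun c =>
    (range (r-c+1)).image (fun a => mk ((X u : R3)^a * (X 1 : R3)^(2*r+1-c-a) * (X t : R3)^c))
    with hGB
  set G : Finset (R3 ⧸ Jr) :=
    ((range s).biUnion GA) ∪ ((Icc 1 (r+1-s)).biUnion (fun k => GB (r+1-k))) with hG
  -- range is inside span of G
  have hrange : LinearMap.range (Lmap r J) ≤ span ℝ (G : Set (R3 ⧸ Jr)) := by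
    rw [Lmap, LinearMap.range_comp, Submodule.range_subtype, V_eq_span, Submodule.map_span,
      Submodule.span_le]
    rintro w ⟨m, hm, rfl⟩
    obtain ⟨a, b, c, habc, rfl⟩ := hMg m hm
    have hmul : (X 1 : R3)^(r+1) * ((X u : R3)^a * (X 1 : R3)^b * (X t : R3)^c)
        = (X u : R3)^a * (X 1 : R3)^(b+(r+1)) * (X t : R3)^c := by
      rw [pow_add]; ring
    simp only [LinearMap.comp_apply, LinearMap.mulLeft_apply]
    rw [hmul]
    by_cases hc : c < s
    · -- use the congruence lemma
      have hmem := cong r (X u) (X 1) (X t) J hJ c (2*r+1-c) (b+(r+1)) a (by omega)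
      obtain ⟨xj, hxj, xs, hxs, hsum⟩ := Submodule.mem_sup.1 hmem
      have : mk ((X u : R3)^a * (X 1 : R3)^(b+(r+1)) * (X t : R3)^c) = mk xs := by
        rw [← hsum]
        simp only [hmk, map_add]
        have h0 : Jr.mkQ xj = 0 := by
          rwa [Submodule.mkQ_apply, Submodule.Quotient.mk_eq_zero]
        rw [h0, zero_add]
      rw [this]
      have h2 : mk xs ∈ span ℝ (mk '' (Aset r (X u) (X 1) (X t) c (2*r+1-c))) := by
        rw [← Submodule.map_span]
        exact Submodule.mem_map_of_mem hxs
      refine Submodule.span_le.2 ?_ h2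
      rintro w ⟨f, ⟨p, q, hp, hq, hpq, rfl⟩, rfl⟩
      apply Submodule.subset_span
      have hqe : q = 2*r+1-c-p := by omega
      refine Finset.mem_union_left _ (Finset.mem_biUnion.2 ⟨c, Finset.mem_range.2 hc, ?_⟩)
      simp only [hGA]
      apply Finset.mem_image.2
      refine ⟨p, Finset.mem_Icc.2 (by omega), by rw [hqe]⟩
    · -- direct: these are the GB generators
      apply Submodule.subset_span
      have hc' : r+1-(r+1-c) = c := by omega
      have hb : b+(r+1) = 2*r+1-c-a := by omega
      refine Finset.mem_union_right _ (Finset.mem_biUnion.2 ⟨r+1-c, Finset.mem_Icc.2 (by omega), ?_⟩)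
      simp only [hGB, hc']
      exact Finset.mem_image.2 ⟨a, Finset.mem_range.2 (by omega), by rw [hb]⟩
  -- cardinality bound
  have hcard : G.card ≤ (∑ c ∈ range s, c) + (∑ k ∈ Icc 1 (r+1-s), k) := by
    refine le_trans (Finset.card_union_le _ _) (Nat.add_le_add ?_ ?_)
    · refine le_trans (Finset.card_biUnion_le) (Finset.sum_le_sum ?_)
      intro c hc
      simp only [Finset.mem_range] at hc
      refine le_trans (Finset.card_image_le) ?_
      rw [Nat.card_Icc]
      omega
    · refine le_trans (Finset.card_biUnion_le) (Finset.sum_le_sum ?_)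
      intro k hk
      simp only [Finset.mem_Icc] at hk
      refine le_trans (Finset.card_image_le) ?_
      rw [Finset.card_range]
      omega
  calc finrank ℝ (LinearMap.range (Lmap r J)) ≤ finrank ℝ (span ℝ (G : Set (R3 ⧸ Jr))) := by
        have : FiniteDimensional ℝ (span ℝ (G : Set (R3 ⧸ Jr))) := by infer_instance
        exact Submodule.finrank_mono hrange
    _ ≤ G.card := finrank_span_finset_le_card G
    _ ≤ _ := hcard


/-- the colon subspace for a single ideal -/
def W (r : ℕ) (I : Ideal R3) : Submodule ℝ R3 :=
  V r ⊓ Submodule.comap (LinearMap.mulLeft ℝ ((X 1 : R3)^(r+1))) (I.restrictScalars ℝ)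

lemma W_le_V (r : ℕ) (I : Ideal R3) : W r I ≤ V r := inf_le_left

instance W_fd (r : ℕ) (I : Ideal R3) : FiniteDimensional ℝ (W r I) :=
  Submodule.finiteDimensional_of_le (W_le_V r I)

lemma ker_Lmap (r : ℕ) (I : Ideal R3) :
    LinearMap.ker (Lmap r I) = Submodule.comap (V r).subtype
      (Submodule.comap (LinearMap.mulLeft ℝ ((X 1 : R3)^(r+1))) (I.restrictScalars ℝ)) := by
  rw [Lmap, LinearMap.ker_comp, LinearMap.ker_comp, Submodule.ker_mkQ]

lemma finrank_W (r : ℕ) (I : Ideal R3) :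
    finrank ℝ (W r I) = finrank ℝ (LinearMap.ker (Lmap r I)) := by
  rw [← Submodule.finrank_map_subtype_eq (V r) (LinearMap.ker (Lmap r I)), ker_Lmap,
    Submodule.map_comap_subtype]
  rfl

lemma rank_nullity (r : ℕ) (I : Ideal R3) :
    finrank ℝ (LinearMap.range (Lmap r I)) + finrank ℝ (W r I) = finrank ℝ (V r) := by
  rw [finrank_W]
  exact LinearMap.finrank_range_add_finrank_ker (Lmap r I)

lemma K_eq (r : ℕ) : K r = W r (J1 r) ⊓ W r (J2 r) := by
  ext f
  simp only [K, W, V, Submodule.mem_inf, Submodule.mem_comap, Submodule.restrictScalars_mem]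
  tauto

lemma hMg1 (r : ℕ) : ∀ m ∈ Mset r, ∃ a b c : ℕ, a + b + c = r ∧
    m = (X (0 : Fin 3) : R3)^a * (X 1 : R3)^b * (X (2 : Fin 3) : R3)^c := by
  intro m hm
  obtain ⟨p, hp, rfl⟩ := Finset.mem_image.1 hm
  simp only [Dset, Finset.mem_sigma, Finset.mem_range] at hp
  exact ⟨p.1, p.2, r - p.1 - p.2, by omega, xm_eq_pow _ _ _⟩

lemma hMg2 (r : ℕ) : ∀ m ∈ Mset r, ∃ a b c : ℕ, a + b + c = r ∧
    m = (X (2 : Fin 3) : R3)^a * (X 1 : R3)^b * (X (0 : Fin 3) : R3)^c := by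
  intro m hm
  obtain ⟨p, hp, rfl⟩ := Finset.mem_image.1 hm
  simp only [Dset, Finset.mem_sigma, Finset.mem_range] at hp
  refine ⟨r - p.1 - p.2, p.2, p.1, by omega, ?_⟩
  rw [xm_eq_pow]
  ring

lemma main_bound (r s n' : ℕ) (hs : s ≤ r + 1)
    (hnum : (n' + 2*((∑ c ∈ range s, c) + (∑ k ∈ Icc 1 (r+1-s), k))) * 2 ≤ (r+1)*(r+2)) :
    n' ≤ finrank ℝ (K r) := by
  set ρ := (∑ c ∈ range s, c) + (∑ k ∈ Icc 1 (r+1-s), k) with hρ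
  have hr1 := rank_bound r s hs 0 2 (J1 r) rfl (hMg1 r)
  have hr2 := rank_bound r s hs 2 0 (J2 r) rfl (hMg2 r)
  have hn1 := rank_nullity r (J1 r)
  have hn2 := rank_nullity r (J2 r)
  have hsup : finrank ℝ (W r (J1 r) ⊔ W r (J2 r) : Submodule ℝ R3) ≤ finrank ℝ (V r) :=
    Submodule.finrank_mono (sup_le (W_le_V r _) (W_le_V r _))
  have hformula := Submodule.finrank_sup_add_finrank_inf_eq (W r (J1 r)) (W r (J2 r))
  have hKr : finrank ℝ (K r) = finrank ℝ (W r (J1 r) ⊓ W r (J2 r) : Submodule ℝ R3) := by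
    rw [K_eq]
  have hV2 := finrank_V_mul_two r
  omega


end Lem21

/-- Lemma 2.1: for every `n ≥ 1`, `dim_ℝ K(2n−1) ≥ n` and `dim_ℝ K(2n) ≥ n + 1`. -/
theorem lemma_2_1 (n : ℕ) (hn : 1 ≤ n) :
    n ≤ Module.finrank ℝ (K (2 * n - 1)) ∧ n + 1 ≤ Module.finrank ℝ (K (2 * n)) := by
  have gauss : ∀ m : ℕ, (∑ c ∈ range m, c) * 2 = m * (m-1) := Finset.sum_range_id_mul_two
  have gauss2 : ∀ m : ℕ, (∑ k ∈ Icc 1 m, k) * 2 = m * (m+1) := by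
    intro m
    have h1 : ∑ k ∈ Icc 1 m, k = ∑ i ∈ range m, (i+1) := by
      rw [← Finset.Ico_add_one_right_eq_Icc, Finset.sum_Ico_eq_sum_range]
      simp [add_comm]
    rw [h1, Finset.sum_add_distrib]
    simp only [Finset.sum_const, Finset.card_range, smul_eq_mul, mul_one]
    rw [add_mul, gauss m]
    cases m with
    | zero => simp
    | succ m' =>
      have h2 : m' + 1 - 1 = m' := rfl
      rw [h2]; ring
  constructor
  · obtain ⟨m, rfl⟩ : ∃ m, n = m + 1 := ⟨n-1, by omega⟩
    apply Lem21.main_bound (2*(m+1)-1) (m+1) (m+1) (by omega)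
    have h2 : 2*(m+1)-1+1-(m+1) = m+1 := by omega
    have h4 : 2*(m+1)-1+1 = 2*(m+1) := by omega
    have h5 : 2*(m+1)-1+2 = 2*(m+1)+1 := by omega
    rw [h2, h4, h5]
    have e1 : (∑ c ∈ range (m+1), c) * 2 = (m+1)*m := by
      have := gauss (m+1)
      simpa using this
    have e2 : (∑ k ∈ Icc 1 (m+1), k) * 2 = (m+1)*(m+2) := by
      have := gauss2 (m+1)
      simpa using this
    calc ((m+1) + 2*((∑ c ∈ range (m+1), c) + (∑ k ∈ Icc 1 (m+1), k))) * 2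
        = 2*(m+1) + 2*((∑ c ∈ range (m+1), c)*2) + 2*((∑ k ∈ Icc 1 (m+1), k)*2) := by ring
      _ = 2*(m+1) + 2*((m+1)*m) + 2*((m+1)*(m+2)) := by rw [e1, e2]
      _ ≤ (2*(m+1))*(2*(m+1)+1) := le_of_eq (by ring)
  · apply Lem21.main_bound (2*n) (n+1) (n+1) (by omega)
    have h2 : 2*n+1-(n+1) = n := by omega
    rw [h2]
    have e1 : (∑ c ∈ range (n+1), c) * 2 = (n+1)*n := by
      have := gauss (n+1)
      simpa using this
    have e2 : (∑ k ∈ Icc 1 n, k) * 2 = n*(n+1) := gauss2 n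
    calc ((n+1) + 2*((∑ c ∈ range (n+1), c) + (∑ k ∈ Icc 1 n, k))) * 2
        = 2*(n+1) + 2*((∑ c ∈ range (n+1), c)*2) + 2*((∑ k ∈ Icc 1 n, k)*2) := by ring
      _ = 2*(n+1) + 2*((n+1)*n) + 2*(n*(n+1)) := by rw [e1, e2]
      _ ≤ (2*n+1)*(2*n+2) := le_of_eq (by ring)

end
end

section
/- (Lemma 2.3(1)) For every integer r ≥ 1, y^{2r+1} belongs to both J₁(r) = ⟨x^{r+1}, (x+y)^{r+1}⟩ and J₂(r) = ⟨z^{r+1}, (z+y)^{r+1}⟩; consequently y^r ∈ K(r). -/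
open MvPolynomial

noncomputable section

lemma aux_mem {A : Type*} [CommRing A] (a b : A) (r : ℕ) :
    b ^ (2 * r + 1) ∈ Ideal.span ({a ^ (r + 1), (a + b) ^ (r + 1)} : Set A) := by
  set I := Ideal.span ({a ^ (r + 1), (a + b) ^ (r + 1)} : Set A) with hI
  have ha : a ^ (r + 1) ∈ I := Ideal.subset_span (Or.inl rfl)
  have hab : (a + b) ^ (r + 1) ∈ I := Ideal.subset_span (Or.inr rfl)
  have hb : b ^ (2 * r + 1) = ((a + b) + (-a)) ^ (2 * r + 1) := by ring
  rw [hb, add_pow]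
  apply Ideal.sum_mem
  intro k hk
  simp only [Finset.mem_range] at hk
  by_cases h : r + 1 ≤ k
  · have hpow : (a + b) ^ k = (a + b) ^ (r + 1) * (a + b) ^ (k - (r + 1)) := by
      rw [← pow_add]; congr 1; omega
    rw [hpow]
    exact Ideal.mul_mem_right _ _ (Ideal.mul_mem_right _ _ (Ideal.mul_mem_right _ _ hab))
  · have hpow : (-a) ^ (2 * r + 1 - k) =
        (-1) ^ (2 * r + 1 - k) * (a ^ (r + 1) * a ^ (2 * r + 1 - k - (r + 1))) := by
      rw [neg_pow, ← pow_add]; congr 2; omega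
    rw [hpow]
    exact Ideal.mul_mem_right _ _ (Ideal.mul_mem_left _ _
      (Ideal.mul_mem_left _ _ (Ideal.mul_mem_right _ _ ha)))

/-- Lemma 2.3(1): for every `r ≥ 1`, `y^{2r+1} ∈ J₁(r)` and `y^{2r+1} ∈ J₂(r)`;
consequently `y^r ∈ K(r)`. -/
theorem lemma_2_3_1 (r : ℕ) (hr : 1 ≤ r) :
    (X 1 : R3) ^ (2 * r + 1) ∈ J1 r ∧ (X 1 : R3) ^ (2 * r + 1) ∈ J2 r ∧
      (X 1 : R3) ^ r ∈ K r := by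
  have h1 : (X 1 : R3) ^ (2 * r + 1) ∈ J1 r := aux_mem (X 0) (X 1) r
  have h2 : (X 1 : R3) ^ (2 * r + 1) ∈ J2 r := aux_mem (X 2) (X 1) r
  refine ⟨h1, h2, ?_, ?_⟩
  · have := (isHomogeneous_X ℝ (1 : Fin 3)).pow r
    simpa [SetLike.mem_coe, mem_homogeneousSubmodule] using this
  · simp only [SetLike.mem_coe, Submodule.mem_comap, LinearMap.mulLeft_apply,
      Submodule.restrictScalars_mem, Ideal.mem_inf, Submodule.mem_inf]
    have hp : (X 1 : R3) ^ (r + 1) * (X 1) ^ r = (X 1) ^ (2 * r + 1) := by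
      rw [← pow_add]; congr 1; omega
    rw [hp]
    exact ⟨h1, h2⟩

end
end

section
/- (Lemma 2.3(2)) Let r ≥ 1 and let j be an integer with 0 ≤ j ≤ r−1. Then y^{j+r+1} ∉ J₁(r) = ⟨x^{r+1}, (x+y)^{r+1}⟩, i.e. y^j does not belong to the colon ideal J₁(r) : ⟨y^{r+1}⟩; likewise y^{j+r+1} ∉ J₂(r) = ⟨z^{r+1}, (z+y)^{r+1}⟩. -/
open MvPolynomial

noncomputable section

/-- If the exponent of `X i` in `m` is at most `r`, then the coefficient of `m` in any
multiple of `X i ^ (r+1)` vanishes. -/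
lemma coeff_term_zero (r : ℕ) (m : Fin 3 →₀ ℕ) (i : Fin 3) (hm : m i ≤ r) (a : R3) :
    coeff m (a * (X i : R3) ^ (r + 1)) = 0 := by
  rw [X_pow_eq_monomial, coeff_mul_monomial', if_neg]
  intro h
  have := h i
  simp [Finsupp.single_apply] at this
  omega

/-- Key computation: `(y - x)^{j+r+1} ∉ ⟨x^{r+1}, y^{r+1}⟩` when `j + 1 ≤ r`. -/
lemma key (r j : ℕ) (hj : j + 1 ≤ r) :
    ((X 1 : R3) - X 0) ^ (j + r + 1) ∉ Ideal.span {(X 0 : R3) ^ (r + 1), (X 1 : R3) ^ (r + 1)} := by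
  intro h
  rw [Ideal.mem_span_pair] at h
  obtain ⟨a, b, hab⟩ := h
  set n := j + r + 1 with hn
  set m : Fin 3 →₀ ℕ := Finsupp.single 0 (j+1) + Finsupp.single 1 r with hm
  have hm0 : m 0 = j + 1 := by simp [hm, Finsupp.single_apply]
  have hm1 : m 1 = r := by simp [hm, Finsupp.single_apply]
  have h0 : coeff m (a * (X 0 : R3)^(r+1) + b * (X 1 : R3)^(r+1)) = 0 := by
    rw [coeff_add, coeff_term_zero r m 0 (by omega), coeff_term_zero r m 1 (by omega), add_zero]
  rw [hab, sub_pow, coeff_sum] at h0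
  have hterm : ∀ k, coeff m ((-1:R3)^(k+n) * X 1 ^ k * X 0 ^ (n-k) * (n.choose k : R3))
      = ((-1:ℝ)^(k+n) * (n.choose k : ℝ)) *
        (if Finsupp.single 1 k + Finsupp.single 0 (n-k) = m then (1:ℝ) else 0) := by
    intro k
    rw [show ((-1:R3)^(k+n) * X 1 ^ k * X 0 ^ (n-k) * (n.choose k : R3))
        = C ((-1:ℝ)^(k+n) * (n.choose k:ℝ)) * (X 1 ^ k * X 0 ^ (n-k)) by
      simp only [map_mul, map_pow, map_neg, map_one, map_natCast]; ring]
    rw [coeff_C_mul, X_pow_eq_monomial, X_pow_eq_monomial, monomial_mul, mul_one,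
      coeff_monomial]
  rw [Finset.sum_congr rfl (fun k _ => hterm k)] at h0
  rw [Finset.sum_eq_single r] at h0
  · rw [if_pos] at h0
    · simp at h0
      exact absurd h0 (Nat.choose_pos (by omega : r ≤ n)).ne'
    · rw [hm]
      have : n - r = j + 1 := by omega
      rw [this, add_comm]
  · intro k hk hkr
    rw [if_neg, mul_zero]
    intro hEq
    have := congrArg (fun f => f 1) hEq
    simp [Finsupp.single_apply, hm1] at this
    exact hkr this
  · intro hr
    exact absurd (Finset.mem_range.mpr (by omega)) hr

/-- Lemma 2.3(2): for `1 ≤ r` and `0 ≤ j ≤ r−1`, `y^{j+r+1} ∉ J₁(r)`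
(i.e. `y^j` is not in the colon ideal `J₁(r) : ⟨y^{r+1}⟩`), and likewise for `J₂(r)`. -/
theorem lemma_2_3_2 (r j : ℕ) (hr : 1 ≤ r) (hj : j + 1 ≤ r) :
    (X 1 : R3) ^ (j + r + 1) ∉ J1 r ∧ (X 1 : R3) ^ (j + r + 1) ∉ J2 r := by
  constructor
  · intro h
    set φ : R3 →+* R3 := (aeval ![X 0, X 1 - X 0, 0] : R3 →ₐ[ℝ] R3).toRingHom with hφ
    have hmem := Ideal.mem_map_of_mem φ h
    rw [J1, Ideal.map_span, Set.image_pair] at hmem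
    have e1 : φ ((X 0 : R3) ^ (r+1)) = (X 0 : R3)^(r+1) := by
      rw [map_pow]; simp [hφ]
    have e2 : φ (((X 0 : R3) + X 1) ^ (r+1)) = (X 1 : R3)^(r+1) := by
      rw [map_pow]; congr 1; simp [hφ]
    have e3 : φ ((X 1 : R3)^(j+r+1)) = ((X 1 : R3) - X 0)^(j+r+1) := by
      rw [map_pow]; congr 1; simp [hφ]
    rw [e1, e2, e3] at hmem
    exact key r j hj hmem
  · intro h
    set φ : R3 →+* R3 := (aeval ![0, X 1 - X 0, X 0] : R3 →ₐ[ℝ] R3).toRingHom with hφ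
    have hmem := Ideal.mem_map_of_mem φ h
    rw [J2, Ideal.map_span, Set.image_pair] at hmem
    have e1 : φ ((X 2 : R3) ^ (r+1)) = (X 0 : R3)^(r+1) := by
      rw [map_pow]; simp [hφ]
    have e2 : φ (((X 2 : R3) + X 1) ^ (r+1)) = (X 1 : R3)^(r+1) := by
      rw [map_pow]; congr 1; simp [hφ]
    have e3 : φ ((X 1 : R3)^(j+r+1)) = ((X 1 : R3) - X 0)^(j+r+1) := by
      rw [map_pow]; congr 1; simp [hφ]
    rw [e1, e2, e3] at hmem
    exact key r j hj hmem

end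
end

section
/- (Lemma 2.3(3)) Let r ≥ 1 and let F ∈ K(r), i.e. F is homogeneous of degree r with y^{r+1}·F ∈ J₁(r) ∩ J₂(r). Then y·(∂²F/∂x∂z) ∈ K(r−1), i.e. y·F_{xz} is homogeneous of degree r−1 (or zero) and y^r·(y·F_{xz}) ∈ J₁(r−1) ∩ J₂(r−1) = ⟨x^r,(x+y)^r⟩ ∩ ⟨z^r,(z+y)^r⟩. -/
open MvPolynomial

noncomputable section

lemma pderiv_isHomogeneous {p : R3} {n : ℕ} (i : Fin 3) (h : p.IsHomogeneous n) :
    (pderiv i p).IsHomogeneous (n - 1) := by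
  classical
  have hp : pderiv i p
      = ∑ s ∈ p.support, monomial (s - Finsupp.single i 1) (coeff s p * (s i : ℝ)) := by
    conv_lhs => rw [p.as_sum]
    rw [map_sum]
    simp [pderiv_monomial]
  rw [hp]
  apply IsHomogeneous.sum
  intro s hs
  by_cases h0 : s i = 0
  · simp only [h0, Nat.cast_zero, mul_zero, map_zero]
    exact isHomogeneous_zero _ _ _
  · apply isHomogeneous_monomial
    have hd : s.degree = n := by
      rw [Finsupp.degree_eq_weight_one]
      exact h (by rwa [mem_support_iff] at hs)
    have hle : Finsupp.single i 1 ≤ s := by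
      rw [Finsupp.single_le_iff]
      omega
    have hadd : (s - Finsupp.single i 1) + Finsupp.single i 1 = s :=
      tsub_add_cancel_of_le hle
    have hds : (s - Finsupp.single i 1).degree + (Finsupp.single i 1).degree = s.degree := by
      rw [Finsupp.degree_eq_weight_one, ← map_add, hadd]
    have h1 : (Finsupp.single i 1).degree = 1 := by
      exact Finsupp.degree_single i 1
    omega

lemma pderiv_eq_zero_of_isHomogeneous_zero {p : R3} (i : Fin 3) (h : p.IsHomogeneous 0) :
    pderiv i p = 0 := by
  classical
  conv_lhs => rw [p.as_sum]
  rw [map_sum]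
  apply Finset.sum_eq_zero
  intro s hs
  have hd : s.degree = 0 := by
    rw [Finsupp.degree_eq_weight_one]
    exact h (by rwa [mem_support_iff] at hs)
  rw [Finsupp.degree_eq_zero_iff] at hd
  subst hd
  simp [pderiv_monomial]

lemma span_pderiv_mem {S : Set R3} {I : Ideal R3} (i : Fin 3) {p : R3}
    (hp : p ∈ Ideal.span S) (hS : ∀ g ∈ S, g ∈ I ∧ pderiv i g ∈ I) :
    p ∈ I ∧ pderiv i p ∈ I := by
  refine Submodule.span_induction (fun x hx => hS x hx) ?_ ?_ ?_ hp
  · simp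
  · rintro x y _ _ ⟨hx1, hx2⟩ ⟨hy1, hy2⟩
    exact ⟨I.add_mem hx1 hy1, by rw [map_add]; exact I.add_mem hx2 hy2⟩
  · rintro a x _ ⟨hx1, hx2⟩
    refine ⟨I.mul_mem_left a hx1, ?_⟩
    rw [smul_eq_mul, pderiv_mul]
    exact I.add_mem (I.mul_mem_left _ hx1) (I.mul_mem_left _ hx2)

lemma pderiv_pderiv_comm (i j : Fin 3) (p : R3) :
    pderiv i (pderiv j p) = pderiv j (pderiv i p) := by
  rcases eq_or_ne i j with rfl | hij
  · rfl
  · induction p using MvPolynomial.induction_on' with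
    | monomial s a =>
      simp only [pderiv_monomial]
      rw [Finsupp.tsub_apply, Finsupp.tsub_apply,
        Finsupp.single_eq_of_ne' hij, Finsupp.single_eq_of_ne' hij.symm]
      congr 1
      · rw [tsub_tsub, tsub_tsub, add_comm]
      · simp only [Nat.sub_zero]
        ring
    | add p q hp hq => simp only [map_add, hp, hq]

/-- Lemma 2.3(3): if `F ∈ K(r)` with `r ≥ 1`, then `y·∂²F/∂x∂z ∈ K(r−1)`. -/
theorem lemma_2_3_3 (r : ℕ) (hr : 1 ≤ r) (F : R3) (hF : F ∈ K r) :
    (X 1 : R3) * pderiv (0 : Fin 3) (pderiv (2 : Fin 3) F) ∈ K (r - 1) := by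
  rw [K, Submodule.mem_inf] at hF
  obtain ⟨hhom, hmem⟩ := hF
  rw [mem_homogeneousSubmodule] at hhom
  rw [Submodule.mem_comap, Submodule.restrictScalars_mem, LinearMap.mulLeft_apply,
    Submodule.mem_inf] at hmem
  obtain ⟨h1, h2⟩ := hmem
  set s := r - 1 with hs
  have hsr : s + 1 = r := Nat.succ_pred_eq_of_pos hr
  have pd20 : pderiv (2 : Fin 3) ((X 1 : R3) ^ (r + 1)) = 0 := by
    rw [pderiv_pow]
    simp
  have pd00 : pderiv (0 : Fin 3) ((X 1 : R3) ^ (r + 1)) = 0 := by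
    rw [pderiv_pow]
    simp
  -- J1 part
  have step1 : (X 1 : R3) ^ (r + 1) * pderiv (2 : Fin 3) F ∈ J1 r := by
    have := (span_pderiv_mem (I := J1 r) (2 : Fin 3) h1 ?_).2
    · rwa [pderiv_mul, pd20, zero_mul, zero_add] at this
    · rintro g hg
      rcases hg with rfl | rfl
      · refine ⟨Ideal.subset_span (by simp), ?_⟩
        rw [pderiv_pow]
        simp
      · refine ⟨Ideal.subset_span (by simp), ?_⟩
        rw [pderiv_pow]
        simp
  have hJ1gen : ∀ g ∈ ({(X 0 : R3) ^ (r + 1), ((X 0 : R3) + X 1) ^ (r + 1)} : Set R3),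
      g ∈ J1 s ∧ pderiv (0 : Fin 3) g ∈ J1 s := by
    rintro g hg
    have hx : (X 0 : R3) ^ (s + 1) ∈ J1 s := Ideal.subset_span (by simp)
    have hxy : ((X 0 : R3) + X 1) ^ (s + 1) ∈ J1 s := Ideal.subset_span (by simp)
    rcases hg with rfl | rfl
    · constructor
      · have : (X 0 : R3) ^ (r + 1) = (X 0 : R3) ^ (s + 1) * X 0 := by
          rw [← pow_succ, hsr]
        rw [this]
        exact Ideal.mul_mem_right _ _ hx
      · rw [pderiv_pow, pderiv_X_self, mul_one, Nat.add_sub_cancel, ← hsr]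
        exact Ideal.mul_mem_left _ _ hx
    · constructor
      · have : ((X 0 : R3) + X 1) ^ (r + 1) = ((X 0 : R3) + X 1) ^ (s + 1) * ((X 0 : R3) + X 1) := by
          rw [← pow_succ, hsr]
        rw [this]
        exact Ideal.mul_mem_right _ _ hxy
      · rw [pderiv_pow]
        simp only [map_add, pderiv_X_self, pderiv_X_of_ne (by decide : (1 : Fin 3) ≠ 0), add_zero,
          mul_one, Nat.add_sub_cancel, ← hsr]
        exact Ideal.mul_mem_left _ _ hxy
  have memJ1 : (X 1 : R3) ^ (r + 1) * pderiv (0 : Fin 3) (pderiv (2 : Fin 3) F) ∈ J1 s := by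
    have := (span_pderiv_mem (0 : Fin 3) step1 hJ1gen).2
    rwa [pderiv_mul, pd00, zero_mul, zero_add] at this
  -- J2 part
  have step2 : (X 1 : R3) ^ (r + 1) * pderiv (0 : Fin 3) F ∈ J2 r := by
    have := (span_pderiv_mem (I := J2 r) (0 : Fin 3) h2 ?_).2
    · rwa [pderiv_mul, pd00, zero_mul, zero_add] at this
    · rintro g hg
      rcases hg with rfl | rfl
      · refine ⟨Ideal.subset_span (by simp), ?_⟩
        rw [pderiv_pow]
        simp
      · refine ⟨Ideal.subset_span (by simp), ?_⟩
        rw [pderiv_pow]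
        simp [pderiv_X_of_ne (by decide : (2 : Fin 3) ≠ 0),
          pderiv_X_of_ne (by decide : (1 : Fin 3) ≠ 0)]
  have hJ2gen : ∀ g ∈ ({(X 2 : R3) ^ (r + 1), ((X 2 : R3) + X 1) ^ (r + 1)} : Set R3),
      g ∈ J2 s ∧ pderiv (2 : Fin 3) g ∈ J2 s := by
    rintro g hg
    have hz : (X 2 : R3) ^ (s + 1) ∈ J2 s := Ideal.subset_span (by simp)
    have hzy : ((X 2 : R3) + X 1) ^ (s + 1) ∈ J2 s := Ideal.subset_span (by simp)
    rcases hg with rfl | rfl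
    · constructor
      · have : (X 2 : R3) ^ (r + 1) = (X 2 : R3) ^ (s + 1) * X 2 := by
          rw [← pow_succ, hsr]
        rw [this]
        exact Ideal.mul_mem_right _ _ hz
      · rw [pderiv_pow, pderiv_X_self, mul_one, Nat.add_sub_cancel, ← hsr]
        exact Ideal.mul_mem_left _ _ hz
    · constructor
      · have : ((X 2 : R3) + X 1) ^ (r + 1) = ((X 2 : R3) + X 1) ^ (s + 1) * ((X 2 : R3) + X 1) := by
          rw [← pow_succ, hsr]
        rw [this]
        exact Ideal.mul_mem_right _ _ hzy
      · rw [pderiv_pow]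
        simp only [map_add, pderiv_X_self, pderiv_X_of_ne (by decide : (1 : Fin 3) ≠ 2), add_zero,
          mul_one, Nat.add_sub_cancel, ← hsr]
        exact Ideal.mul_mem_left _ _ hzy
  have memJ2 : (X 1 : R3) ^ (r + 1) * pderiv (0 : Fin 3) (pderiv (2 : Fin 3) F) ∈ J2 s := by
    have := (span_pderiv_mem (2 : Fin 3) step2 hJ2gen).2
    rw [pderiv_mul, pd20, zero_mul, zero_add, pderiv_pderiv_comm] at this
    exact this
  -- assemble
  rw [K, Submodule.mem_inf]
  refine ⟨?_, ?_⟩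
  · -- homogeneity
    show (X 1 : R3) * pderiv (0 : Fin 3) (pderiv (2 : Fin 3) F) ∈ homogeneousSubmodule (Fin 3) ℝ s
    rcases Nat.lt_or_ge r 2 with hr2 | hr2
    · have hr1 : r = 1 := by omega
      subst hr1
      have h0 : (pderiv (2 : Fin 3) F).IsHomogeneous 0 := pderiv_isHomogeneous _ hhom
      rw [pderiv_eq_zero_of_isHomogeneous_zero _ h0, mul_zero]
      exact isHomogeneous_zero _ _ _
    · have hD : (pderiv (0 : Fin 3) (pderiv (2 : Fin 3) F)).IsHomogeneous (r - 1 - 1) :=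
        pderiv_isHomogeneous _ (pderiv_isHomogeneous _ hhom)
      have := (isHomogeneous_X ℝ (1 : Fin 3)).mul hD
      have heq : 1 + (r - 1 - 1) = s := by omega
      rwa [heq] at this
  · rw [Submodule.mem_comap, Submodule.restrictScalars_mem, LinearMap.mulLeft_apply,
      Submodule.mem_inf]
    have hrw : (X 1 : R3) ^ (s + 1) * ((X 1 : R3) * pderiv (0 : Fin 3) (pderiv (2 : Fin 3) F))
        = (X 1 : R3) ^ (r + 1) * pderiv (0 : Fin 3) (pderiv (2 : Fin 3) F) := by
      rw [← mul_assoc, ← pow_succ, hsr]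
    rw [hrw]
    exact ⟨memJ1, memJ2⟩

end
end

section
/- (Proposition 2.4) Let r ≥ 1 and let σ : R → R be the ℝ-algebra automorphism of R = ℝ[x,y,z] interchanging x and z and fixing y. Then K(r) = { F ∈ R : F is homogeneous of degree r, y^{r+1}·F ∈ J₁(r), and σ(F) = F }; that is, a homogeneous polynomial F of degree r satisfies y^{r+1}·F ∈ J₁(r) ∩ J₂(r) if and only if y^{r+1}·F ∈ J₁(r) and F is symmetric under swapping x and z. -/
open MvPolynomial

noncomputable section

section CoreUniv
open Polynomial

lemma one_add_X_ne : (1 + Polynomial.X : Polynomial ℝ) ≠ 0 := by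
  intro h
  simpa using congrArg (fun p => Polynomial.coeff p 0) h

lemma natDegree_one_add_X : (1 + Polynomial.X : Polynomial ℝ).natDegree = 1 := by
  simpa [add_comm] using natDegree_X_add_C (1 : ℝ)

lemma dvd_iterate_deriv (m k : ℕ) (p : Polynomial ℝ) (h : (1 + Polynomial.X) ^ m ∣ p) :
    (1 + Polynomial.X) ^ (m - k) ∣ derivative^[k] p := by
  induction k generalizing p m with
  | zero => simpa using h
  | succ k ih =>
    rw [Function.iterate_succ_apply]
    have h1 : (1 + Polynomial.X) ^ (m - 1) ∣ derivative p := by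
      obtain ⟨g, rfl⟩ := h
      rw [derivative_mul, derivative_pow]
      simp only [derivative_add, derivative_one, derivative_X, zero_add, mul_one]
      exact dvd_add ((Dvd.dvd.mul_left (dvd_refl _) _).mul_right g)
        ((pow_dvd_pow _ (Nat.sub_le m 1)).mul_right _)
    have h2 := ih (m - 1) (derivative p) h1
    rwa [Nat.sub_sub, Nat.add_comm 1 k, ← Nat.sub_sub] at h2

lemma core_univ (r c d : ℕ) (hrd : r = d + c) (hc : 1 ≤ c) (χ : Polynomial ℝ)
    (hdeg : χ.natDegree ≤ d)
    (hdvd : (1 + Polynomial.X) ^ (d + 1 - c) ∣ χ)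
    (hwin : ∀ A, d + 1 ≤ A → A ≤ r → ((1 + Polynomial.X) ^ (r + 1) * χ).coeff A = 0) :
    χ = 0 := by
  by_contra hne
  set v := d + 1 - c with hv
  set Φ := (1 + Polynomial.X) ^ (r + 1) * χ with hΦ
  set W := derivative^[d+1] Φ with hW
  have hXdvd : Polynomial.X ^ c ∣ W := by
    rw [X_pow_dvd_iff]
    intro j hj
    rw [hW, coeff_iterate_derivative]
    rw [hwin (j + (d+1)) (by omega) (by omega), smul_zero]
  have honedvd : (1 + Polynomial.X) ^ (c + v) ∣ W := by
    have hΦdvd : (1 + Polynomial.X) ^ (r + 1 + v) ∣ Φ := by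
      obtain ⟨g, hg⟩ := hdvd
      exact ⟨g, by rw [hΦ, hg]; ring⟩
    have h3 := dvd_iterate_deriv (r + 1 + v) (d + 1) Φ hΦdvd
    have he : r + 1 + v - (d + 1) = c + v := by omega
    rwa [he] at h3
  have hΦdeg : Φ.natDegree ≤ r + 1 + d := by
    calc Φ.natDegree ≤ ((1 + Polynomial.X : Polynomial ℝ) ^ (r+1)).natDegree + χ.natDegree :=
          natDegree_mul_le
    _ ≤ r + 1 + d := by
        rw [natDegree_pow, natDegree_one_add_X]
        omega
  have hWdeg : W.natDegree ≤ r := by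
    have h7 : W.natDegree ≤ Φ.natDegree - (d + 1) := natDegree_iterate_derivative Φ (d + 1)
    omega
  have hW0 : W = 0 := by
    by_contra hW0
    have hcop : IsCoprime (Polynomial.X : Polynomial ℝ) (1 + Polynomial.X) := ⟨-1, 1, by ring⟩
    have hco : IsCoprime (Polynomial.X ^ c : Polynomial ℝ) ((1 + Polynomial.X) ^ (c + v)) := hcop.pow
    have hdvdW := hco.mul_dvd hXdvd honedvd
    have hled := natDegree_le_of_dvd hdvdW hW0
    rw [natDegree_mul (pow_ne_zero _ X_ne_zero) (pow_ne_zero _ one_add_X_ne),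
      natDegree_pow, natDegree_pow, natDegree_X, natDegree_one_add_X] at hled
    omega
  have hcoeff : ∀ j, Φ.coeff (j + (d + 1)) = 0 := by
    intro j
    have h4 : (derivative^[d+1] Φ).coeff j = 0 := by rw [← hW, hW0, Polynomial.coeff_zero]
    rw [coeff_iterate_derivative] at h4
    have h5 : (j + (d+1)).descFactorial (d+1) ≠ 0 := by
      intro h
      have := Nat.descFactorial_eq_zero_iff_lt.mp h
      omega
    exact (smul_eq_zero.mp h4).resolve_left (by exact_mod_cast h5)
  have hΦne : Φ ≠ 0 := mul_ne_zero (pow_ne_zero _ one_add_X_ne) hne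
  have hdegΦ : Φ.natDegree = r + 1 + χ.natDegree := by
    rw [hΦ, natDegree_mul (pow_ne_zero _ one_add_X_ne) hne, natDegree_pow,
      natDegree_one_add_X, mul_one]
  apply leadingCoeff_ne_zero.mpr hΦne
  have h6 : Φ.natDegree = (Φ.natDegree - (d + 1)) + (d + 1) := by omega
  rw [leadingCoeff, h6]
  exact hcoeff _


end CoreUniv





def amap : R3 →ₐ[ℝ] R3 := aeval ![X 0, X 1 - X 0, X 2]

def emap : R3 →ₐ[ℝ] Polynomial (Polynomial ℝ) :=
  aeval ![Polynomial.C (-Polynomial.X), Polynomial.C 1, Polynomial.X]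

def pmap : R3 →ₐ[ℝ] Polynomial (Polynomial ℝ) :=
  aeval ![Polynomial.C (-Polynomial.X), Polynomial.C (1 + Polynomial.X), Polynomial.X]

lemma homog_deg3 {n : ℕ} {G : R3} (hG : G.IsHomogeneous n) {μ : Fin 3 →₀ ℕ}
    (h : coeff μ G ≠ 0) : μ 0 + μ 1 + μ 2 = n := by
  have h1 : (Finsupp.weight 1) μ = n := hG h
  rw [show (Finsupp.weight 1 : (Fin 3 →₀ ℕ) →+ ℕ) = Finsupp.degree from
    Finsupp.degree_eq_weight_one.symm] at h1
  have h2 : ∑ i ∈ μ.support, μ i = ∑ i : Fin 3, μ i :=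
    Finset.sum_subset (Finset.subset_univ _) (fun i _ hi => Finsupp.notMem_support_iff.mp hi)
  rw [Finsupp.degree_apply, h2, Fin.sum_univ_three] at h1
  exact h1

lemma coeff_aeval (u w : Polynomial ℝ) (P : R3) (c : ℕ) :
    ((aeval ![Polynomial.C u, Polynomial.C w, (Polynomial.X : Polynomial (Polynomial ℝ))]) P).coeff c
      = ∑ μ ∈ P.support,
          (if μ 2 = c then Polynomial.C (coeff μ P) * u ^ (μ 0) * w ^ (μ 1) else 0) := by
  conv_lhs => rw [P.as_sum, map_sum]
  rw [Polynomial.finset_sum_coeff]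
  apply Finset.sum_congr rfl
  intro μ _
  rw [aeval_monomial]
  rw [Finsupp.prod_fintype _ _ (fun i => pow_zero _), Fin.prod_univ_three]
  simp only [Matrix.cons_val_zero, Matrix.cons_val_one, Matrix.head_cons,
    Matrix.cons_val_two, Matrix.tail_cons]
  have halg : (algebraMap ℝ (Polynomial (Polynomial ℝ))) (coeff μ P)
      = Polynomial.C (Polynomial.C (coeff μ P)) := rfl
  rw [halg, ← Polynomial.C_pow, ← Polynomial.C_pow, ← Polynomial.C_mul, ← mul_assoc,
    ← Polynomial.C_mul, Polynomial.coeff_C_mul, Polynomial.coeff_X_pow]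
  by_cases h : μ 2 = c
  · simp [h, mul_assoc]
  · simp [h, Ne.symm h]

lemma coeff_mul_X_pow_eq_zero {i : Fin 3} {n : ℕ} (P : R3) (μ : Fin 3 →₀ ℕ)
    (h : μ i < n) : coeff μ (P * X i ^ n) = 0 := by
  rw [← notMem_support_iff]
  intro hmem
  have hsub := support_mul P (X i ^ n : R3) hmem
  rw [support_X_pow] at hsub
  rw [Finset.mem_add] at hsub
  obtain ⟨a, ha, b, hb, hab⟩ := hsub
  rw [Finset.mem_singleton] at hb
  subst hb
  have : μ i = a i + n := by rw [← hab]; simp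
  omega

lemma mono_coeff (r : ℕ) (Ω : R3)
    (hmem : Ω ∈ Ideal.span {(X 0 : R3) ^ (r + 1), (X 1 : R3) ^ (r + 1)})
    (μ : Fin 3 →₀ ℕ) (h0 : μ 0 ≤ r) (h1 : μ 1 ≤ r) : coeff μ Ω = 0 := by
  obtain ⟨P, Q, hPQ⟩ := Ideal.mem_span_pair.mp hmem
  rw [← hPQ, coeff_add, coeff_mul_X_pow_eq_zero P μ (by omega),
    coeff_mul_X_pow_eq_zero Q μ (by omega), add_zero]

lemma window (r : ℕ) (Ω : R3) (hhom : Ω.IsHomogeneous (2 * r + 1))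
    (hmem : Ω ∈ Ideal.span {(X 0 : R3) ^ (r + 1), (X 1 : R3) ^ (r + 1)})
    (c A : ℕ) (hA : A ≤ r) (hAc : r + 1 ≤ A + c) :
    ((emap Ω).coeff c).coeff A = 0 := by
  rw [emap, coeff_aeval, Polynomial.finset_sum_coeff]
  apply Finset.sum_eq_zero
  intro μ hμ
  have hne := mem_support_iff.mp hμ
  have hdeg := homog_deg3 hhom hne
  by_cases h2 : μ 2 = c
  · rw [if_pos h2]
    by_cases h0 : μ 0 = A
    · exfalso
      exact hne (mono_coeff r Ω hmem μ (by omega) (by omega))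
    · have hre : Polynomial.C (coeff μ Ω) * (-Polynomial.X) ^ (μ 0) * (1 : Polynomial ℝ) ^ (μ 1)
          = Polynomial.C (coeff μ Ω * (-1) ^ (μ 0)) * Polynomial.X ^ (μ 0) := by
        rw [one_pow, mul_one, neg_pow, map_mul, map_pow, map_neg, map_one]
        ring
      rw [hre, Polynomial.coeff_C_mul, Polynomial.coeff_X_pow,
        if_neg (fun h => h0 h.symm), mul_zero]
  · rw [if_neg h2, Polynomial.coeff_zero]

lemma pmap_coeff (P : R3) (c : ℕ) :
    (pmap P).coeff c = ∑ μ ∈ P.support,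
      (if μ 2 = c then
        Polynomial.C (coeff μ P) * (-Polynomial.X) ^ (μ 0) * (1 + Polynomial.X) ^ (μ 1)
      else 0) :=
  coeff_aeval _ _ P c

lemma natDegree_one_add_X' : (1 + Polynomial.X : Polynomial ℝ).natDegree = 1 := by
  simpa [add_comm] using Polynomial.natDegree_X_add_C (1 : ℝ)

lemma chi_deg {r : ℕ} (c : ℕ) {G : R3} (hG : G.IsHomogeneous r) :
    ((pmap G).coeff c).natDegree ≤ r - c := by
  rw [pmap_coeff]
  apply Polynomial.natDegree_sum_le_of_forall_le
  intro μ hμ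
  split_ifs with h
  · have hdeg := homog_deg3 hG (mem_support_iff.mp hμ)
    calc (Polynomial.C (coeff μ G) * (-Polynomial.X) ^ (μ 0)
            * (1 + Polynomial.X) ^ (μ 1)).natDegree
        ≤ (Polynomial.C (coeff μ G) * (-Polynomial.X) ^ (μ 0)).natDegree
            + ((1 + Polynomial.X : Polynomial ℝ) ^ (μ 1)).natDegree :=
          Polynomial.natDegree_mul_le
      _ ≤ ((Polynomial.C (coeff μ G)).natDegree
            + ((-Polynomial.X : Polynomial ℝ) ^ (μ 0)).natDegree)
            + ((1 + Polynomial.X : Polynomial ℝ) ^ (μ 1)).natDegree := by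
          exact Nat.add_le_add_right Polynomial.natDegree_mul_le _
      _ ≤ r - c := by
          rw [Polynomial.natDegree_C, Polynomial.natDegree_pow, Polynomial.natDegree_pow,
            Polynomial.natDegree_neg, Polynomial.natDegree_X, natDegree_one_add_X']
          omega
  · simp

lemma chi_dvd {r : ℕ} (c : ℕ) {G : R3} (hG : G.IsHomogeneous r)
    (hsupp : ∀ μ ∈ G.support, μ 2 = c → μ 0 < c) :
    (1 + Polynomial.X) ^ (r - c + 1 - c) ∣ (pmap G).coeff c := by
  rw [pmap_coeff]
  apply Finset.dvd_sum
  intro μ hμ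
  split_ifs with h
  · have hdeg := homog_deg3 hG (mem_support_iff.mp hμ)
    have hlt := hsupp μ hμ h
    exact Dvd.dvd.mul_left (pow_dvd_pow _ (by omega)) _
  · exact dvd_zero _

lemma chi_recover {r : ℕ} (c : ℕ) {G : R3} (hG : G.IsHomogeneous r)
    (hchi : (pmap G).coeff c = 0) :
    ∀ μ : Fin 3 →₀ ℕ, μ 2 = c → coeff μ G = 0 := by
  suffices H : ∀ a : ℕ, ∀ μ : Fin 3 →₀ ℕ, μ 2 = c → μ 0 = a → coeff μ G = 0 by
    intro μ h
    exact H (μ 0) μ h rfl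
  intro a
  induction a using Nat.strong_induction_on with
  | _ a ih =>
    intro μ hμ2 hμ0
    by_contra hne
    have hdeg := homog_deg3 hG hne
    have h0 : ((pmap G).coeff c).coeff a = 0 := by rw [hchi, Polynomial.coeff_zero]
    rw [pmap_coeff, Polynomial.finset_sum_coeff] at h0
    have hform : ∀ b : Fin 3 →₀ ℕ,
        (Polynomial.C (coeff b G) * (-Polynomial.X) ^ (b 0)
          * (1 + Polynomial.X) ^ (b 1)).coeff a
        = coeff b G * (-1 : ℝ) ^ (b 0) *
            (if b 0 ≤ a then ((1 + Polynomial.X : Polynomial ℝ) ^ (b 1)).coeff (a - b 0)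
             else 0) := by
      intro b
      have hre : Polynomial.C (coeff b G) * (-Polynomial.X) ^ (b 0)
            * (1 + Polynomial.X) ^ (b 1)
          = Polynomial.C (coeff b G * (-1) ^ (b 0)) *
              (Polynomial.X ^ (b 0) * (1 + Polynomial.X) ^ (b 1)) := by
        rw [neg_pow, Polynomial.C_mul, Polynomial.C_pow, Polynomial.C_neg, Polynomial.C_1]
        ring
      rw [hre, Polynomial.coeff_C_mul, Polynomial.coeff_X_pow_mul']
    rw [Finset.sum_eq_single_of_mem μ (mem_support_iff.mpr hne)
      (by
        intro b hb hbne
        by_cases hb2 : b 2 = c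
        · rw [if_pos hb2, hform]
          have hbdeg := homog_deg3 hG (mem_support_iff.mp hb)
          rcases lt_trichotomy (b 0) a with hlt | heq | hgt
          · exact absurd (mem_support_iff.mp hb) (not_not.mpr (ih (b 0) hlt b hb2 rfl))
          · exfalso
            apply hbne
            ext i
            fin_cases i
            · exact heq.trans hμ0.symm
            · show b 1 = μ 1
              omega
            · exact hb2.trans hμ2.symm
          · rw [if_neg (by omega), mul_zero]
        · rw [if_neg hb2, Polynomial.coeff_zero])] at h0
    rw [if_pos hμ2, hform, if_pos (le_of_eq hμ0)] at h0
    rw [hμ0, Nat.sub_self, Polynomial.coeff_zero_eq_eval_zero] at h0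
    simp only [Polynomial.eval_pow, Polynomial.eval_add, Polynomial.eval_one,
      Polynomial.eval_X, add_zero, one_pow, mul_one] at h0
    rcases mul_eq_zero.mp h0 with h | h
    · exact hne h
    · exact absurd h (pow_ne_zero _ (by norm_num))

abbrev sw : Fin 3 ≃ Fin 3 := Equiv.swap (0 : Fin 3) 2

lemma md0 (μ : Fin 3 →₀ ℕ) : (Finsupp.mapDomain (sw : Fin 3 → Fin 3) μ) 0 = μ 2 := by
  have := Finsupp.mapDomain_apply (Equiv.injective sw) μ 2
  rwa [show sw 2 = 0 from Equiv.swap_apply_right 0 2] at this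

lemma md1 (μ : Fin 3 →₀ ℕ) : (Finsupp.mapDomain (sw : Fin 3 → Fin 3) μ) 1 = μ 1 := by
  have := Finsupp.mapDomain_apply (Equiv.injective sw) μ 1
  rwa [show sw 1 = 1 from Equiv.swap_apply_of_ne_of_ne (by decide) (by decide)] at this

lemma md2 (μ : Fin 3 →₀ ℕ) : (Finsupp.mapDomain (sw : Fin 3 → Fin 3) μ) 2 = μ 0 := by
  have := Finsupp.mapDomain_apply (Equiv.injective sw) μ 0
  rwa [show sw 0 = 2 from Equiv.swap_apply_left 0 2] at this

lemma anti_coeff {G : R3} (h : rename (sw : Fin 3 → Fin 3) G = -G) (μ : Fin 3 →₀ ℕ) :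
    coeff μ G = - coeff (Finsupp.mapDomain (sw : Fin 3 → Fin 3) μ) G := by
  have hh := coeff_rename_mapDomain (sw : Fin 3 → Fin 3) (Equiv.injective sw) G μ
  rw [h, coeff_neg] at hh
  exact hh.symm

lemma md_fix {μ : Fin 3 →₀ ℕ} (h : μ 0 = μ 2) :
    Finsupp.mapDomain (sw : Fin 3 → Fin 3) μ = μ := by
  ext i
  fin_cases i
  · simpa using (md0 μ).trans h.symm
  · simpa using md1 μ
  · simpa using (md2 μ).trans h

lemma amap_X0 : amap (X 0) = (X 0 : R3) := by simp [amap]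
lemma amap_X2 : amap (X 2) = (X 2 : R3) := by simp [amap]
lemma amap_X01 : amap (X 0 + X 1) = (X 1 : R3) := by simp [amap]
lemma amap_X1 : amap (X 1) = (X 1 : R3) - X 0 := by simp [amap]

lemma Omega_mem (r : ℕ) (G : R3) (hmem : (X 1 : R3) ^ (r + 1) * G ∈ J1 r) :
    amap ((X 1 : R3) ^ (r + 1) * G) ∈
      Ideal.span {(X 0 : R3) ^ (r + 1), (X 1 : R3) ^ (r + 1)} := by
  obtain ⟨a, b, hab⟩ := Ideal.mem_span_pair.mp hmem
  apply Ideal.mem_span_pair.mpr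
  refine ⟨amap a, amap b, ?_⟩
  have := congrArg amap hab
  rw [map_add, map_mul, map_mul, map_pow, map_pow, amap_X0, map_add, amap_X0, amap_X1] at this
  convert this using 3
  ring

lemma Omega_hom (r : ℕ) (G : R3) (hG : G.IsHomogeneous r) :
    (amap ((X 1 : R3) ^ (r + 1) * G)).IsHomogeneous (2 * r + 1) := by
  have h1 : ((X 1 : R3) ^ (r + 1) * G).IsHomogeneous ((r + 1) + r) :=
    (isHomogeneous_X_pow 1 (r + 1)).mul hG
  have h2 := h1.aeval (![X 0, X 1 - X 0, X 2] : Fin 3 → R3) (n := 1) (fun i => by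
    fin_cases i
    · simpa using isHomogeneous_X ℝ (0 : Fin 3)
    · simpa using (isHomogeneous_X ℝ (1 : Fin 3)).sub (isHomogeneous_X ℝ (0 : Fin 3))
    · simpa using isHomogeneous_X ℝ (2 : Fin 3))
  rw [one_mul] at h2
  have h3 : r + 1 + r = 2 * r + 1 := by omega
  rw [h3] at h2
  exact h2

lemma emap_amap (P : R3) : emap (amap P) = pmap P := by
  have h : emap.comp amap = pmap := by
    apply MvPolynomial.algHom_ext
    intro i
    fin_cases i <;>
      simp [emap, amap, pmap, map_sub]
  calc emap (amap P) = (emap.comp amap) P := rfl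
  _ = pmap P := by rw [h]

lemma bridge (r c : ℕ) (G : R3) :
    ((emap (amap ((X 1 : R3) ^ (r + 1) * G))).coeff c)
      = (1 + Polynomial.X) ^ (r + 1) * (pmap G).coeff c := by
  rw [emap_amap, map_mul, map_pow]
  have h1 : pmap (X 1) = Polynomial.C (1 + Polynomial.X) := by simp [pmap]
  rw [h1, ← Polynomial.C_pow, Polynomial.coeff_C_mul]

lemma sw0 : (sw : Fin 3 → Fin 3) 0 = 2 := Equiv.swap_apply_left 0 2
lemma sw1 : (sw : Fin 3 → Fin 3) 1 = 1 :=
  Equiv.swap_apply_of_ne_of_ne (by decide) (by decide)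
lemma sw2 : (sw : Fin 3 → Fin 3) 2 = 0 := Equiv.swap_apply_right 0 2

lemma rename_invol (P : R3) :
    rename (sw : Fin 3 → Fin 3) (rename (sw : Fin 3 → Fin 3) P) = P := by
  rw [rename_rename]
  have h : ((sw : Fin 3 → Fin 3) ∘ (sw : Fin 3 → Fin 3)) = id := by
    funext i
    simp [Function.comp, Equiv.swap_apply_self]
  rw [h, rename_id, AlgHom.id_apply]

lemma rename_J1 (r : ℕ) (P : R3) (h : P ∈ J1 r) :
    rename (sw : Fin 3 → Fin 3) P ∈ J2 r := by
  obtain ⟨a, b, hab⟩ := Ideal.mem_span_pair.mp h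
  apply Ideal.mem_span_pair.mpr
  refine ⟨rename (sw : Fin 3 → Fin 3) a, rename (sw : Fin 3 → Fin 3) b, ?_⟩
  have := congrArg (rename (sw : Fin 3 → Fin 3)) hab
  rwa [map_add, map_mul, map_mul, map_pow, map_pow, map_add, rename_X, rename_X,
    sw0, sw1] at this

lemma rename_J2 (r : ℕ) (P : R3) (h : P ∈ J2 r) :
    rename (sw : Fin 3 → Fin 3) P ∈ J1 r := by
  obtain ⟨a, b, hab⟩ := Ideal.mem_span_pair.mp h
  apply Ideal.mem_span_pair.mpr
  refine ⟨rename (sw : Fin 3 → Fin 3) a, rename (sw : Fin 3 → Fin 3) b, ?_⟩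
  have := congrArg (rename (sw : Fin 3 → Fin 3)) hab
  rwa [map_add, map_mul, map_mul, map_pow, map_pow, map_add, rename_X, rename_X,
    sw2, sw1] at this

lemma rename_yF (r : ℕ) (F : R3) :
    rename (sw : Fin 3 → Fin 3) ((X 1 : R3) ^ (r + 1) * F)
      = (X 1 : R3) ^ (r + 1) * rename (sw : Fin 3 → Fin 3) F := by
  rw [map_mul, map_pow, rename_X, sw1]

lemma antisym_zero (r : ℕ) (G : R3) (hG : G.IsHomogeneous r)
    (hanti : rename (sw : Fin 3 → Fin 3) G = -G)
    (hmem : (X 1 : R3) ^ (r + 1) * G ∈ J1 r) : G = 0 := by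
  have key : ∀ j : ℕ, j ≤ r → ∀ μ : Fin 3 →₀ ℕ, r + 1 - j ≤ μ 2 → coeff μ G = 0 := by
    intro j
    induction j with
    | zero =>
      intro _ μ hμ
      by_contra hne
      have := homog_deg3 hG hne
      omega
    | succ j ih =>
      intro hj μ hμ2
      by_cases hup : r + 1 - j ≤ μ 2
      · exact ih (by omega) μ hup
      · have hμc : μ 2 = r - j := by omega
        have hc1 : 1 ≤ r - j := by omega
        have hcr : r - j ≤ r := by omega
        have hsupp : ∀ ν ∈ G.support, ν 2 = r - j → ν 0 < r - j := by
          intro ν hν hν2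
          by_contra hge
          push_neg at hge
          have hcoeffν := mem_support_iff.mp hν
          have hswap := anti_coeff hanti ν
          rcases eq_or_lt_of_le hge with heq | hlt
          · rw [md_fix (by omega)] at hswap
            apply hcoeffν
            linarith
          · have h9 : coeff (Finsupp.mapDomain (sw : Fin 3 → Fin 3) ν) G = 0 := by
              apply ih (by omega)
              rw [md2]
              omega
            rw [h9, neg_zero] at hswap
            exact hcoeffν hswap
        have hchi : (pmap G).coeff (r - j) = 0 := by
          apply core_univ r (r - j) (r - (r - j)) (by omega) hc1
          · exact chi_deg (r - j) hG
          · exact chi_dvd (r - j) hG hsupp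
          · intro A hA1 hA2
            rw [← bridge r (r - j) G]
            exact window r _ (Omega_hom r G hG) (Omega_mem r G hmem) (r - j) A hA2 (by omega)
        exact chi_recover (r - j) hG hchi μ hμc
  apply MvPolynomial.ext
  intro μ
  rw [coeff_zero]
  by_cases h2 : 1 ≤ μ 2
  · exact key r le_rfl μ (by omega)
  · have hswap := anti_coeff hanti μ
    by_cases h0 : 1 ≤ μ 0
    · have hz := key r le_rfl (Finsupp.mapDomain (sw : Fin 3 → Fin 3) μ) (by rw [md2]; omega)
      rw [hz, neg_zero] at hswap
      exact hswap
    · rw [md_fix (by omega)] at hswap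
      linarith


lemma mem_K (r : ℕ) (F : R3) :
    F ∈ K r ↔ F.IsHomogeneous r ∧
      ((X 1 : R3) ^ (r + 1) * F ∈ J1 r ∧ (X 1 : R3) ^ (r + 1) * F ∈ J2 r) := by
  rw [K, Submodule.mem_inf, mem_homogeneousSubmodule, Submodule.mem_comap,
    Submodule.restrictScalars_mem, Submodule.mem_inf, LinearMap.mulLeft_apply]

/-- Proposition 2.4: a homogeneous polynomial `F` of degree `r` lies in `K(r)`
if and only if `y^{r+1}·F ∈ J₁(r)` and `F` is symmetric under swapping `x` and `z`. -/
theorem prop_2_4 (r : ℕ) (hr : 1 ≤ r) (F : R3) :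
    F ∈ K r ↔
      (F.IsHomogeneous r ∧ (X 1 : R3) ^ (r + 1) * F ∈ J1 r ∧
        rename (Equiv.swap (0 : Fin 3) 2) F = F) := by
  constructor
  · intro hF
    obtain ⟨hhom, hJ1, hJ2⟩ := (mem_K r F).mp hF
    refine ⟨hhom, hJ1, ?_⟩
    have hGhom : (F - rename (sw : Fin 3 → Fin 3) F).IsHomogeneous r :=
      hhom.sub hhom.rename_isHomogeneous
    have hanti : rename (sw : Fin 3 → Fin 3) (F - rename (sw : Fin 3 → Fin 3) F)
        = -(F - rename (sw : Fin 3 → Fin 3) F) := by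
      rw [map_sub, rename_invol, neg_sub]
    have hmem' : (X 1 : R3) ^ (r + 1) * (F - rename (sw : Fin 3 → Fin 3) F) ∈ J1 r := by
      rw [mul_sub]
      apply sub_mem hJ1
      rw [← rename_yF]
      exact rename_J2 r _ hJ2
    have hz := antisym_zero r _ hGhom hanti hmem'
    have h10 := sub_eq_zero.mp hz
    exact h10.symm
  · rintro ⟨hhom, hJ1, hsym⟩
    apply (mem_K r F).mpr
    refine ⟨hhom, hJ1, ?_⟩
    have h11 := rename_J1 r _ hJ1
    rwa [rename_yF, hsym] at h11

end
end

section
/- (Antisymmetry vanishing, from the proof of Proposition 2.4) Let r ≥ 1, let σ : R → R be the ℝ-algebra automorphism interchanging x and z and fixing y, and let F ∈ K(r) satisfy σ(F) = −F. Then F = 0. -/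
open MvPolynomial

noncomputable section

lemma deg3_eq (d : Fin 3 →₀ ℕ) : d.degree = d 0 + d 1 + d 2 := by
  rw [Finsupp.degree_apply]
  rw [Finset.sum_subset (Finset.subset_univ d.support)
    (by intro i _ hi; simpa using Finsupp.notMem_support_iff.mp hi)]
  simp [Fin.sum_univ_three]

lemma isHom_iff3 (φ : R3) (n : ℕ) :
    φ.IsHomogeneous n ↔ ∀ d : Fin 3 →₀ ℕ, coeff d φ ≠ 0 → d 0 + d 1 + d 2 = n := by
  constructor
  · intro h d hd
    have := h hd
    rw [(show (Finsupp.weight 1 : (Fin 3 →₀ ℕ) →+ ℕ) = Finsupp.degree from Finsupp.degree_eq_weight_one.symm)] at this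
    rw [← deg3_eq d]; exact this
  · intro h d hd
    rw [(show (Finsupp.weight 1 : (Fin 3 →₀ ℕ) →+ ℕ) = Finsupp.degree from Finsupp.degree_eq_weight_one.symm), deg3_eq]
    exact h d hd

lemma coeff_pderiv (i : Fin 3) (f : R3) (m : Fin 3 →₀ ℕ) :
    coeff m (pderiv i f) = ((m i : ℝ) + 1) * coeff (m + Finsupp.single i 1) f := by
  induction f using MvPolynomial.induction_on' with
  | monomial u a =>
    rw [pderiv_monomial, coeff_monomial, coeff_monomial]
    by_cases h : u = m + Finsupp.single i 1
    · subst h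
      rw [if_pos, if_pos rfl]
      · push_cast; simp [Finsupp.add_apply, Finsupp.single_apply]; ring
      · ext j
        simp only [Finsupp.coe_tsub, Pi.sub_apply, Finsupp.add_apply, Finsupp.single_apply]
        by_cases hj : i = j <;> simp [hj]
    · rw [if_neg h]
      by_cases h2 : u - Finsupp.single i 1 = m
      · rw [if_pos h2]
        -- then u i = 0, since otherwise u = m + single i 1
        have hui : u i = 0 := by
          by_contra hne
          apply h
          ext j
          have := congrFun (congrArg (fun g : Fin 3 →₀ ℕ => (g : Fin 3 → ℕ)) h2) j
          simp only [Finsupp.coe_tsub, Pi.sub_apply] at this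
          simp only [Finsupp.add_apply, Finsupp.single_apply]
          by_cases hj : i = j
          · subst hj
            simp at this ⊢
            omega
          · simp only [hj, if_false, Finsupp.single_apply] at this ⊢; omega
        simp [hui]
      · rw [if_neg h2, mul_zero]
  | add p q hp hq => simp [hp, hq, mul_add]

lemma isHom_pderiv {f : R3} {n : ℕ} (h : f.IsHomogeneous (n + 1)) (i : Fin 3) :
    (pderiv i f).IsHomogeneous n := by
  rw [isHom_iff3] at h ⊢
  intro d hd
  rw [coeff_pderiv] at hd
  have h2 : coeff (d + Finsupp.single i 1) f ≠ 0 := by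
    intro h0; rw [h0, mul_zero] at hd; exact hd rfl
  have := h _ h2
  simp only [Finsupp.add_apply, Finsupp.single_apply] at this
  fin_cases i <;> simp at this <;> omega

lemma pderiv_comm (i j : Fin 3) (f : R3) :
    pderiv i (pderiv j f) = pderiv j (pderiv i f) := by
  apply MvPolynomial.ext
  intro m
  simp only [coeff_pderiv, Finsupp.add_apply, Finsupp.single_apply]
  rw [add_right_comm m (Finsupp.single i 1) (Finsupp.single j 1)]
  by_cases h : i = j
  · subst h; ring
  · have h' : j ≠ i := fun hh => h hh.symm
    simp only [h, h', if_false]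
    ring

lemma mem_K_iff (r : ℕ) (F : R3) :
    F ∈ K r ↔ F.IsHomogeneous r ∧ (X 1 : R3) ^ (r+1) * F ∈ J1 r ∧ (X 1 : R3) ^ (r+1) * F ∈ J2 r := by
  rw [K, Submodule.mem_inf, mem_homogeneousSubmodule, Submodule.mem_comap,
    LinearMap.mulLeft_apply, Submodule.restrictScalars_mem, Submodule.mem_inf]

lemma step (s : ℕ) (F : R3) (hF : F ∈ K (s + 2)) :
    (X 1 : R3) * pderiv 0 (pderiv 2 F) ∈ K (s + 1) := by
  rw [mem_K_iff] at hF ⊢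
  obtain ⟨hhom, hJ1, hJ2⟩ := hF
  refine ⟨?_, ?_, ?_⟩
  · have h1 : (pderiv 0 (pderiv 2 F)).IsHomogeneous s :=
      isHom_pderiv (isHom_pderiv (by simpa using hhom) 2) 0
    have := (isHomogeneous_X ℝ (1 : Fin 3)).mul h1
    simpa [add_comm] using this
  · rw [J1, Ideal.mem_span_pair] at hJ1 ⊢
    obtain ⟨A, B, hAB⟩ := hJ1
    have h2 := congrArg (pderiv 2) hAB
    simp only [pderiv_mul, pderiv_pow, pderiv_X_self, pderiv_X_of_ne (by decide : (0:Fin 3) ≠ 2),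
      pderiv_X_of_ne (by decide : (1:Fin 3) ≠ 2), map_add, mul_zero, add_zero, zero_add,
      mul_one, zero_mul] at h2
    have h0 := congrArg (pderiv 0) h2
    simp only [pderiv_mul, pderiv_pow, pderiv_X_self, pderiv_X_of_ne (by decide : (1:Fin 3) ≠ 0),
      pderiv_X_of_ne (by decide : (2:Fin 3) ≠ 0), map_add, mul_zero, add_zero, zero_add,
      mul_one, zero_mul] at h0
    refine ⟨pderiv 0 (pderiv 2 A) * X 0 + (((s:R3) + 3)) * pderiv 2 A,
            pderiv 0 (pderiv 2 B) * (X 0 + X 1) + (((s:R3) + 3)) * pderiv 2 B, ?_⟩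
    have hexp : ((s + 2 + 1 : ℕ) : R3) = (s : R3) + 3 := by push_cast; ring
    rw [hexp] at h0
    have hsub : (s + 2 + 1) - 1 = s + 2 := by omega
    rw [hsub] at h0
    linear_combination h0
  · rw [J2, Ideal.mem_span_pair] at hJ2 ⊢
    obtain ⟨A, B, hAB⟩ := hJ2
    have h2 := congrArg (pderiv 0) hAB
    simp only [pderiv_mul, pderiv_pow, pderiv_X_self, pderiv_X_of_ne (by decide : (2:Fin 3) ≠ 0),
      pderiv_X_of_ne (by decide : (1:Fin 3) ≠ 0), map_add, mul_zero, add_zero, zero_add,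
      mul_one, zero_mul] at h2
    have h0 := congrArg (pderiv 2) h2
    simp only [pderiv_mul, pderiv_pow, pderiv_X_self, pderiv_X_of_ne (by decide : (0:Fin 3) ≠ 2),
      pderiv_X_of_ne (by decide : (1:Fin 3) ≠ 2), map_add, mul_zero, add_zero, zero_add,
      mul_one, zero_mul] at h0
    refine ⟨pderiv 2 (pderiv 0 A) * X 2 + (((s:R3) + 3)) * pderiv 0 A,
            pderiv 2 (pderiv 0 B) * (X 2 + X 1) + (((s:R3) + 3)) * pderiv 0 B, ?_⟩
    have hexp : ((s + 2 + 1 : ℕ) : R3) = (s : R3) + 3 := by push_cast; ring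
    rw [hexp] at h0
    have hsub : (s + 2 + 1) - 1 = s + 2 := by omega
    rw [hsub, pderiv_comm 2 0 F] at h0
    linear_combination h0

def phi : R3 →ₐ[ℝ] Polynomial R3 :=
  aeval (fun i => if i = 2 then Polynomial.X else Polynomial.C (X i))

lemma phi_coeff (P : R3) (a : ℕ) (n : Fin 3 →₀ ℕ) :
    coeff n ((phi P).coeff a) =
      if n 2 = 0 then coeff (n + Finsupp.single 2 a) P else 0 := by
  induction P using MvPolynomial.induction_on' with
  | add p q hp hq =>
    simp only [map_add, Polynomial.coeff_add, MvPolynomial.coeff_add, hp, hq]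
    split_ifs <;> simp
  | monomial d c =>
    rw [phi, aeval_monomial, Finsupp.prod_fintype _ _ (fun i => pow_zero _),
      Fin.prod_univ_three]
    simp only [if_neg (by decide : ¬ (0:Fin 3) = 2), if_neg (by decide : ¬ (1:Fin 3) = 2),
      if_pos rfl, if_true]
    have halg : (algebraMap ℝ (Polynomial R3)) c = Polynomial.C (MvPolynomial.C c) := by
      rw [Polynomial.algebraMap_apply, MvPolynomial.algebraMap_eq]
    have heq : (algebraMap ℝ (Polynomial R3)) c *
        ((Polynomial.C (X 0 : R3)) ^ d 0 * (Polynomial.C (X 1 : R3)) ^ d 1 *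
          Polynomial.X ^ d 2)
        = Polynomial.X ^ d 2 * Polynomial.C ((MvPolynomial.C c) * X 0 ^ d 0 * X 1 ^ d 1) := by
      rw [halg, Polynomial.C_mul, Polynomial.C_mul, Polynomial.C_pow, Polynomial.C_pow]
      ring
    rw [heq, Polynomial.coeff_mul_C, Polynomial.coeff_X_pow]
    rw [ite_mul, one_mul, zero_mul, apply_ite (coeff n), coeff_zero]
    have hq : ((MvPolynomial.C c) * X 0 ^ d 0 * X 1 ^ d 1 : R3)
        = monomial (Finsupp.single 0 (d 0) + Finsupp.single 1 (d 1)) c := by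
      rw [X_pow_eq_monomial, X_pow_eq_monomial, mul_assoc, monomial_mul, C_mul_monomial]
      simp
    rw [hq, coeff_monomial, coeff_monomial]
    by_cases h2 : a = d 2
    · by_cases hm : (Finsupp.single 0 (d 0) + Finsupp.single 1 (d 1) : Fin 3 →₀ ℕ) = n
      · have hn2 : n 2 = 0 := by
          rw [← hm]; simp [Finsupp.single_apply]
        have hd : d = n + Finsupp.single 2 a := by
          ext j
          rw [← hm]
          simp only [Finsupp.add_apply, Finsupp.single_apply]
          fin_cases j <;> simp <;> omega
        rw [if_pos h2, if_pos hm, if_pos hn2, if_pos hd]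
      · have hnot : ¬ (n 2 = 0 ∧ d = n + Finsupp.single 2 a) := by
          rintro ⟨hn2, hd⟩
          apply hm
          ext j
          rw [hd]
          simp only [Finsupp.add_apply, Finsupp.single_apply]
          fin_cases j <;> simp <;> omega
        rw [if_pos h2, if_neg hm]
        by_cases u : n 2 = 0
        · rw [if_pos u, if_neg (fun hd => hnot ⟨u, hd⟩)]
        · rw [if_neg u]
    · have hnot : ¬ (n 2 = 0 ∧ d = n + Finsupp.single 2 a) := by
        rintro ⟨hn2, hd⟩
        apply h2
        rw [hd]
        simp [Finsupp.add_apply, Finsupp.single_apply, hn2]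
      rw [if_neg h2]
      by_cases u : n 2 = 0
      · rw [if_pos u, if_neg (fun hd => hnot ⟨u, hd⟩)]
      · rw [if_neg u]

lemma key_s7 (r N : ℕ) (hN1 : r < N) (hN2 : N ≤ 2 * r) (c : ℝ) (A B : R3)
    (h : A * (X 0 : R3) ^ (r+1) + B * ((X 0 : R3) + X 1) ^ (r+1)
      = monomial (Finsupp.single 1 N) c) :
    c = 0 := by
  set τ : R3 →ₐ[ℝ] R3 := aeval (fun i => if i = 1 then (X 1 - X 0 : R3) else X i) with hτ
  have hX0 : τ (X 0) = X 0 := by simp [hτ]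
  have hX01 : τ (X 0 + X 1) = X 1 := by simp [hτ]
  have hmon : τ (monomial (Finsupp.single 1 N) c) = (C c : R3) * (X 1 - X 0) ^ N := by
    rw [aeval_monomial, Finsupp.prod_single_index (by rw [pow_zero])]
    simp [MvPolynomial.algebraMap_eq]
  have h2 := congrArg τ h
  simp only [map_add, map_mul, map_pow, hX0, hX01, hmon] at h2
  have h3 := congrArg (coeff (Finsupp.single 0 (N - r) + Finsupp.single 1 r)) h2
  have hc1 : ¬ (Finsupp.single (0 : Fin 3) (r+1) ≤ Finsupp.single 0 (N - r) + Finsupp.single 1 r) := by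
    intro hle
    have := hle 0
    simp [Finsupp.single_apply] at this
    omega
  have hc2 : ¬ (Finsupp.single (1 : Fin 3) (r+1) ≤ Finsupp.single 0 (N - r) + Finsupp.single 1 r) := by
    intro hle
    have := hle 1
    simp [Finsupp.single_apply] at this
  rw [coeff_add, X_pow_eq_monomial, X_pow_eq_monomial, coeff_mul_monomial',
    coeff_mul_monomial', if_neg hc1, if_neg hc2, zero_add] at h3
  rw [coeff_C_mul, sub_pow, coeff_sum] at h3
  have hterm : ∀ m : ℕ,
      coeff (Finsupp.single 0 (N - r) + Finsupp.single 1 r)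
          ((-1 : R3) ^ (m + N) * (X 1 : R3) ^ m * (X 0 : R3) ^ (N - m) * (N.choose m : R3))
        = if m = r then ((-1 : ℝ)) ^ (m + N) * (N.choose m : ℝ) else 0 := by
    intro m
    have hC1 : ((-1 : R3)) ^ (m + N) = C ((-1 : ℝ) ^ (m + N)) := by
      rw [map_pow, map_neg, map_one]
    have hC2 : ((N.choose m : ℕ) : R3) = C ((N.choose m : ℕ) : ℝ) := by
      rw [MvPolynomial.C_eq_coe_nat]
    rw [hC1, hC2, X_pow_eq_monomial, X_pow_eq_monomial]
    have hre : (C ((-1:ℝ) ^ (m + N)) : R3) * monomial (Finsupp.single 1 m) 1 *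
        monomial (Finsupp.single 0 (N - m)) 1 * C ((N.choose m : ℕ) : ℝ)
        = monomial (Finsupp.single 0 (N - m) + Finsupp.single 1 m)
            ((-1:ℝ) ^ (m + N) * (N.choose m : ℕ)) := by
      rw [C_mul_monomial, mul_one, monomial_mul, mul_one,
        mul_comm _ (C ((N.choose m : ℕ) : ℝ)), C_mul_monomial,
        add_comm (Finsupp.single 1 m), mul_comm ((N.choose m : ℕ) : ℝ)]
    rw [hre, coeff_monomial]
    by_cases hm : m = r
    · subst hm
      rw [if_pos, if_pos rfl]
      ext j
      fin_cases j <;> simp [Finsupp.single_apply]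
    · rw [if_neg hm, if_neg]
      intro heq
      apply hm
      have := congrFun (congrArg (fun g : Fin 3 →₀ ℕ => (g : Fin 3 → ℕ)) heq) 1
      simpa [Finsupp.single_apply] using this
  rw [Finset.sum_congr rfl (fun m _ => hterm m)] at h3
  rw [Finset.sum_ite_eq' (Finset.range (N+1)) r
    (fun m => ((-1 : ℝ)) ^ (m + N) * (N.choose m : ℝ))] at h3
  rw [if_pos (Finset.mem_range.mpr (by omega))] at h3
  have hne : ((-1 : ℝ)) ^ (r + N) * (N.choose r : ℝ) ≠ 0 := by
    apply mul_ne_zero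
    · exact pow_ne_zero _ (by norm_num)
    · exact_mod_cast Nat.choose_pos (by omega : r ≤ N) |>.ne'
  have hc0 : c * (((-1 : ℝ)) ^ (r + N) * (N.choose r : ℝ)) = 0 := h3.symm
  rcases mul_eq_zero.mp hc0 with h|h
  · exact h
  · exact absurd h hne

lemma slice_F (r : ℕ) (F : R3) (hhom : F.IsHomogeneous r)
    (hcoe : ∀ m : Fin 3 →₀ ℕ, 1 ≤ m 0 → 1 ≤ m 2 → coeff m F = 0)
    (a : ℕ) (ha1 : 1 ≤ a) (har : a ≤ r) :
    (phi F).coeff a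
      = monomial (Finsupp.single 1 (r - a))
          (coeff (Finsupp.single 1 (r - a) + Finsupp.single 2 a) F) := by
  apply MvPolynomial.ext
  intro n
  rw [phi_coeff, coeff_monomial]
  by_cases hn2 : n 2 = 0
  · rw [if_pos hn2]
    by_cases hn0 : n 0 = 0
    · by_cases hn1 : n 1 = r - a
      · have hneq : n + Finsupp.single 2 a
            = Finsupp.single 1 (r - a) + Finsupp.single 2 a := by
          ext j
          simp only [Finsupp.add_apply, Finsupp.single_apply]
          fin_cases j <;> simp <;> omega
        have hceq : (Finsupp.single (1 : Fin 3) (r - a) : Fin 3 →₀ ℕ) = n := by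
          ext j
          simp only [Finsupp.single_apply]
          fin_cases j <;> simp <;> omega
        rw [hneq, if_pos hceq]
      · have hcne : ¬ ((Finsupp.single (1 : Fin 3) (r - a) : Fin 3 →₀ ℕ) = n) := by
          intro heq
          apply hn1
          have := congrFun (congrArg (fun g : Fin 3 →₀ ℕ => (g : Fin 3 → ℕ)) heq) 1
          simp [Finsupp.single_apply] at this
          omega
        rw [if_neg hcne]
        by_contra hne
        have hs := (isHom_iff3 F r).mp hhom _ hne
        simp only [Finsupp.add_apply, Finsupp.single_apply] at hs
        simp at hs
        omega
    · have hcne : ¬ ((Finsupp.single (1 : Fin 3) (r - a) : Fin 3 →₀ ℕ) = n) := by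
        intro heq
        apply hn0
        have := congrFun (congrArg (fun g : Fin 3 →₀ ℕ => (g : Fin 3 → ℕ)) heq) 0
        simp [Finsupp.single_apply] at this
        omega
      rw [if_neg hcne]
      apply hcoe
      · simp only [Finsupp.add_apply, Finsupp.single_apply]
        simp
        omega
      · simp only [Finsupp.add_apply, Finsupp.single_apply]
        simp
        omega
  · rw [if_neg hn2, if_neg]
    intro heq
    apply hn2
    have := congrFun (congrArg (fun g : Fin 3 →₀ ℕ => (g : Fin 3 → ℕ)) heq) 2
    simp [Finsupp.single_apply] at this
    omega

lemma final (r : ℕ) (F : R3) (hhom : F.IsHomogeneous r)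
    (hanti : rename (Equiv.swap (0 : Fin 3) 2) F = -F)
    (hdd : pderiv 0 (pderiv 2 F) = 0)
    (hJ : (X 1 : R3) ^ (r + 1) * F ∈ J1 r) : F = 0 := by
  have hcoe : ∀ m : Fin 3 →₀ ℕ, 1 ≤ m 0 → 1 ≤ m 2 → coeff m F = 0 := by
    intro m h0 h2
    have h := congrArg (coeff ((m - Finsupp.single 0 1) - Finsupp.single 2 1)) hdd
    rw [coeff_pderiv, coeff_pderiv, coeff_zero] at h
    have hmeq : (((m - Finsupp.single 0 1) - Finsupp.single 2 1) + Finsupp.single 0 1)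
        + Finsupp.single 2 1 = m := by
      ext j
      simp only [Finsupp.add_apply, Finsupp.coe_tsub, Pi.sub_apply, Finsupp.single_apply]
      fin_cases j <;> simp <;> omega
    rw [hmeq] at h
    rcases mul_eq_zero.mp h with h' | h'
    · exact absurd h' (by positivity)
    rcases mul_eq_zero.mp h' with h'' | h''
    · exact absurd h'' (by positivity)
    · exact h''
  have hasym : ∀ m : Fin 3 →₀ ℕ,
      coeff m F = - coeff (Finsupp.mapDomain (⇑(Equiv.swap (0 : Fin 3) 2)) m) F := by
    intro m
    have h := coeff_rename_mapDomain (⇑(Equiv.swap (0 : Fin 3) 2))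
      (Equiv.injective _) F m
    rw [hanti, coeff_neg] at h
    linarith
  have hmap : ∀ (m : Fin 3 →₀ ℕ) (i : Fin 3),
      (Finsupp.mapDomain (⇑(Equiv.swap (0 : Fin 3) 2)) m) i
        = m ((Equiv.swap (0 : Fin 3) 2) i) := by
    intro m i
    conv_lhs => rw [show i = (Equiv.swap (0 : Fin 3) 2) ((Equiv.swap (0 : Fin 3) 2) i) from
      (Equiv.swap_apply_self _ _ _).symm]
    rw [Finsupp.mapDomain_apply (Equiv.injective _)]
  have hclaim0 : ∀ m : Fin 3 →₀ ℕ, m 0 + m 1 + m 2 = r → m 0 = 0 → coeff m F = 0 := by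
    intro m hsum h0
    by_cases ha : m 2 = 0
    · -- m = single 1 r, fixed by swap
      have hm : m = Finsupp.single 1 r := by
        ext j
        simp only [Finsupp.single_apply]
        fin_cases j <;> simp <;> omega
      have h := hasym m
      rw [hm, Finsupp.mapDomain_single] at h
      have hsw1 : (Equiv.swap (0 : Fin 3) 2) 1 = 1 :=
        Equiv.swap_apply_of_ne_of_ne (by decide) (by decide)
      rw [hsw1, ← hm] at h
      linarith
    · -- slice argument
      have ha1 : 1 ≤ m 2 := by omega
      have har : m 2 ≤ r := by omega
      rw [J1, Ideal.mem_span_pair] at hJ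
      obtain ⟨A, B, hAB⟩ := hJ
      have happ := congrArg (fun Q : R3 => (phi Q).coeff (m 2)) hAB
      simp only [map_add, map_mul, map_pow] at happ
      have hphi0 : phi (X 0 : R3) = Polynomial.C (X 0) := by
        simp [phi]
      have hphi1 : phi (X 1 : R3) = Polynomial.C (X 1) := by
        simp [phi]
      rw [hphi0, hphi1,
        show (Polynomial.C (X 0 : R3) + Polynomial.C (X 1 : R3))
            = Polynomial.C ((X 0 : R3) + X 1) from (map_add _ _ _).symm,
        ← Polynomial.C_pow, ← Polynomial.C_pow, ← Polynomial.C_pow,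
        Polynomial.coeff_add, Polynomial.coeff_mul_C, Polynomial.coeff_mul_C,
        Polynomial.coeff_C_mul] at happ
      rw [slice_F r F hhom hcoe (m 2) ha1 har] at happ
      have hmul : (X 1 : R3) ^ (r + 1)
            * monomial (Finsupp.single 1 (r - m 2))
                (coeff (Finsupp.single 1 (r - m 2) + Finsupp.single 2 (m 2)) F)
          = monomial (Finsupp.single 1 (r + 1 + (r - m 2)))
              (coeff (Finsupp.single 1 (r - m 2) + Finsupp.single 2 (m 2)) F) := by
        rw [X_pow_eq_monomial, monomial_mul, one_mul, ← Finsupp.single_add]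
      rw [hmul] at happ
      have hc := key_s7 r (r + 1 + (r - m 2)) (by omega) (by omega) _ _ _ happ
      have hmeq : m = Finsupp.single 1 (r - m 2) + Finsupp.single 2 (m 2) := by
        ext j
        simp only [Finsupp.add_apply, Finsupp.single_apply]
        fin_cases j <;> simp <;> omega
      rw [hmeq]
      exact hc
  apply MvPolynomial.ext
  intro m
  rw [coeff_zero]
  by_cases hsum : m 0 + m 1 + m 2 = r
  · by_cases h0 : m 0 = 0
    · exact hclaim0 m hsum h0
    · by_cases h2 : m 2 = 0
      · rw [hasym m]
        rw [hclaim0 (Finsupp.mapDomain (⇑(Equiv.swap (0 : Fin 3) 2)) m) ?_ ?_]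
        · exact neg_zero
        · rw [hmap, hmap, hmap]
          simp only [Equiv.swap_apply_left,
            Equiv.swap_apply_of_ne_of_ne (by decide : (1:Fin 3) ≠ 0) (by decide : (1:Fin 3) ≠ 2),
            Equiv.swap_apply_right]
          omega
        · rw [hmap, Equiv.swap_apply_left]
          exact h2
      · exact hcoe m (by omega) (by omega)
  · by_contra hne
    exact hsum ((isHom_iff3 F r).mp hhom m hne)

/-- Antisymmetry vanishing (from the proof of Proposition 2.4): if `F ∈ K(r)`
and `σ(F) = −F` where `σ` swaps `x` and `z`, then `F = 0`. -/
theorem antisymmetric_vanishing (r : ℕ) (hr : 1 ≤ r) (F : R3) (hF : F ∈ K r)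
    (hanti : rename (Equiv.swap (0 : Fin 3) 2) F = -F) :
    F = 0 := by
  induction r, hr using Nat.le_induction generalizing F with
  | base =>
    rw [mem_K_iff] at hF
    obtain ⟨hhom, hJ1, -⟩ := hF
    apply final 1 F hhom hanti ?_ hJ1
    apply MvPolynomial.ext
    intro m
    rw [coeff_pderiv, coeff_pderiv, coeff_zero]
    have hz : coeff ((m + Finsupp.single 0 1) + Finsupp.single 2 1) F = 0 := by
      by_contra hne
      have := (isHom_iff3 F 1).mp hhom _ hne
      simp only [Finsupp.add_apply, Finsupp.single_apply] at this
      simp at this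
      omega
    rw [hz, mul_zero, mul_zero]
  | succ n hn ih =>
    obtain ⟨s, rfl⟩ : ∃ s, n = s + 1 := ⟨n - 1, by omega⟩
    have hG : (X 1 : R3) * pderiv 0 (pderiv 2 F) ∈ K (s + 1) := step s F hF
    have hGanti : rename (Equiv.swap (0 : Fin 3) 2)
        ((X 1 : R3) * pderiv 0 (pderiv 2 F))
        = -((X 1 : R3) * pderiv 0 (pderiv 2 F)) := by
      rw [map_mul, rename_X]
      have hsw1 : (Equiv.swap (0 : Fin 3) 2) 1 = 1 :=
        Equiv.swap_apply_of_ne_of_ne (by decide) (by decide)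
      rw [hsw1]
      have hin : rename (⇑(Equiv.swap (0 : Fin 3) 2)) (pderiv 2 F)
          = pderiv 0 (rename (⇑(Equiv.swap (0 : Fin 3) 2)) F) := by
        have := pderiv_rename (Equiv.injective (Equiv.swap (0 : Fin 3) 2)) 2 F
        rw [Equiv.swap_apply_right] at this
        exact this.symm
      have hout : rename (⇑(Equiv.swap (0 : Fin 3) 2)) (pderiv 0 (pderiv 2 F))
          = pderiv 2 (rename (⇑(Equiv.swap (0 : Fin 3) 2)) (pderiv 2 F)) := by
        have := pderiv_rename (Equiv.injective (Equiv.swap (0 : Fin 3) 2)) 0 (pderiv 2 F)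
        rw [Equiv.swap_apply_left] at this
        exact this.symm
      rw [hout, hin, hanti, map_neg, map_neg, pderiv_comm, mul_neg]
    have hG0 : (X 1 : R3) * pderiv 0 (pderiv 2 F) = 0 := ih _ hG hGanti
    have hD : pderiv 0 (pderiv 2 F) = 0 := by
      rcases mul_eq_zero.mp hG0 with h | h
      · exact absurd h (X_ne_zero 1)
      · exact h
    rw [mem_K_iff] at hF
    obtain ⟨hhom, hJ1, -⟩ := hF
    exact final (s + 2) F hhom hanti hD hJ1


end
end

section
/- (Proposition 2.5) Let r ≥ 2. If F ∈ R is homogeneous of degree r−1 and y^{r+1}·F ∈ J₁(r) ∩ J₂(r), then F = 0. In other words, the colon ideal 𝓘(r) = (J₁(r):⟨y^{r+1}⟩) ∩ (J₂(r):⟨y^{r+1}⟩) has no nonzero homogeneous element of degree r−1 (hence is minimally generated in degree r). -/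
open MvPolynomial

noncomputable section

abbrev PP := Polynomial (Polynomial ℝ)

lemma iter_deriv_zero_natDegree_le (n : ℕ) (p : Polynomial ℝ)
    (h : Polynomial.derivative^[n+1] p = 0) : p.natDegree ≤ n := by
  induction n generalizing p with
  | zero =>
    rw [Function.iterate_one] at h
    exact (Polynomial.natDegree_eq_zero_of_derivative_eq_zero h).le
  | succ n ih =>
    rw [Function.iterate_succ_apply] at h
    have hd := ih _ h
    by_cases h0 : p.natDegree = 0
    · omega
    · have hcd := Polynomial.coeff_derivative p (p.natDegree - 1)
      have h1 : p.natDegree - 1 + 1 = p.natDegree := by omega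
      rw [h1] at hcd
      have hne : (Polynomial.derivative p).coeff (p.natDegree - 1) ≠ 0 := by
        rw [hcd]
        refine mul_ne_zero ?_ ?_
        · exact mt Polynomial.leadingCoeff_eq_zero.mp (fun hp => h0 (by simp [hp]))
        · have : ((p.natDegree - 1 : ℕ) : ℝ) + 1 ≠ 0 := by positivity
          simpa using this
      have := Polynomial.le_natDegree_of_ne_zero hne
      omega

lemma stepD (m : ℕ) (p a : Polynomial ℝ) (hp : Polynomial.derivative p = 1) :
    Polynomial.derivative (p^(m+1) * a) = p^m * (Polynomial.C ((m+1 : ℕ) : ℝ) * a + p * Polynomial.derivative a) := by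
  rw [Polynomial.derivative_mul, Polynomial.derivative_pow, hp]
  simp only [Nat.add_sub_cancel, mul_one]
  rw [pow_succ]
  push_cast
  ring

lemma ItA (n ρ : ℕ) (a : Polynomial ℝ) :
    ∃ a1 : Polynomial ℝ, Polynomial.derivative^[n] ((Polynomial.X+1)^(n+ρ) * a) = (Polynomial.X+1)^ρ * a1 := by
  induction n generalizing a with
  | zero => exact ⟨a, by rw [zero_add, Function.iterate_zero_apply]⟩
  | succ n ih =>
    rw [Function.iterate_succ_apply]
    have he : n + 1 + ρ = (n + ρ) + 1 := by omega
    rw [he, stepD (n+ρ) (Polynomial.X+1) a (by simp)]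
    exact ih _

lemma ItB (n s : ℕ) (b : Polynomial ℝ) :
    ∃ b1 : Polynomial ℝ, Polynomial.derivative^[n] (Polynomial.X^(n+s) * b) = Polynomial.X^s * b1 ∧ b1.natDegree ≤ b.natDegree := by
  induction n generalizing b with
  | zero => exact ⟨b, by rw [zero_add, Function.iterate_zero_apply], le_rfl⟩
  | succ n ih =>
    rw [Function.iterate_succ_apply]
    have he : n + 1 + s = (n + s) + 1 := by omega
    rw [he, stepD (n+s) Polynomial.X b (by simp)]
    obtain ⟨b1, h1, h2⟩ := ih (Polynomial.C ((n+s+1 : ℕ) : ℝ) * b + Polynomial.X * Polynomial.derivative b)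
    refine ⟨b1, h1, h2.trans ?_⟩
    refine (Polynomial.natDegree_add_le _ _).trans (max_le ?_ ?_)
    · exact Polynomial.natDegree_C_mul_le _ _
    · by_cases hb : Polynomial.derivative b = 0
      · simp [hb]
      · refine (Polynomial.natDegree_mul_le).trans ?_
        have hb0 : b.natDegree ≠ 0 := by
          intro h0
          exact hb (by rw [Polynomial.eq_C_of_natDegree_eq_zero h0]; simp)
        have := Polynomial.natDegree_derivative_lt hb0
        simp only [Polynomial.natDegree_X]
        omega


lemma iter_deriv_add (n : ℕ) (p q : Polynomial ℝ) :
    Polynomial.derivative^[n] (p + q) = Polynomial.derivative^[n] p + Polynomial.derivative^[n] q := by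
  induction n generalizing p q with
  | zero => rfl
  | succ n ih => rw [Function.iterate_succ_apply, Function.iterate_succ_apply,
      Function.iterate_succ_apply, map_add, ih]

/-- The core univariate lemma. -/
lemma lemU (e ρ' s' : ℕ) (a b c : Polynomial ℝ)
    (h : c = (Polynomial.X+1)^(e+1+ρ') * a + Polynomial.X^(e+1+s') * b)
    (hc : c.natDegree ≤ e) (hb : b.natDegree < ρ') : c = 0 := by
  obtain ⟨a1, ha1⟩ := ItA (e+1) ρ' a
  obtain ⟨b1, hb1, hb1d⟩ := ItB (e+1) s' b
  have hzero : Polynomial.derivative^[e+1] c = 0 := Polynomial.iterate_derivative_eq_zero (by omega)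
  have hdeg1 : ((Polynomial.X:Polynomial ℝ)+1).natDegree = 1 := by
    simpa using Polynomial.natDegree_X_add_C (1:ℝ)
  have hsum : (Polynomial.X+1)^ρ' * a1 + Polynomial.X^s' * b1 = 0 := by
    rw [← ha1, ← hb1, ← iter_deriv_add, ← h, hzero]
  -- b1 = 0
  have hdvd : ((Polynomial.X+1):Polynomial ℝ)^ρ' ∣ Polynomial.X^s' * b1 := by
    refine ⟨-a1, ?_⟩
    linear_combination hsum
  have hcop : IsCoprime (((Polynomial.X+1):Polynomial ℝ)^ρ') ((Polynomial.X:Polynomial ℝ)^s') := by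
    refine IsCoprime.pow ?_
    exact ⟨1, -1, by ring⟩
  have hdvd1 : ((Polynomial.X+1):Polynomial ℝ)^ρ' ∣ b1 := hcop.dvd_of_dvd_mul_left hdvd
  have hb1z : b1 = 0 := by
    by_contra hne
    have := Polynomial.natDegree_le_of_dvd hdvd1 hne
    rw [Polynomial.natDegree_pow, hdeg1] at this
    omega
  -- a = 0
  have ha1z : a1 = 0 := by
    rw [hb1z, mul_zero, add_zero] at hsum
    have hXne : ((Polynomial.X+1):Polynomial ℝ)^ρ' ≠ 0 := pow_ne_zero _ (by
      intro hX
      have := congrArg (fun p => Polynomial.coeff p 0) hX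
      simp at this)
    exact (mul_eq_zero.mp hsum).resolve_left hXne
  have haz : a = 0 := by
    by_contra hne
    have hzz : Polynomial.derivative^[e+1] ((Polynomial.X+1)^(e+1+ρ') * a) = 0 := by rw [ha1, ha1z, mul_zero]
    have hle := iter_deriv_zero_natDegree_le e _ hzz
    have hXne : ((Polynomial.X+1):Polynomial ℝ)^(e+1+ρ') ≠ 0 := pow_ne_zero _ (by
      intro hX
      have := congrArg (fun p => Polynomial.coeff p 0) hX
      simp at this)
    rw [Polynomial.natDegree_mul hXne hne, Polynomial.natDegree_pow, hdeg1] at hle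
    omega
  rw [haz, mul_zero, zero_add] at h
  by_cases hbz : b = 0
  · rw [h, hbz, mul_zero]
  · exfalso
    have : c.natDegree = e+1+s' + b.natDegree := by
      rw [h, Polynomial.natDegree_mul (pow_ne_zero _ Polynomial.X_ne_zero) hbz, Polynomial.natDegree_pow, Polynomial.natDegree_X]
      ring
    omega

def u1 : Fin 3 → PP := ![Polynomial.C Polynomial.X, 1, Polynomial.X]
def u2 : Fin 3 → PP := ![Polynomial.X, 1, Polynomial.C Polynomial.X]

def E (j b k : ℕ) : Fin 3 →₀ ℕ :=
  Finsupp.single 0 j + Finsupp.single 1 b + Finsupp.single 2 k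

lemma E_apply (j b k : ℕ) : E j b k 0 = j ∧ E j b k 1 = b ∧ E j b k 2 = k := by
  refine ⟨?_, ?_, ?_⟩ <;> simp [E, Finsupp.single_apply]

lemma degree3 (m : Fin 3 →₀ ℕ) : m.degree = m 0 + m 1 + m 2 := by
  rw [Finsupp.degree_apply]
  rw [Finset.sum_subset (Finset.subset_univ _) (by
    intro i _ hi
    simpa using Finsupp.notMem_support_iff.mp hi)]
  rw [Fin.sum_univ_three]

lemma term1 (m : Fin 3 →₀ ℕ) (c : ℝ) (j k : ℕ) :
    (((aeval u1) (monomial m c)).coeff k).coeff j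
      = if m 0 = j ∧ m 2 = k then c else 0 := by
  rw [aeval_monomial, Finsupp.prod_pow, Fin.prod_univ_three]
  have h0 : u1 0 = Polynomial.C Polynomial.X := rfl
  have h1 : u1 1 = 1 := rfl
  have h2 : u1 2 = Polynomial.X := rfl
  rw [h0, h1, h2, one_pow, mul_one]
  have halg : algebraMap ℝ PP c = Polynomial.C (Polynomial.C c) := rfl
  rw [halg, ← Polynomial.C_pow, ← mul_assoc, ← Polynomial.C_mul]
  rw [Polynomial.coeff_C_mul, Polynomial.coeff_X_pow]
  by_cases hk : k = m 2
  · simp only [hk, if_true, mul_one, Polynomial.coeff_mul_C]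
    rw [Polynomial.coeff_C_mul, Polynomial.coeff_X_pow]
    by_cases hj : j = m 0 <;> simp [hj, eq_comm]
  · rw [if_neg hk]
    rw [mul_zero, Polynomial.coeff_zero, if_neg (fun h : m 0 = j ∧ m 2 = k => hk h.2.symm)]

lemma term2 (m : Fin 3 →₀ ℕ) (c : ℝ) (j k : ℕ) :
    (((aeval u2) (monomial m c)).coeff j).coeff k
      = if m 0 = j ∧ m 2 = k then c else 0 := by
  rw [aeval_monomial, Finsupp.prod_pow, Fin.prod_univ_three]
  have h0 : u2 0 = Polynomial.X := rfl
  have h1 : u2 1 = 1 := rfl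
  have h2 : u2 2 = Polynomial.C Polynomial.X := rfl
  rw [h0, h1, h2, one_pow, mul_one]
  have halg : algebraMap ℝ PP c = Polynomial.C (Polynomial.C c) := rfl
  rw [halg, ← Polynomial.C_pow]
  have hre : Polynomial.C (Polynomial.C c) * Polynomial.X ^ m 0
        * Polynomial.C (Polynomial.X ^ m 2)
      = Polynomial.C (Polynomial.C c * Polynomial.X ^ m 2) * Polynomial.X ^ m 0 := by
    rw [Polynomial.C_mul]; ring
  rw [← mul_assoc]
  rw [hre, Polynomial.coeff_C_mul, Polynomial.coeff_X_pow]
  by_cases hj : j = m 0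
  · simp only [hj, if_true, mul_one, Polynomial.coeff_mul_C]
    rw [Polynomial.coeff_C_mul, Polynomial.coeff_X_pow]
    by_cases hk : k = m 2 <;> simp [hk, eq_comm]
  · rw [if_neg hj]
    rw [mul_zero, Polynomial.coeff_zero, if_neg (fun h : m 0 = j ∧ m 2 = k => hj h.1.symm)]

lemma coeff_aeval_u1 (P : R3) {D : ℕ} (hP : P.IsHomogeneous D) (j k : ℕ) :
    (((aeval u1) P).coeff k).coeff j = MvPolynomial.coeff (E j (D - j - k) k) P := by
  have hE := E_apply j (D - j - k) k
  conv_lhs => rw [P.as_sum]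
  rw [map_sum, Polynomial.finset_sum_coeff, Polynomial.finset_sum_coeff]
  simp only [term1]
  by_cases hjk : j + k ≤ D
  · rw [Finset.sum_eq_single (E j (D-j-k) k)]
    · rw [if_pos ⟨hE.1, hE.2.2⟩]
    · intro m hm hne
      rw [if_neg]
      rintro ⟨hm0, hm2⟩
      apply hne
      have hdeg : m.degree = D := by
        by_contra hd
        exact (MvPolynomial.mem_support_iff.mp hm) (hP.coeff_eq_zero hd)
      rw [degree3] at hdeg
      ext i
      fin_cases i
      · show m 0 = E j (D-j-k) k 0
        rw [hE.1]; exact hm0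
      · show m 1 = E j (D-j-k) k 1
        rw [hE.2.1]; omega
      · show m 2 = E j (D-j-k) k 2
        rw [hE.2.2]; exact hm2
    · intro hnotmem
      rw [if_pos ⟨hE.1, hE.2.2⟩]
      exact MvPolynomial.notMem_support_iff.mp hnotmem
  · rw [Finset.sum_eq_zero, eq_comm]
    · apply hP.coeff_eq_zero
      rw [degree3, hE.1, hE.2.1, hE.2.2]
      omega
    · intro m hm
      rw [if_neg]
      rintro ⟨hm0, hm2⟩
      have hdeg : m.degree = D := by
        by_contra hd
        exact (MvPolynomial.mem_support_iff.mp hm) (hP.coeff_eq_zero hd)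
      rw [degree3] at hdeg
      omega

lemma coeff_aeval_u2 (P : R3) {D : ℕ} (hP : P.IsHomogeneous D) (j k : ℕ) :
    (((aeval u2) P).coeff j).coeff k = MvPolynomial.coeff (E j (D - j - k) k) P := by
  have hE := E_apply j (D - j - k) k
  conv_lhs => rw [P.as_sum]
  rw [map_sum, Polynomial.finset_sum_coeff, Polynomial.finset_sum_coeff]
  simp only [term2]
  by_cases hjk : j + k ≤ D
  · rw [Finset.sum_eq_single (E j (D-j-k) k)]
    · rw [if_pos ⟨hE.1, hE.2.2⟩]
    · intro m hm hne
      rw [if_neg]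
      rintro ⟨hm0, hm2⟩
      apply hne
      have hdeg : m.degree = D := by
        by_contra hd
        exact (MvPolynomial.mem_support_iff.mp hm) (hP.coeff_eq_zero hd)
      rw [degree3] at hdeg
      ext i
      fin_cases i
      · show m 0 = E j (D-j-k) k 0
        rw [hE.1]; exact hm0
      · show m 1 = E j (D-j-k) k 1
        rw [hE.2.1]; omega
      · show m 2 = E j (D-j-k) k 2
        rw [hE.2.2]; exact hm2
    · intro hnotmem
      rw [if_pos ⟨hE.1, hE.2.2⟩]
      exact MvPolynomial.notMem_support_iff.mp hnotmem
  · rw [Finset.sum_eq_zero, eq_comm]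
    · apply hP.coeff_eq_zero
      rw [degree3, hE.1, hE.2.1, hE.2.2]
      omega
    · intro m hm
      rw [if_neg]
      rintro ⟨hm0, hm2⟩
      have hdeg : m.degree = D := by
        by_contra hd
        exact (MvPolynomial.mem_support_iff.mp hm) (hP.coeff_eq_zero hd)
      rw [degree3] at hdeg
      omega

lemma coeff_E_zero_of_big (P : R3) {D : ℕ} (hP : P.IsHomogeneous D) (j k : ℕ)
    (h : D < j + k) : MvPolynomial.coeff (E j (D - j - k) k) P = 0 := by
  apply hP.coeff_eq_zero
  have hE := E_apply j (D - j - k) k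
  rw [degree3, hE.1, hE.2.1, hE.2.2]
  omega

lemma hc_mul (p q : R3) (n m : ℕ) (hq : q.IsHomogeneous m) :
    homogeneousComponent (n+m) (p*q) = homogeneousComponent n p * q := by
  have key : ∀ i, homogeneousComponent (n+m) (homogeneousComponent i p * q)
      = if n + m = i + m then homogeneousComponent i p * q else 0 := fun i =>
    homogeneousComponent_of_mem ((mem_homogeneousSubmodule _ _).mpr
      ((homogeneousComponent_isHomogeneous i p).mul hq))
  have h1 : homogeneousComponent (n+m) (p*q)
      = ∑ i ∈ Finset.range (p.totalDegree+1),
          homogeneousComponent (n+m) (homogeneousComponent i p * q) := by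
    conv_lhs => rw [← sum_homogeneousComponent p, Finset.sum_mul]
    rw [map_sum]
  rw [h1, Finset.sum_eq_single n]
  · rw [key n, if_pos rfl]
  · intro i _ hne
    rw [key i, if_neg (by omega)]
  · intro hn
    rw [key n, if_pos rfl,
      homogeneousComponent_eq_zero _ _ (by simp at hn; omega), zero_mul]


/-- Proposition 2.5: for `r ≥ 2`, if `F` is homogeneous of degree `r−1` and
`y^{r+1}·F ∈ J₁(r) ∩ J₂(r)`, then `F = 0`; hence the colon ideal
`(J₁(r):⟨y^{r+1}⟩) ∩ (J₂(r):⟨y^{r+1}⟩)` has no nonzero element of degree `r−1`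
(so it is minimally generated in degree `r`). -/
theorem prop_2_5 (r : ℕ) (hr : 2 ≤ r) (F : R3) (hF : F.IsHomogeneous (r - 1))
    (hmem : (X 1 : R3) ^ (r + 1) * F ∈ J1 r ⊓ J2 r) :
    F = 0 := by
  set D := r - 1 with hDdef
  have hrD : r + 1 = D + 2 := by omega
  obtain ⟨h1, h2⟩ := Submodule.mem_inf.mp hmem
  rw [J1, Ideal.mem_span_pair] at h1
  rw [J2, Ideal.mem_span_pair] at h2
  obtain ⟨A, B, hAB⟩ := h1
  obtain ⟨Cc, Dd, hCD⟩ := h2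
  rw [hrD] at hAB hCD
  -- homogeneity facts
  have hy2 : ((X 1 : R3) ^ (D+2)).IsHomogeneous (D+2) := by
    simpa using (isHomogeneous_X ℝ (1 : Fin 3)).pow (D+2)
  have hx2 : ((X 0 : R3) ^ (D+2)).IsHomogeneous (D+2) := by
    simpa using (isHomogeneous_X ℝ (0 : Fin 3)).pow (D+2)
  have hxy2 : (((X 0 : R3) + X 1) ^ (D+2)).IsHomogeneous (D+2) := by
    simpa using ((isHomogeneous_X ℝ (0 : Fin 3)).add (isHomogeneous_X ℝ (1 : Fin 3))).pow (D+2)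
  have hz2 : ((X 2 : R3) ^ (D+2)).IsHomogeneous (D+2) := by
    simpa using (isHomogeneous_X ℝ (2 : Fin 3)).pow (D+2)
  have hzy2 : (((X 2 : R3) + X 1) ^ (D+2)).IsHomogeneous (D+2) := by
    simpa using ((isHomogeneous_X ℝ (2 : Fin 3)).add (isHomogeneous_X ℝ (1 : Fin 3))).pow (D+2)
  have hPmem : ((X 1 : R3) ^ (D+2) * F) ∈ homogeneousSubmodule (Fin 3) ℝ ((D+2)+D) :=
    (mem_homogeneousSubmodule _ _).mpr (hy2.mul hF)
  -- homogeneous cofactors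
  have hAB2 := congrArg (homogeneousComponent (D+(D+2))) hAB
  rw [map_add, hc_mul A _ D (D+2) hx2, hc_mul B _ D (D+2) hxy2,
    homogeneousComponent_of_mem hPmem, if_pos (by omega)] at hAB2
  have hCD2 := congrArg (homogeneousComponent (D+(D+2))) hCD
  rw [map_add, hc_mul Cc _ D (D+2) hz2, hc_mul Dd _ D (D+2) hzy2,
    homogeneousComponent_of_mem hPmem, if_pos (by omega)] at hCD2
  set A' := homogeneousComponent D A with hA'def
  set B' := homogeneousComponent D B with hB'def
  set C' := homogeneousComponent D Cc with hC'def
  set D' := homogeneousComponent D Dd with hD'def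
  have hA'h : A'.IsHomogeneous D := homogeneousComponent_isHomogeneous D A
  have hB'h : B'.IsHomogeneous D := homogeneousComponent_isHomogeneous D B
  have hC'h : C'.IsHomogeneous D := homogeneousComponent_isHomogeneous D Cc
  have hD'h : D'.IsHomogeneous D := homogeneousComponent_isHomogeneous D Dd
  -- push through aeval u1
  have e1 : aeval u1 ((X 0 : R3) ^ (D+2)) = Polynomial.C (Polynomial.X ^ (D+2)) := by
    rw [map_pow, aeval_X]
    show (Polynomial.C Polynomial.X) ^ (D+2) = _
    rw [← Polynomial.C_pow]
  have e2 : aeval u1 (((X 0 : R3) + X 1) ^ (D+2))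
      = Polynomial.C ((Polynomial.X + 1) ^ (D+2)) := by
    rw [map_pow, map_add, aeval_X, aeval_X]
    show (Polynomial.C Polynomial.X + 1) ^ (D+2) = _
    rw [map_pow, map_add, Polynomial.C_1]
  have e3 : aeval u1 ((X 1 : R3) ^ (D+2) * F) = aeval u1 F := by
    rw [map_mul, map_pow, aeval_X]
    show (1 : PP) ^ (D+2) * _ = _
    rw [one_pow, one_mul]
  have hfid : aeval u1 F = aeval u1 A' * Polynomial.C (Polynomial.X ^ (D+2))
      + aeval u1 B' * Polynomial.C ((Polynomial.X + 1) ^ (D+2)) := by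
    rw [← e1, ← e2, ← e3, ← hAB2, map_add, map_mul, map_mul]
  have fkeq : ∀ m, ((aeval u1) F).coeff m
      = ((aeval u1) A').coeff m * Polynomial.X ^ (D+2)
      + ((aeval u1) B').coeff m * (Polynomial.X + 1) ^ (D+2) := by
    intro m
    rw [hfid, Polynomial.coeff_add, Polynomial.coeff_mul_C, Polynomial.coeff_mul_C]
  -- push through aeval u2
  have e1' : aeval u2 ((X 2 : R3) ^ (D+2)) = Polynomial.C (Polynomial.X ^ (D+2)) := by
    rw [map_pow, aeval_X]
    show (Polynomial.C Polynomial.X) ^ (D+2) = _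
    rw [← Polynomial.C_pow]
  have e2' : aeval u2 (((X 2 : R3) + X 1) ^ (D+2))
      = Polynomial.C ((Polynomial.X + 1) ^ (D+2)) := by
    rw [map_pow, map_add, aeval_X, aeval_X]
    show (Polynomial.C Polynomial.X + 1) ^ (D+2) = _
    rw [map_pow, map_add, Polynomial.C_1]
  have e3' : aeval u2 ((X 1 : R3) ^ (D+2) * F) = aeval u2 F := by
    rw [map_mul, map_pow, aeval_X]
    show (1 : PP) ^ (D+2) * _ = _
    rw [one_pow, one_mul]
  have hgid : aeval u2 F = aeval u2 C' * Polynomial.C (Polynomial.X ^ (D+2))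
      + aeval u2 D' * Polynomial.C ((Polynomial.X + 1) ^ (D+2)) := by
    rw [← e1', ← e2', ← e3', ← hCD2, map_add, map_mul, map_mul]
  have gkeq : ∀ m, ((aeval u2) F).coeff m
      = ((aeval u2) C').coeff m * Polynomial.X ^ (D+2)
      + ((aeval u2) D').coeff m * (Polynomial.X + 1) ^ (D+2) := by
    intro m
    rw [hgid, Polynomial.coeff_add, Polynomial.coeff_mul_C, Polynomial.coeff_mul_C]
  -- coefficient notation
  set c : ℕ → ℕ → ℝ := fun j k => MvPolynomial.coeff (E j (D - j - k) k) F with hcdef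
  have hc1 : ∀ j k, (((aeval u1) F).coeff k).coeff j = c j k := fun j k =>
    coeff_aeval_u1 F hF j k
  have hc2 : ∀ j k, (((aeval u2) F).coeff j).coeff k = c j k := fun j k =>
    coeff_aeval_u2 F hF j k
  have hFb : ∀ j k, D < j + k → c j k = 0 := fun j k h => coeff_E_zero_of_big F hF j k h
  have hαb : ∀ j k, D < j + k → (((aeval u1) A').coeff k).coeff j = 0 := by
    intro j k h
    rw [coeff_aeval_u1 A' hA'h j k]
    exact coeff_E_zero_of_big A' hA'h j k h
  have hγb : ∀ j k, D < j + k → (((aeval u2) C').coeff j).coeff k = 0 := by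
    intro j k h
    rw [coeff_aeval_u2 C' hC'h j k]
    exact coeff_E_zero_of_big C' hC'h j k h
  have hαdeg : ∀ m, (((aeval u1) A').coeff m).natDegree ≤ D - m := by
    intro m
    rw [Polynomial.natDegree_le_iff_coeff_eq_zero]
    intro N hN
    exact hαb N m (by omega)
  have hγdeg : ∀ m, (((aeval u2) C').coeff m).natDegree ≤ D - m := by
    intro m
    rw [Polynomial.natDegree_le_iff_coeff_eq_zero]
    intro N hN
    exact hγb m N (by omega)
  -- the peeling induction
  have peel : ∀ t, ∀ m, D + 1 ≤ m + t → ∀ j k, (m ≤ j ∨ m ≤ k) → c j k = 0 := by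
    intro t
    induction t with
    | zero =>
      intro m hm j k hjk
      exact hFb j k (by omega)
    | succ t ih =>
      intro m hmt j k hjk
      by_cases hcase : D + 1 ≤ m + t
      · exact ih m hcase j k hjk
      · have hmD : m + t = D := by omega
        have hQ : ∀ j' k', (m + 1 ≤ j' ∨ m + 1 ≤ k') → c j' k' = 0 :=
          fun j' k' h' => ih (m+1) (by omega) j' k' h'
        set e := min m (D - m) with hedef
        have heM : e ≤ m := min_le_left _ _
        have heD : e ≤ D - m := min_le_right _ _
        have hee : e + 1 + (D + 1 - e) = D + 2 := by omega
        -- A-side : kill row k = m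
        have hfm : ((aeval u1) F).coeff m = 0 := by
          apply lemU e (D + 1 - e) (D + 1 - e)
            (((aeval u1) B').coeff m) (((aeval u1) A').coeff m) _ ?_ ?_ ?_
          · rw [hee, fkeq m]; ring
          · rw [Polynomial.natDegree_le_iff_coeff_eq_zero]
            intro N hN
            rw [hc1 N m]
            by_cases hNm : m + 1 ≤ N
            · exact hQ N m (Or.inl hNm)
            · refine hFb N m ?_
              rcases le_total m (D - m) with hle | hle
              · rw [min_eq_left hle] at hedef; omega
              · rw [min_eq_right hle] at hedef; omega
          · have := hαdeg m
            omega
        have hrow : ∀ j', c j' m = 0 := by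
          intro j'
          rw [← hc1 j' m, hfm, Polynomial.coeff_zero]
        -- B-side : kill column j = m
        have hgm : ((aeval u2) F).coeff m = 0 := by
          apply lemU e (D + 1 - e) (D + 1 - e)
            (((aeval u2) D').coeff m) (((aeval u2) C').coeff m) _ ?_ ?_ ?_
          · rw [hee, gkeq m]; ring
          · rw [Polynomial.natDegree_le_iff_coeff_eq_zero]
            intro N hN
            rw [hc2 m N]
            by_cases hNm : m + 1 ≤ N
            · exact hQ m N (Or.inr hNm)
            · refine hFb m N ?_
              rcases le_total m (D - m) with hle | hle
              · rw [min_eq_left hle] at hedef; omega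
              · rw [min_eq_right hle] at hedef; omega
          · have := hγdeg m
            omega
        have hcol : ∀ k', c m k' = 0 := by
          intro k'
          rw [← hc2 m k', hgm, Polynomial.coeff_zero]
        rcases hjk with hj | hk
        · rcases Nat.eq_or_lt_of_le hj with heq | hlt
          · rw [← heq]; exact hcol k
          · exact hQ j k (Or.inl hlt)
        · rcases Nat.eq_or_lt_of_le hk with heq | hlt
          · rw [← heq]; exact hrow j
          · exact hQ j k (Or.inr hlt)
  have hall : ∀ j k, c j k = 0 := fun j k =>
    peel (D+1) 0 (by omega) j k (Or.inl (Nat.zero_le _))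
  -- conclude F = 0
  apply MvPolynomial.ext
  intro m
  rw [MvPolynomial.coeff_zero]
  by_cases hdm : m.degree = D
  · have hE := E_apply (m 0) (D - m 0 - m 2) (m 2)
    have h3 := degree3 m
    have hm1 : m = E (m 0) (D - m 0 - m 2) (m 2) := by
      ext i
      fin_cases i
      · show m 0 = E (m 0) (D - m 0 - m 2) (m 2) 0
        rw [hE.1]
      · show m 1 = E (m 0) (D - m 0 - m 2) (m 2) 1
        rw [hE.2.1]; omega
      · show m 2 = E (m 0) (D - m 0 - m 2) (m 2) 2
        rw [hE.2.2]
    rw [hm1]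
    exact hall (m 0) (m 2)
  · exact hF.coeff_eq_zero hdm


end
end

section
/- (Key claim in the proof of Theorem 2.6) Let n ≥ 2 and let G ∈ R be homogeneous of degree 2n−3. If x·z·G ∈ K(2n−1), i.e. y^{2n}·(x·z·G) ∈ J₁(2n−1) ∩ J₂(2n−1) = ⟨x^{2n},(x+y)^{2n}⟩ ∩ ⟨z^{2n},(z+y)^{2n}⟩, then G = 0. Consequently no nonzero element of K(2n−1) is divisible by x·z. -/
open MvPolynomial

noncomputable section

/-- A nonzero real polynomial divisible by `(X-1)^m` has more than `m` nonzero
coefficients. -/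
lemma term_count : ∀ (m : ℕ) (f : Polynomial ℝ), f ≠ 0 →
    (Polynomial.X - 1) ^ m ∣ f → m < f.support.card := by
  intro m
  induction m with
  | zero =>
    intro f hf _
    simpa [Finset.card_pos, Polynomial.support_nonempty] using hf
  | succ m ih =>
    intro f hf hdvd
    -- strip the trailing part
    set e := f.natTrailingDegree with he
    have hXe : (Polynomial.X : Polynomial ℝ) ^ e ∣ f := by
      rw [Polynomial.X_pow_dvd_iff]
      intro d hd
      exact Polynomial.coeff_eq_zero_of_lt_natTrailingDegree hd
    obtain ⟨g, hfg⟩ := hXe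
    have hg0 : g.coeff 0 ≠ 0 := by
      have h1 : f.coeff e = g.coeff 0 := by
        rw [hfg]
        simpa using Polynomial.coeff_X_pow_mul g e 0
      have h2 : f.coeff e ≠ 0 := by
        rw [he]
        exact Polynomial.coeff_natTrailingDegree_ne_zero.mpr hf
      rwa [h1] at h2
    have hgne : g ≠ 0 := fun h => hg0 (by simp [h])
    -- support cardinalities agree
    have hsupp : f.support = g.support.image (· + e) := by
      ext i
      simp only [Polynomial.mem_support_iff, Finset.mem_image]
      constructor
      · intro hi
        have hei : e ≤ i := by
          by_contra hlt
          push_neg at hlt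
          apply hi
          rw [hfg, Polynomial.coeff_X_pow_mul']
          simp [Nat.not_le.mpr hlt]
        refine ⟨i - e, ?_, by omega⟩
        rw [hfg, Polynomial.coeff_X_pow_mul'] at hi
        simpa [hei] using hi
      · rintro ⟨j, hj, rfl⟩
        rw [hfg]
        have := Polynomial.coeff_X_pow_mul g e j
        rw [add_comm j e] at this
        rw [show e + j = j + e from by omega] at this
        rw [this]
        exact hj
    have hcards : f.support.card = g.support.card := by
      rw [hsupp]
      exact Finset.card_image_of_injective _ (add_left_injective e)
    -- transfer divisibility to g
    have hcop : IsCoprime ((Polynomial.X - 1 : Polynomial ℝ) ^ (m + 1)) ((Polynomial.X : Polynomial ℝ) ^ e) := by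
      apply IsCoprime.pow
      exact ⟨-1, 1, by ring⟩
    have hdvdg : (Polynomial.X - 1 : Polynomial ℝ) ^ (m + 1) ∣ g := by
      apply hcop.dvd_of_dvd_mul_left
      rwa [← hfg]
    by_cases hgc : g.natDegree = 0
    · -- g is a nonzero constant, contradiction with divisibility
      exfalso
      have hgC : g = Polynomial.C (g.coeff 0) := Polynomial.eq_C_of_natDegree_eq_zero hgc
      have hle := Polynomial.natDegree_le_of_dvd (hgC ▸ hdvdg) (by simpa using hg0)
      rw [Polynomial.natDegree_pow] at hle
      rw [show (1 : Polynomial ℝ) = Polynomial.C 1 from (Polynomial.C_1).symm,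
        Polynomial.natDegree_X_sub_C] at hle
      simp [Polynomial.natDegree_C] at hle
    · -- use the derivative
      have hg' : Polynomial.derivative g ≠ 0 := by
        intro h
        exact hgc (Polynomial.natDegree_eq_zero_of_derivative_eq_zero h)
      have hdvd' : (Polynomial.X - 1 : Polynomial ℝ) ^ m ∣ Polynomial.derivative g := by
        obtain ⟨u, hu⟩ := hdvdg
        refine ⟨Polynomial.C ((m + 1 : ℕ) : ℝ) * u + (Polynomial.X - 1) * Polynomial.derivative u, ?_⟩
        rw [hu, Polynomial.derivative_mul, Polynomial.derivative_pow]
        simp only [Polynomial.derivative_sub, Polynomial.derivative_X, Polynomial.derivative_one,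
          sub_zero, mul_one, Nat.add_sub_cancel]
        ring
      have hih := ih (Polynomial.derivative g) hg' hdvd'
      -- card of derivative support
      have hds : (Polynomial.derivative g).support = (g.support.erase 0).image (· - 1) := by
        ext i
        simp only [Polynomial.mem_support_iff, Polynomial.coeff_derivative, Finset.mem_image,
          Finset.mem_erase]
        constructor
        · intro hi
          refine ⟨i + 1, ⟨by omega, ?_⟩, by omega⟩
          intro h
          apply hi
          rw [h, zero_mul]
        · rintro ⟨j, ⟨hj0, hjne⟩, rfl⟩
          have hj1 : j - 1 + 1 = j := by omega
          rw [hj1]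
          exact mul_ne_zero hjne (by positivity)
      have hcard2 : (Polynomial.derivative g).support.card = g.support.card - 1 := by
        rw [hds, Finset.card_image_of_injOn, Finset.card_erase_of_mem]
        · exact Polynomial.mem_support_iff.mpr hg0
        · intro a ha b hb hab
          simp only [Finset.mem_coe, Finset.mem_erase] at ha hb
          dsimp only at hab
          omega
      have h0mem : (0 : ℕ) ∈ g.support := Polynomial.mem_support_iff.mpr hg0
      have hpos : 1 ≤ g.support.card := Finset.card_pos.mpr ⟨0, h0mem⟩
      omega

/-- The window lemma: if `(1-X)^K * p` has `p.coeff 0 = 0` and all its coefficients in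
the window `[w₁, w₂]` vanish, with the window long enough, then `p = 0`. -/
lemma window_lemma (p : Polynomial ℝ) (Kp D w₁ w₂ : ℕ) (hp0 : p.coeff 0 = 0)
    (hD : p.natDegree ≤ D)
    (hw : ∀ γ, w₁ ≤ γ → γ ≤ w₂ → ((1 - Polynomial.X : Polynomial ℝ) ^ Kp * p).coeff γ = 0)
    (h1 : 1 ≤ w₁) (harr : w₁ - 1 + D ≤ w₂) (hKD : w₂ ≤ Kp + D) : p = 0 := by
  by_contra hp
  set g : Polynomial ℝ := (1 - Polynomial.X) ^ Kp * p with hgdef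
  have h1X : (1 - Polynomial.X : Polynomial ℝ) ≠ 0 := by
    intro h
    have := congrArg (fun q => Polynomial.coeff q 0) h
    simp at this
  have hgne : g ≠ 0 := mul_ne_zero (pow_ne_zero _ h1X) hp
  have hdvd : (Polynomial.X - 1 : Polynomial ℝ) ^ Kp ∣ g := by
    refine ⟨(-1 : Polynomial ℝ) ^ Kp * p, ?_⟩
    rw [hgdef, show (1 - Polynomial.X : Polynomial ℝ) = -(Polynomial.X - 1) from by ring,
      neg_pow]
    ring
  have hcount := term_count Kp g hgne hdvd
  have hgdeg : g.natDegree ≤ Kp + D := by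
    refine le_trans (Polynomial.natDegree_mul_le) ?_
    have h1 : ((1 - Polynomial.X : Polynomial ℝ) ^ Kp).natDegree ≤ Kp * 1 := by
      refine le_trans (Polynomial.natDegree_pow_le) ?_
      have : (1 - Polynomial.X : Polynomial ℝ).natDegree ≤ 1 := by
        refine le_trans (Polynomial.natDegree_sub_le _ _) ?_
        simp
      exact Nat.mul_le_mul_left Kp this
    omega
  have hg0 : g.coeff 0 = 0 := by
    rw [hgdef, Polynomial.mul_coeff_zero, hp0, mul_zero]
  have hsub : g.support ⊆ Finset.Icc 1 (w₁ - 1) ∪ Finset.Icc (w₂ + 1) (Kp + D) := by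
    intro i hi
    have hi' : g.coeff i ≠ 0 := Polynomial.mem_support_iff.mp hi
    have hine : i ≠ 0 := fun h => hi' (h ▸ hg0)
    have hile : i ≤ Kp + D := le_trans (Polynomial.le_natDegree_of_ne_zero hi') hgdeg
    have hwin : ¬(w₁ ≤ i ∧ i ≤ w₂) := fun ⟨ha, hb⟩ => hi' (hw i ha hb)
    simp only [Finset.mem_union, Finset.mem_Icc]
    omega
  have hcardle : g.support.card ≤ (w₁ - 1) + (Kp + D - w₂) := by
    calc g.support.card ≤ (Finset.Icc 1 (w₁ - 1) ∪ Finset.Icc (w₂ + 1) (Kp + D)).card :=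
          Finset.card_le_card hsub
    _ ≤ (Finset.Icc 1 (w₁ - 1)).card + (Finset.Icc (w₂ + 1) (Kp + D)).card :=
          Finset.card_union_le _ _
    _ ≤ (w₁ - 1) + (Kp + D - w₂) := by
          rw [Nat.card_Icc, Nat.card_Icc]
          omega
  omega



/-- exponent triples -/
def T3 (a b c : ℕ) : Fin 3 →₀ ℕ :=
  Finsupp.single 0 a + Finsupp.single 1 b + Finsupp.single 2 c

@[simp] lemma T3_apply_0 (a b c : ℕ) : (T3 a b c) 0 = a := by
  simp [T3, Finsupp.single_apply]
@[simp] lemma T3_apply_1 (a b c : ℕ) : (T3 a b c) 1 = b := by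
  simp [T3, Finsupp.single_apply]
@[simp] lemma T3_apply_2 (a b c : ℕ) : (T3 a b c) 2 = c := by
  simp [T3, Finsupp.single_apply]

lemma hom_support_degree {G : R3} {d : ℕ} (hG : G.IsHomogeneous d) {m : Fin 3 →₀ ℕ}
    (hm : coeff m G ≠ 0) : m 0 + m 1 + m 2 = d := by
  rw [← degree3]
  by_contra h
  exact hm (hG.coeff_eq_zero h)

/-- membership in a span of two monomial powers forces coefficient vanishing -/
lemma coeff_span_monomials (c : ℕ) (h : R3)
    (hmem : h ∈ Ideal.span {(X 0 : R3) ^ c, (X 1 : R3) ^ c}) (m : Fin 3 →₀ ℕ)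
    (h0 : m 0 < c) (h1 : m 1 < c) : coeff m h = 0 := by
  rw [Ideal.mem_span_pair] at hmem
  obtain ⟨a, b, hab⟩ := hmem
  rw [← hab, coeff_add, X_pow_eq_monomial, X_pow_eq_monomial,
    coeff_mul_monomial', coeff_mul_monomial']
  rw [if_neg, if_neg, add_zero]
  · rw [Finsupp.single_le_iff]; omega
  · rw [Finsupp.single_le_iff]; omega

/-- `z`-free polynomials -/
def ZFree (q : R3) : Prop := ∀ m : Fin 3 →₀ ℕ, coeff m q ≠ 0 → m 2 = 0

lemma ZFree.mul {p q : R3} (hp : ZFree p) (hq : ZFree q) : ZFree (p * q) := by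
  intro m hm
  by_contra h0
  apply hm
  rw [coeff_mul]
  apply Finset.sum_eq_zero
  rintro ⟨u, v⟩ huv
  rw [Finset.HasAntidiagonal.mem_antidiagonal] at huv
  have h2 : u 2 + v 2 = m 2 := by rw [← huv, Finsupp.add_apply]
  by_cases hcu : coeff u p = 0
  · rw [hcu, zero_mul]
  · have hu2 := hp u hcu
    have hcv : coeff v q = 0 := by
      by_contra hcv
      exact h0 (by rw [← h2, hq v hcv, hu2])
    rw [hcv, mul_zero]

lemma ZFree.add {p q : R3} (hp : ZFree p) (hq : ZFree q) : ZFree (p + q) := by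
  intro m hm
  rw [coeff_add] at hm
  by_cases hcu : coeff m p = 0
  · exact hq m (by intro h; apply hm; rw [hcu, h, add_zero])
  · exact hp m hcu

lemma ZFree_C (r : ℝ) : ZFree (C r) := by
  intro m hm
  rw [coeff_C] at hm
  split at hm
  · next h => rw [← h]; rfl
  · exact absurd rfl hm

lemma ZFree_X0 : ZFree (X 0 : R3) := by
  intro m hm
  rw [coeff_X'] at hm
  split at hm
  · next h => rw [← h]; simp [Finsupp.single_apply]
  · exact absurd rfl hm

lemma ZFree_X1 : ZFree (X 1 : R3) := by
  intro m hm
  rw [coeff_X'] at hm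
  split at hm
  · next h => rw [← h]; simp [Finsupp.single_apply]
  · exact absurd rfl hm

lemma ZFree.pow {p : R3} (hp : ZFree p) (k : ℕ) : ZFree (p ^ k) := by
  induction k with
  | zero => simpa [pow_zero] using ZFree_C 1
  | succ k ih => rw [pow_succ]; exact ih.mul hp

lemma coeff_ZFree_mul_X2pow {q : R3} (hq : ZFree q) (c : ℕ) (m : Fin 3 →₀ ℕ)
    (hne : coeff m (q * (X 2 : R3) ^ c) ≠ 0) : m 2 = c := by
  rw [X_pow_eq_monomial, coeff_mul_monomial'] at hne
  split at hne
  · next hle =>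
    have h1 := hq (m - Finsupp.single 2 c) (fun h => hne (by rw [h, zero_mul]))
    rw [Finsupp.single_le_iff] at hle
    rw [Finsupp.tsub_apply, Finsupp.single_apply, if_pos rfl] at h1
    omega
  · exact absurd rfl hne


/-- the substitution `y ↦ y - x` -/
def sig : R3 →ₐ[ℝ] R3 := aeval ![X 0, X 1 - X 0, X 2]
/-- the substitution `y ↦ y + x` -/
def sig' : R3 →ₐ[ℝ] R3 := aeval ![X 0, X 1 + X 0, X 2]

lemma sig_inv (h : R3) : sig' (sig h) = h := by
  have hcomp : sig'.comp sig = AlgHom.id ℝ R3 := by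
    apply MvPolynomial.algHom_ext
    intro i
    fin_cases i <;>
      simp [sig, sig', AlgHom.comp_apply]
  calc sig' (sig h) = (sig'.comp sig) h := rfl
  _ = h := by rw [hcomp]; rfl

lemma sig_X0 : sig (X 0) = X 0 := by simp [sig]
lemma sig_X1 : sig (X 1) = X 1 - X 0 := by simp [sig]
lemma sig_X2 : sig (X 2) = X 2 := by simp [sig]
lemma sig'_X0 : sig' (X 0) = X 0 := by simp [sig']
lemma sig'_X1 : sig' (X 1) = X 1 + X 0 := by simp [sig']
lemma sig'_X2 : sig' (X 2) = X 2 := by simp [sig']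

/-- the transfer map to `(ℝ[x])[z]`, sending `y ↦ 1` -/
def Th : R3 →ₐ[ℝ] Polynomial (Polynomial ℝ) :=
  aeval ![Polynomial.C Polynomial.X, 1, Polynomial.X]

lemma Th_monomial (m : Fin 3 →₀ ℕ) (r : ℝ) :
    Th (monomial m r) =
      Polynomial.C (Polynomial.C r * Polynomial.X ^ (m 0)) * Polynomial.X ^ (m 2) := by
  rw [Th, aeval_monomial, Finsupp.prod_fintype _ _ (fun i => pow_zero _), Fin.prod_univ_three]
  simp only [Matrix.cons_val_zero, Matrix.cons_val_one, Matrix.head_cons, one_pow, mul_one,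
    Matrix.cons_val_two, Matrix.tail_cons]
  have halg : algebraMap ℝ (Polynomial (Polynomial ℝ)) r = Polynomial.C (Polynomial.C r) := by
    rw [Polynomial.algebraMap_apply, Polynomial.algebraMap_apply]
    simp
  rw [halg, ← Polynomial.C_pow, ← mul_assoc, ← map_mul]

lemma coeffTh (h : R3) (N : ℕ) (hh : h.IsHomogeneous N) (k α : ℕ) :
    ((Th h).coeff k).coeff α =
      if α + k ≤ N then coeff (T3 α (N - α - k) k) h else 0 := by
  conv_lhs => rw [h.as_sum]
  rw [map_sum, Polynomial.finset_sum_coeff, Polynomial.finset_sum_coeff]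
  have hterm : ∀ m ∈ h.support,
      ((Th (monomial m (coeff m h))).coeff k).coeff α =
        if m 2 = k ∧ m 0 = α then coeff m h else 0 := by
    intro m _
    rw [Th_monomial, Polynomial.coeff_C_mul, Polynomial.coeff_X_pow]
    by_cases h2 : m 2 = k
    · rw [if_pos h2.symm, mul_one, Polynomial.coeff_C_mul, Polynomial.coeff_X_pow]
      by_cases h0 : m 0 = α
      · rw [if_pos h0.symm, mul_one, if_pos ⟨h2, h0⟩]
      · rw [if_neg (fun hc => h0 hc.symm), mul_zero, if_neg (fun hc => h0 hc.2)]
    · rw [if_neg (fun hc => h2 hc.symm), mul_zero, Polynomial.coeff_zero,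
        if_neg (fun hc => h2 hc.1)]
  rw [Finset.sum_congr rfl hterm]
  by_cases hcase : α + k ≤ N
  · rw [if_pos hcase]
    have hsingle := Finset.sum_eq_single (s := h.support)
      (f := fun b => if b 2 = k ∧ b 0 = α then coeff b h else 0) (T3 α (N - α - k) k)
      ?_ ?_
    · rw [hsingle]; simp
    · intro b hb hne
      rw [if_neg]
      rintro ⟨hb2, hb0⟩
      apply hne
      have hdeg := hom_support_degree hh (mem_support_iff.mp hb)
      have hb1 : b 1 = N - α - k := by omega
      ext i
      fin_cases i <;> simp [hb0, hb1, hb2]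
    · intro hnotmem
      rw [if_pos ⟨by simp, by simp⟩]
      exact notMem_support_iff.mp hnotmem
  · rw [if_neg hcase]
    apply Finset.sum_eq_zero
    intro b hb
    rw [if_neg]
    rintro ⟨hb2, hb0⟩
    have hdeg := hom_support_degree hh (mem_support_iff.mp hb)
    omega


lemma cond1 (n d : ℕ) (hn : 2 ≤ n) (hd : d ≤ 2 * n - 3) (G : R3) (hG : G.IsHomogeneous d)
    (hmem : (X 1 : R3) ^ (4 * n - 3 - d) * (X 0 * (X 2 * G)) ∈
      Ideal.span {(X 0 : R3) ^ (2 * n), ((X 0 : R3) + X 1) ^ (2 * n)}) :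
    ∀ m : Fin 3 →₀ ℕ, d ≤ 2 * m 2 → coeff m G = 0 := by
  set Kn := 4 * n - 3 - d with hKn
  have hKd : Kn + d = 4 * n - 3 := by omega
  set q : R3 := sig G with hq
  have hq_hom : q.IsHomogeneous d := by
    have hg : ∀ i, ((![X 0, X 1 - X 0, X 2] : Fin 3 → R3) i).IsHomogeneous 1 := by
      intro i
      fin_cases i
      · exact isHomogeneous_X ℝ 0
      · exact (isHomogeneous_X ℝ 1).sub (isHomogeneous_X ℝ 0)
      · exact isHomogeneous_X ℝ 2
    have h := hG.aeval (![X 0, X 1 - X 0, X 2]) hg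
    rw [one_mul] at h
    exact h
  set H1 : R3 := ((X 1 : R3) - X 0) ^ Kn * (X 0 * (X 2 * q)) with hH1def
  have hH1 : sig ((X 1 : R3) ^ Kn * (X 0 * (X 2 * G))) = H1 := by
    rw [map_mul, map_pow, map_mul, map_mul, sig_X1, sig_X0, sig_X2, hH1def, hq]
  have hH1_hom : H1.IsHomogeneous (4 * n - 1) := by
    have h := (((isHomogeneous_X ℝ 1).sub (isHomogeneous_X ℝ 0)).pow Kn).mul
      ((isHomogeneous_X ℝ 0).mul ((isHomogeneous_X ℝ 2).mul hq_hom))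
    have h4 : 1 * Kn + (1 + (1 + d)) = 4 * n - 1 := by omega
    rw [h4] at h
    exact h
  have hmemσ : H1 ∈ Ideal.span {(X 0 : R3) ^ (2 * n), (X 1 : R3) ^ (2 * n)} := by
    have hmap := Ideal.mem_map_of_mem (sig : R3 →ₐ[ℝ] R3) hmem
    rw [Ideal.map_span, Set.image_insert_eq, Set.image_singleton] at hmap
    rw [map_pow, map_pow, map_add, sig_X0, sig_X1] at hmap
    rw [hH1] at hmap
    have he : (X 0 + (X 1 - X 0) : R3) = X 1 := by ring
    rw [he] at hmap
    exact hmap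
  have hvanish : ∀ mm : Fin 3 →₀ ℕ, mm 0 < 2 * n → mm 1 < 2 * n → coeff mm H1 = 0 :=
    fun mm h0 h1 => coeff_span_monomials (2 * n) H1 hmemσ mm h0 h1
  have hTh : Th H1 = Polynomial.C ((1 - Polynomial.X) ^ Kn) *
      (Polynomial.C Polynomial.X * (Polynomial.X * Th q)) := by
    rw [hH1def, map_mul, map_pow, map_sub, map_mul, map_mul]
    rw [show Th (X 1) = 1 from by simp [Th], show Th (X 0) = Polynomial.C Polynomial.X from by
      simp [Th], show Th (X 2) = Polynomial.X from by simp [Th]]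
    rw [show (1 - Polynomial.C Polynomial.X : Polynomial (Polynomial ℝ)) =
      Polynomial.C (1 - Polynomial.X) from by rw [map_sub, Polynomial.C_1], ← Polynomial.C_pow]
  have claimq : ∀ mm : Fin 3 →₀ ℕ, d ≤ 2 * mm 2 → coeff mm q = 0 := by
    intro mm hmm
    by_cases hdeg : mm 0 + mm 1 + mm 2 = d
    swap
    · exact hq_hom.coeff_eq_zero (by rw [degree3]; exact hdeg)
    · set k₀ := mm 2 with hk₀
      have hk₀d : k₀ ≤ d := by omega
      set p : Polynomial ℝ := (Th q).coeff k₀ with hp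
      have hpcoeff : ∀ α, p.coeff α =
          if α + k₀ ≤ d then coeff (T3 α (d - α - k₀) k₀) q else 0 :=
        fun α => coeffTh q d hq_hom k₀ α
      have hpdeg : p.natDegree ≤ d - k₀ := by
        rw [Polynomial.natDegree_le_iff_coeff_eq_zero]
        intro N hN
        rw [hpcoeff N, if_neg (by omega)]
      have hrel : ((Th H1).coeff (k₀ + 1)) =
          (1 - Polynomial.X) ^ Kn * (Polynomial.X * p) := by
        rw [hTh, Polynomial.coeff_C_mul, Polynomial.coeff_C_mul, Polynomial.coeff_X_mul, hp]
      have hwin : ∀ γ, 2 * n - 1 - k₀ ≤ γ → γ ≤ 2 * n - 1 →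
          ((1 - Polynomial.X) ^ Kn * (Polynomial.X * p)).coeff γ = 0 := by
        intro γ hγ1 hγ2
        rw [← hrel, coeffTh H1 (4 * n - 1) hH1_hom (k₀ + 1) γ, if_pos (by omega)]
        apply hvanish
        · rw [T3_apply_0]; omega
        · rw [T3_apply_1]; omega
      have hp0 : (Polynomial.X * p).coeff 0 = 0 := by simp
      have hXpdeg : (Polynomial.X * p).natDegree ≤ (d - k₀) + 1 := by
        refine le_trans (Polynomial.natDegree_mul_le) ?_
        rw [Polynomial.natDegree_X]
        omega
      have hXp := window_lemma (Polynomial.X * p) Kn ((d - k₀) + 1) (2 * n - 1 - k₀)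
        (2 * n - 1) hp0 hXpdeg hwin (by omega) (by omega) (by omega)
      have hpz : p = 0 := by
        rcases mul_eq_zero.mp hXp with h | h
        · exact absurd h Polynomial.X_ne_zero
        · exact h
      have hTm : T3 (mm 0) (d - mm 0 - k₀) k₀ = mm := by
        ext i
        fin_cases i <;> simp <;> omega
      have hfin : p.coeff (mm 0) = coeff mm q := by
        rw [hpcoeff (mm 0), if_pos (by omega), hTm]
      rw [← hfin, hpz, Polynomial.coeff_zero]
  intro m hm
  have hGeq : G = sig' q := (sig_inv G).symm
  rw [hGeq, q.as_sum, map_sum, coeff_sum]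
  apply Finset.sum_eq_zero
  intro μ hμ
  have hμ2 : 2 * μ 2 < d := by
    by_contra hcon
    push_neg at hcon
    exact (mem_support_iff.mp hμ) (claimq μ hcon)
  have hterm : sig' (monomial μ (coeff μ q)) =
      (C (coeff μ q) * ((X 0 : R3) ^ (μ 0) * ((X 1 + X 0 : R3) ^ (μ 1)))) *
        (X 2 : R3) ^ (μ 2) := by
    rw [sig', aeval_monomial, Finsupp.prod_fintype _ _ (fun i => pow_zero _),
      Fin.prod_univ_three]
    simp only [Matrix.cons_val_zero, Matrix.cons_val_one, Matrix.head_cons,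
      Matrix.cons_val_two, Matrix.tail_cons]
    rw [algebraMap_eq]
    ring
  rw [hterm]
  by_contra hne
  have hm2 := coeff_ZFree_mul_X2pow
    ((ZFree_C _).mul ((ZFree_X0.pow _).mul ((ZFree_X1.add ZFree_X0).pow _))) (μ 2) m hne
  omega


lemma cond2 (n d : ℕ) (hn : 2 ≤ n) (hd : d ≤ 2 * n - 3) (G : R3) (hG : G.IsHomogeneous d)
    (hmem2 : (X 1 : R3) ^ (4 * n - 3 - d) * (X 0 * (X 2 * G)) ∈
      Ideal.span {(X 2 : R3) ^ (2 * n), ((X 2 : R3) + X 1) ^ (2 * n)}) :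
    ∀ m : Fin 3 →₀ ℕ, d ≤ 2 * m 0 → coeff m G = 0 := by
  set ω := (Equiv.swap (0 : Fin 3) 2) with hω
  have hω0 : ω 0 = 2 := Equiv.swap_apply_left 0 2
  have hω1 : ω 1 = 1 := Equiv.swap_apply_of_ne_of_ne (by decide) (by decide)
  have hω2 : ω 2 = 0 := Equiv.swap_apply_right 0 2
  set Gω : R3 := rename (⇑ω) G with hGωdef
  have hGω : Gω.IsHomogeneous d := hG.rename_isHomogeneous
  have hmemω : (X 1 : R3) ^ (4 * n - 3 - d) * (X 0 * (X 2 * Gω)) ∈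
      Ideal.span {(X 0 : R3) ^ (2 * n), ((X 0 : R3) + X 1) ^ (2 * n)} := by
    have hmap := Ideal.mem_map_of_mem (rename (⇑ω) : R3 →ₐ[ℝ] R3) hmem2
    rw [Ideal.map_span, Set.image_insert_eq, Set.image_singleton] at hmap
    have e1 : rename (⇑ω) ((X 2 : R3) ^ (2 * n)) = (X 0 : R3) ^ (2 * n) := by
      rw [map_pow, rename_X, hω2]
    have e2 : rename (⇑ω) (((X 2 : R3) + X 1) ^ (2 * n)) = ((X 0 : R3) + X 1) ^ (2 * n) := by
      rw [map_pow, map_add, rename_X, rename_X, hω2, hω1]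
    have e3 : rename (⇑ω) ((X 1 : R3) ^ (4 * n - 3 - d) * (X 0 * (X 2 * G))) =
        (X 1 : R3) ^ (4 * n - 3 - d) * (X 0 * (X 2 * Gω)) := by
      rw [map_mul, map_pow, map_mul, map_mul, rename_X, rename_X, rename_X, hω0, hω1, hω2]
      ring
    rw [e1, e2, e3] at hmap
    exact hmap
  have hzb := cond1 n d hn hd Gω hGω hmemω
  intro m hm
  have hmd : (Finsupp.mapDomain (⇑ω) m) 2 = m 0 := by
    have h := Finsupp.mapDomain_apply (Equiv.injective ω) m 0
    rw [hω0] at h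
    exact h
  have hco : coeff m G = coeff (Finsupp.mapDomain (⇑ω) m) Gω :=
    (coeff_rename_mapDomain (⇑ω) (Equiv.injective ω) G m).symm
  rw [hco]
  exact hzb _ (by rw [hmd]; exact hm)

lemma main_aux (n : ℕ) (hn : 2 ≤ n) : ∀ d : ℕ, d ≤ 2 * n - 3 → ∀ G : R3,
    G.IsHomogeneous d →
    ((X 1 : R3) ^ (4 * n - 3 - d) * (X 0 * (X 2 * G)) ∈
      Ideal.span {(X 0 : R3) ^ (2 * n), ((X 0 : R3) + X 1) ^ (2 * n)}) →
    ((X 1 : R3) ^ (4 * n - 3 - d) * (X 0 * (X 2 * G)) ∈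
      Ideal.span {(X 2 : R3) ^ (2 * n), ((X 2 : R3) + X 1) ^ (2 * n)}) →
    G = 0 := by
  intro d
  induction d using Nat.strong_induction_on with
  | _ d ih =>
    intro hd G hG h1 h2
    have hz := cond1 n d hn hd G hG h1
    have hx := cond2 n d hn hd G hG h2
    by_cases hd0 : d = 0
    · rw [eq_zero_iff]
      intro m
      exact hz m (by omega)
    · have hy : ∀ m ∈ G.support, 1 ≤ m 1 := by
        intro m hm
        by_contra hy1
        push_neg at hy1
        have hdm := hom_support_degree hG (mem_support_iff.mp hm)
        have h2m : ¬ d ≤ 2 * m 2 := fun h => (mem_support_iff.mp hm) (hz m h)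
        have h0m : ¬ d ≤ 2 * m 0 := fun h => (mem_support_iff.mp hm) (hx m h)
        omega
      set G' : R3 := ∑ m ∈ G.support, monomial (m - Finsupp.single 1 1) (coeff m G) with hG'
      have hXG' : (X 1 : R3) * G' = G := by
        rw [hG', Finset.mul_sum]
        conv_rhs => rw [G.as_sum]
        apply Finset.sum_congr rfl
        intro m hm
        rw [show (X 1 : R3) = monomial (Finsupp.single 1 1) 1 from by
          rw [← pow_one (X 1 : R3), X_pow_eq_monomial]]
        rw [monomial_mul, one_mul]
        have hym := hy m hm
        have hidx : Finsupp.single (1 : Fin 3) 1 + (m - Finsupp.single 1 1) = m := by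
          ext i
          rw [Finsupp.add_apply, Finsupp.tsub_apply]
          rcases eq_or_ne i 1 with rfl | hne
          · rw [Finsupp.single_eq_same]
            omega
          · rw [Finsupp.single_eq_of_ne' (fun h => hne h.symm)]
            omega
        rw [hidx]
      have hG'hom : G'.IsHomogeneous (d - 1) := by
        rw [hG']
        apply IsHomogeneous.sum
        intro m hm
        apply isHomogeneous_monomial
        have hdm := hom_support_degree hG (mem_support_iff.mp hm)
        have hym := hy m hm
        rw [degree3, Finsupp.tsub_apply, Finsupp.tsub_apply, Finsupp.tsub_apply]
        simp only [Finsupp.single_apply]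
        simp only [show ((1 : Fin 3) = 0) = False from by simp, show ((1 : Fin 3) = 1) = True from by simp,
          show ((1 : Fin 3) = 2) = False from by simp, if_true, if_false]
        omega
      have hfactor : (X 1 : R3) ^ (4 * n - 3 - (d - 1)) * (X 0 * (X 2 * G')) =
          (X 1 : R3) ^ (4 * n - 3 - d) * (X 0 * (X 2 * G)) := by
        rw [← hXG']
        rw [show 4 * n - 3 - (d - 1) = (4 * n - 3 - d) + 1 from by omega, pow_succ]
        ring
      have hG'0 := ih (d - 1) (by omega) (by omega) G' hG'hom
        (by rw [hfactor]; exact h1) (by rw [hfactor]; exact h2)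
      rw [← hXG', hG'0, mul_zero]


/-- Key claim in the proof of Theorem 2.6: for `n ≥ 2`, if `G` is homogeneous of
degree `2n−3` and `x·z·G ∈ K(2n−1)`, then `G = 0`; hence no nonzero element of
`K(2n−1)` is divisible by `x·z`. -/
theorem xz_divisible_vanishing (n : ℕ) (hn : 2 ≤ n) (G : R3)
    (hG : G.IsHomogeneous (2 * n - 3))
    (hmem : (X 0 : R3) * (X 2 : R3) * G ∈ K (2 * n - 1)) :
    G = 0 := by
  unfold K at hmem
  rw [Submodule.mem_inf] at hmem
  obtain ⟨-, hrest⟩ := hmem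
  rw [Submodule.mem_comap, LinearMap.mulLeft_apply, Submodule.restrictScalars_mem,
    Submodule.mem_inf] at hrest
  obtain ⟨hJ1, hJ2⟩ := hrest
  unfold J1 at hJ1
  unfold J2 at hJ2
  have hexp : 2 * n - 1 + 1 = 2 * n := by omega
  rw [hexp] at hJ1 hJ2
  rw [show (X 0 : R3) * (X 2 : R3) * G = X 0 * (X 2 * G) from mul_assoc _ _ _] at hJ1 hJ2
  apply main_aux n hn (2 * n - 3) le_rfl G hG
  · rw [show 4 * n - 3 - (2 * n - 3) = 2 * n from by omega]
    exact hJ1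
  · rw [show 4 * n - 3 - (2 * n - 3) = 2 * n from by omega]
    exact hJ2

end
end

section
/- (Lemma 3.2) Let n ≥ 1. For each integer k with n ≤ k ≤ 2n−1, let M(k) be the n×(k+1) real matrix whose (i,j) entry (0 ≤ i ≤ n−1, 0 ≤ j ≤ k) is the binomial coefficient C(2n, n+i−j), with the convention that C(2n, ℓ) = 0 when ℓ < 0. Then each M(k) has rank n, and consequently Σ_{k=n}^{2n−1} dim ker(M(k)) = Σ_{k=n}^{2n−1} (k+1−n) = n(n+1)/2. -/
noncomputable section

/-- The `n × (k+1)` real matrix `M(k)` with `(i,j)` entry the binomial coefficient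
`C(2n, n+i−j)`, where `C(2n, ℓ) = 0` for `ℓ < 0` (and for `ℓ > 2n`). -/
def Mmat (n k : ℕ) : Matrix (Fin n) (Fin (k + 1)) ℝ :=
  Matrix.of fun i j =>
    if (j : ℕ) ≤ n + (i : ℕ) then ((2 * n).choose (n + (i : ℕ) - (j : ℕ)) : ℝ) else 0

open Polynomial in
private lemma aux_pow_dvd_derivative {R : Type*} [CommRing R] {p q : R[X]} {m : ℕ}
    (h : p ^ (m + 1) ∣ q) : p ^ m ∣ derivative q := by
  obtain ⟨r, rfl⟩ := h
  rw [derivative_mul, derivative_pow]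
  refine dvd_add ⟨C ((m : R) + 1) * derivative p * r, ?_⟩ ⟨p * derivative r, by ring⟩
  simp only [Nat.add_sub_cancel, Nat.cast_add, Nat.cast_one]
  ring

open Polynomial in
private lemma aux_pow_dvd_iterate_derivative {R : Type*} [CommRing R] {p : R[X]} {m k : ℕ} :
    ∀ {q : R[X]}, p ^ (m + k) ∣ q → p ^ m ∣ derivative^[k] q := by
  induction k with
  | zero => intro q h; simpa using h
  | succ k ih =>
    intro q h
    rw [Function.iterate_succ_apply]
    exact ih (aux_pow_dvd_derivative (by rwa [show m + (k + 1) = m + k + 1 by omega] at h))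

private lemma aux_gauss (n : ℕ) : ∑ m ∈ Finset.range n, (m + 1) = n * (n + 1) / 2 := by
  have h1 : ∑ i ∈ Finset.range (n + 1), i = (∑ m ∈ Finset.range n, (m + 1)) + 0 :=
    Finset.sum_range_succ' id n
  have h2 := Finset.sum_range_id_mul_two (n + 1)
  rw [Nat.add_sub_cancel] at h2
  have h3 : n * (n + 1) = (n + 1) * n := Nat.mul_comm _ _
  omega

open Polynomial in
private lemma aux_key (n : ℕ) (hn : 1 ≤ n) (c : Fin n → ℝ)
    (hc : ∀ j : ℕ, j ≤ n →
      ∑ i : Fin n, c i * (if j ≤ n + (i : ℕ) then ((2 * n).choose (n + (i : ℕ) - j) : ℝ) else 0)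
        = 0) :
    ∀ i, c i = 0 := by
  set g : ℝ[X] := ∑ i : Fin n, C (c i) * X ^ (n - 1 - (i : ℕ)) with hg
  set f : ℝ[X] := (X + 1) ^ (2 * n) * g with hf
  have hX1 : (X + 1 : ℝ[X]) ≠ 0 := fun h => by simpa using congrArg (eval 0) h
  have hcoeff : ∀ d : ℕ, f.coeff d =
      ∑ i : Fin n, c i *
        (if n - 1 - (i : ℕ) ≤ d then ((2 * n).choose (d - (n - 1 - (i : ℕ))) : ℝ) else 0) := by
    intro d
    rw [hf, hg, Finset.mul_sum, finset_sum_coeff]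
    refine Finset.sum_congr rfl fun i _ => ?_
    rw [show (X + 1 : ℝ[X]) ^ (2 * n) * (C (c i) * X ^ (n - 1 - (i : ℕ)))
        = C (c i) * ((X + 1) ^ (2 * n) * X ^ (n - 1 - (i : ℕ))) by ring,
      coeff_C_mul, coeff_mul_X_pow']
    split
    · rw [coeff_X_add_one_pow]
    · rw [mul_zero]
  have hf0 : ∀ d : ℕ, n - 1 ≤ d → d ≤ 2 * n - 1 → f.coeff d = 0 := by
    intro d h1 h2
    have hcd := hc (2 * n - 1 - d) (by omega)
    rw [hcoeff d]
    refine Eq.trans (Finset.sum_congr rfl fun i _ => ?_) hcd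
    have hi : (i : ℕ) < n := i.isLt
    by_cases hcond : n - 1 - (i : ℕ) ≤ d
    · rw [if_pos hcond, if_pos (by omega)]
      have : d - (n - 1 - (i : ℕ)) = n + (i : ℕ) - (2 * n - 1 - d) := by omega
      rw [this]
    · rw [if_neg hcond, if_neg (by omega)]
  have hgdeg : g.natDegree ≤ n - 1 := by
    rw [hg]
    exact natDegree_sum_le_of_forall_le _ _ fun i _ =>
      le_trans (natDegree_C_mul_X_pow_le _ _) (by omega)
  have hg0 : g = 0 := by
    by_contra hgne
    have hfne : f ≠ 0 := mul_ne_zero (pow_ne_zero _ hX1) hgne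
    have hfdeg : f.natDegree = 2 * n + g.natDegree := by
      rw [hf, natDegree_mul (pow_ne_zero _ hX1) hgne, natDegree_pow, ← C_1,
        natDegree_X_add_C, mul_one]
    set h : ℝ[X] := derivative^[n - 1] f with hh
    have hXdvd : X ^ (n + 1) ∣ h := by
      rw [X_pow_dvd_iff]
      intro d hd
      rw [hh, coeff_iterate_derivative, hf0 _ (by omega) (by omega), smul_zero]
    have hX1dvd : (X + 1 : ℝ[X]) ^ (n + 1) ∣ h := by
      refine aux_pow_dvd_iterate_derivative ?_
      rw [show n + 1 + (n - 1) = 2 * n by omega, hf]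
      exact Dvd.intro g rfl
    have hcop : IsCoprime ((X : ℝ[X]) ^ (n + 1)) ((X + 1) ^ (n + 1)) :=
      IsCoprime.pow ⟨-1, 1, by ring⟩
    have hmul : (X : ℝ[X]) ^ (n + 1) * (X + 1) ^ (n + 1) ∣ h := hcop.mul_dvd hXdvd hX1dvd
    have hh0 : h = 0 := by
      by_contra hne
      have hd1 := natDegree_le_of_dvd hmul hne
      have hd2 : h.natDegree ≤ f.natDegree - (n - 1) := natDegree_iterate_derivative _ _
      have hd3 : ((X : ℝ[X]) ^ (n + 1) * (X + 1) ^ (n + 1)).natDegree = 2 * n + 2 := by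
        rw [natDegree_mul (pow_ne_zero _ X_ne_zero) (pow_ne_zero _ hX1), natDegree_pow,
          natDegree_pow, natDegree_X, ← C_1, natDegree_X_add_C]
        ring
      omega
    have hld : f.coeff f.natDegree ≠ 0 := by
      rw [coeff_natDegree]
      exact leadingCoeff_ne_zero.mpr hfne
    apply hld
    have hcz := congrArg (fun p : ℝ[X] => p.coeff (f.natDegree - (n - 1))) hh0
    simp only [coeff_zero] at hcz
    rw [hh, coeff_iterate_derivative,
      show f.natDegree - (n - 1) + (n - 1) = f.natDegree by omega] at hcz
    have hpos : f.natDegree.descFactorial (n - 1) ≠ 0 := by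
      rw [Ne, Nat.descFactorial_eq_zero_iff_lt]
      omega
    rw [nsmul_eq_mul] at hcz
    rcases mul_eq_zero.mp hcz with h' | h'
    · exact absurd (Nat.cast_eq_zero.mp h') hpos
    · exact h'
  intro i
  have hci : g.coeff (n - 1 - (i : ℕ)) = c i := by
    rw [hg, finset_sum_coeff, Finset.sum_eq_single i]
    · rw [coeff_C_mul, coeff_X_pow, if_pos rfl, mul_one]
    · intro b _ hb
      have hb' : (b : ℕ) ≠ (i : ℕ) := fun h => hb (Fin.ext h)
      have hbl : (b : ℕ) < n := b.isLt
      have hil : (i : ℕ) < n := i.isLt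
      rw [coeff_C_mul, coeff_X_pow, if_neg (by omega), mul_zero]
    · intro habs; exact absurd (Finset.mem_univ i) habs
  rw [hg0, coeff_zero] at hci
  exact hci.symm

private lemma aux_rank (n k : ℕ) (hn : 1 ≤ n) (hk : n ≤ k) : (Mmat n k).rank = n := by
  refine le_antisymm (by simpa using (Mmat n k).rank_le_card_height) ?_
  rw [← Matrix.rank_transpose]
  have hinj : Function.Injective ⇑(Mmat n k).transpose.mulVecLin := by
    rw [← LinearMap.ker_eq_bot, LinearMap.ker_eq_bot']
    intro c hc0
    have hc : ∀ j : ℕ, j ≤ n →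
        ∑ i : Fin n, c i *
          (if j ≤ n + (i : ℕ) then ((2 * n).choose (n + (i : ℕ) - j) : ℝ) else 0) = 0 := by
      intro j hj
      have hjlt : j < k + 1 := by omega
      have hrow := congrFun hc0 ⟨j, hjlt⟩
      simp only [Matrix.mulVecLin_apply, Matrix.mulVec, dotProduct,
        Matrix.transpose_apply, Mmat, Matrix.of_apply, Pi.zero_apply] at hrow
      exact Eq.trans (Finset.sum_congr rfl fun i _ => mul_comm _ _) hrow
    funext i
    exact aux_key n hn c hc i
  have : (Mmat n k).transpose.rank = Module.finrank ℝ (Fin n → ℝ) := by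
    unfold Matrix.rank
    rw [LinearMap.finrank_range_of_inj hinj]
  rw [this, Module.finrank_fin_fun]

/-- Lemma 3.2: for `n ≤ k ≤ 2n−1` each `M(k)` has rank `n`, and consequently
`Σ_{k=n}^{2n−1} dim ker(M(k)) = Σ_{k=n}^{2n−1} (k+1−n) = n(n+1)/2`. -/
theorem lemma_3_2 (n : ℕ) (hn : 1 ≤ n) :
    (∀ k, n ≤ k → k ≤ 2 * n - 1 → (Mmat n k).rank = n) ∧
    ∑ k ∈ Finset.Icc n (2 * n - 1),
        Module.finrank ℝ (LinearMap.ker (Mmat n k).mulVecLin) = n * (n + 1) / 2 := by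
  constructor
  · intro k hk _
    exact aux_rank n k hn hk
  · have hker : ∀ k ∈ Finset.Icc n (2 * n - 1),
        Module.finrank ℝ (LinearMap.ker (Mmat n k).mulVecLin) = k + 1 - n := by
      intro k hk
      obtain ⟨h1, _⟩ := Finset.mem_Icc.mp hk
      have hrn := LinearMap.finrank_range_add_finrank_ker (Mmat n k).mulVecLin
      have hr : Module.finrank ℝ (LinearMap.range (Mmat n k).mulVecLin) = n := aux_rank n k hn h1
      rw [hr, Module.finrank_fin_fun] at hrn
      omega
    rw [Finset.sum_congr rfl hker]
    have hmap : Finset.Icc n (2 * n - 1)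
        = Finset.map ⟨fun m => m + n, fun a b h => by have h2 : a + n = b + n := h; omega⟩ (Finset.range n) := by
      ext x
      simp only [Finset.mem_Icc, Finset.mem_map, Finset.mem_range, Function.Embedding.coeFn_mk]
      constructor
      · intro h
        refine ⟨x - n, by omega, ?_⟩
        show x - n + n = x
        omega
      · rintro ⟨a, ha, h⟩
        have hax : a + n = x := h
        omega
    rw [hmap, Finset.sum_map]
    show ∑ m ∈ Finset.range n, (m + n + 1 - n) = n * (n + 1) / 2
    rw [show (∑ m ∈ Finset.range n, (m + n + 1 - n)) = ∑ m ∈ Finset.range n, (m + 1) from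
      Finset.sum_congr rfl fun m _ => by omega]
    exact aux_gauss n

end
end

section
/- (Invertibility of the Toeplitz binomial block, odd case) Let n ≥ 1 and let 𝒩 be the n×n real matrix with entries 𝒩_{i,j} = C(2n, n+i−j) for 0 ≤ i, j ≤ n−1. Then det 𝒩 > 0; in particular 𝒩 is invertible. (This determinant equals the dimension of the irreducible SL_{2n}-representation given by the Schur module for the partition (n,…,n).) -/
noncomputable section

open Finset Matrix

/-- Auxiliary rectangular matrix with `Bmat n = (C(n, k-i))` (zero for `k < i`). -/
def Bmat (n : ℕ) : Matrix (Fin n) (Fin (2 * n)) ℝ :=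
  Matrix.of fun i k => if (i : ℕ) ≤ (k : ℕ) then (n.choose ((k : ℕ) - (i : ℕ)) : ℝ) else 0

/-- Vandermonde-type identity. -/
lemma vand_aux (n d : ℕ) (hn : 1 ≤ n) :
    ∑ t ∈ Finset.range (2 * n), n.choose t * n.choose (t + d) = (2 * n).choose (n + d) := by
  have h2 : 2 * n = n + n := by ring
  rw [h2, Nat.add_choose_eq, Finset.Nat.sum_antidiagonal_eq_sum_range_succ_mk]
  have hL : ∑ t ∈ Finset.range (n + n), n.choose t * n.choose (t + d)
      = ∑ t ∈ Finset.range (n + 1), n.choose t * n.choose (t + d) := by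
    symm
    apply Finset.sum_subset
    · intro t ht; simp only [Finset.mem_range] at *; omega
    · intro t ht hnt
      simp only [Finset.mem_range] at ht hnt
      rw [Nat.choose_eq_zero_of_lt (by omega), zero_mul]
  have hR : ∑ a ∈ Finset.range (n + d + 1), n.choose a * n.choose (n + d - a)
      = ∑ a ∈ Finset.range (n + 1), n.choose a * n.choose (n + d - a) := by
    symm
    apply Finset.sum_subset
    · intro a ha; simp only [Finset.mem_range] at *; omega
    · intro a ha hna
      simp only [Finset.mem_range] at ha hna
      rw [Nat.choose_eq_zero_of_lt (by omega), zero_mul]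
  rw [hL, hR, ← Finset.sum_range_reflect]
  apply Finset.sum_congr rfl
  intro t ht
  simp only [Finset.mem_range] at ht
  have ht' : t ≤ n := by omega
  have h1 : n + 1 - 1 - t = n - t := by omega
  have h3 : n - t + d = n + d - t := by omega
  rw [h1, Nat.choose_symm ht', h3]

/-- The key entry identity, in the case `j ≤ i`. -/
lemma key_sum (n : ℕ) (hn : 1 ≤ n) (i j : ℕ) (hij : j ≤ i) (hi : i < n) :
    ∑ k ∈ Finset.range (2 * n),
      (if i ≤ k then n.choose (k - i) else 0) * (if j ≤ k then n.choose (k - j) else 0)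
      = (2 * n).choose (n + i - j) := by
  have hi2 : i ≤ 2 * n := by omega
  rw [Finset.range_eq_Ico, ← Finset.sum_Ico_consecutive _ (Nat.zero_le i) hi2]
  have hzero : ∑ k ∈ Finset.Ico 0 i,
      (if i ≤ k then n.choose (k - i) else 0) * (if j ≤ k then n.choose (k - j) else 0) = 0 := by
    apply Finset.sum_eq_zero
    intro k hk
    simp only [Finset.mem_Ico] at hk
    rw [if_neg (by omega), zero_mul]
  rw [hzero, zero_add, Finset.sum_Ico_eq_sum_range]
  have hstep : ∀ t ∈ Finset.range (2 * n - i),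
      (if i ≤ i + t then n.choose (i + t - i) else 0) *
        (if j ≤ i + t then n.choose (i + t - j) else 0)
      = n.choose t * n.choose (t + (i - j)) := by
    intro t _
    rw [if_pos (by omega), if_pos (by omega)]
    congr 2 <;> omega
  rw [Finset.sum_congr rfl hstep]
  have hext : ∑ t ∈ Finset.range (2 * n - i), n.choose t * n.choose (t + (i - j))
      = ∑ t ∈ Finset.range (2 * n), n.choose t * n.choose (t + (i - j)) := by
    apply Finset.sum_subset
    · intro t ht; simp only [Finset.mem_range] at *; omega
    · intro t ht hnt
      simp only [Finset.mem_range] at ht hnt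
      rw [Nat.choose_eq_zero_of_lt (by omega), zero_mul]
  rw [hext, vand_aux n (i - j) hn]
  congr 1
  omega

/-- Real version of the key sum. -/
lemma key_sum_real (n : ℕ) (hn : 1 ≤ n) (i j : ℕ) (hij : j ≤ i) (hi : i < n) :
    ∑ k ∈ Finset.range (2 * n),
      (if i ≤ k then (n.choose (k - i) : ℝ) else 0) * (if j ≤ k then (n.choose (k - j) : ℝ) else 0)
      = ((2 * n).choose (n + i - j) : ℝ) := by
  rw [← key_sum n hn i j hij hi]
  push_cast [apply_ite (Nat.cast : ℕ → ℝ)]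
  rfl

/-- The `n × n` real matrix `𝒩` with entries `𝒩_{i,j} = C(2n, n+i−j)` for
`0 ≤ i, j ≤ n−1` (here `n + i − j ≥ 1 > 0` always, so the `ℓ < 0` convention
is not needed). -/
def Nmat (n : ℕ) : Matrix (Fin n) (Fin n) ℝ :=
  Matrix.of fun i j => ((2 * n).choose (n + (i : ℕ) - (j : ℕ)) : ℝ)

/-- Factorization `Nmat n = Bmat n * (Bmat n)ᵀ`. -/
lemma Nmat_eq (n : ℕ) (hn : 1 ≤ n) : Nmat n = Bmat n * (Bmat n)ᵀ := by
  ext i j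
  rw [Matrix.mul_apply]
  simp only [Matrix.transpose_apply, Bmat, Nmat, Matrix.of_apply]
  rw [Fin.sum_univ_eq_sum_range
    (fun k => (if (i:ℕ) ≤ k then (n.choose (k - i) : ℝ) else 0) *
      (if (j:ℕ) ≤ k then (n.choose (k - j) : ℝ) else 0)) (2*n)]
  rcases le_total (j : ℕ) (i : ℕ) with h | h
  · rw [key_sum_real n hn i j h i.isLt]
  · have hsym : (2 * n).choose (n + (i:ℕ) - (j:ℕ)) = (2 * n).choose (n + (j:ℕ) - (i:ℕ)) := by
      have h1 : n + (i:ℕ) - (j:ℕ) = 2 * n - (n + (j:ℕ) - (i:ℕ)) := by omega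
      rw [h1, Nat.choose_symm (by omega)]
    rw [hsym, ← key_sum_real n hn j i h j.isLt]
    apply Finset.sum_congr rfl
    intro k _
    ring

/-- Full row rank of `Bmat`: `vecMul` injectivity at `0`. -/
lemma vecMul_Bmat_eq_zero (n : ℕ) (x : Fin n → ℝ) (h : x ᵥ* Bmat n = 0) : x = 0 := by
  have H : ∀ m : ℕ, ∀ hm : m < n, x ⟨m, hm⟩ = 0 := by
    intro m
    induction m using Nat.strong_induction_on with
    | _ m IH =>
      intro hm
      have hcol := congrFun h ⟨m, by omega⟩
      simp only [Matrix.vecMul, dotProduct, Bmat, Matrix.of_apply, Pi.zero_apply] at hcol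
      rw [Finset.sum_eq_single (⟨m, hm⟩ : Fin n)] at hcol
      · simpa using hcol
      · intro b _ hb
        rcases le_or_gt (b : ℕ) m with hbm | hbm
        · have hblt : (b : ℕ) < m := by
            rcases lt_or_eq_of_le hbm with h' | h'
            · exact h'
            · exact absurd (Fin.ext h' : b = ⟨m, hm⟩) hb
          have := IH b hblt b.isLt
          rw [Fin.eta] at this
          simp [this]
        · rw [if_neg (by simpa using not_le.mpr hbm), mul_zero]
      · intro hmem
        exact absurd (Finset.mem_univ _) hmem
  funext i
  have := H i.1 i.2
  rwa [Fin.eta] at this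

lemma posDef_Nmat (n : ℕ) (hn : 1 ≤ n) : (Nmat n).PosDef := by
  rw [Nmat_eq n hn]
  rw [Matrix.posDef_iff_dotProduct_mulVec]
  constructor
  · have := Matrix.isHermitian_mul_conjTranspose_self (Bmat n)
    rwa [Matrix.conjTranspose_eq_transpose_of_trivial] at this
  · intro x hx
    have hy : x ᵥ* Bmat n ≠ 0 := fun hy => hx (vecMul_Bmat_eq_zero n x hy)
    have hrw : star x ⬝ᵥ (Bmat n * (Bmat n)ᵀ) *ᵥ x = (x ᵥ* Bmat n) ⬝ᵥ (x ᵥ* Bmat n) := by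
      rw [star_trivial, ← Matrix.mulVec_mulVec, Matrix.dotProduct_mulVec,
        Matrix.mulVec_transpose]
    rw [hrw]
    obtain ⟨k, hk⟩ := Function.ne_iff.mp hy
    apply Finset.sum_pos'
    · intro k _
      exact mul_self_nonneg _
    · exact ⟨k, Finset.mem_univ k, mul_self_pos.mpr hk⟩

/-- Invertibility of the Toeplitz binomial block, odd case: `det 𝒩 > 0`
(this determinant is the dimension of the Schur module for the partition
`(n,…,n)` of the `2n`-dimensional representation, hence positive);
in particular `𝒩` is invertible. -/
theorem det_Nmat_pos (n : ℕ) (hn : 1 ≤ n) : 0 < (Nmat n).det :=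
  (posDef_Nmat n hn).det_pos

end
end

section
/- (Lemma 3.3) Let n ≥ 1. For each integer k with n ≤ k ≤ 2n, let M(k) be the n×(k+1) real matrix whose (i,j) entry (0 ≤ i ≤ n−1, 0 ≤ j ≤ k) is the binomial coefficient C(2n+1, n+1+i−j), with the convention that C(2n+1, ℓ) = 0 when ℓ < 0. Then each M(k) has rank n, and consequently Σ_{k=n}^{2n} dim ker(M(k)) = Σ_{k=n}^{2n} (k+1−n) = (n+1)(n+2)/2. -/
noncomputable section
open Polynomial

/-- The `n × (k+1)` real matrix `M(k)` with `(i,j)` entry the binomial coefficient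
`C(2n+1, n+1+i−j)`, where `C(2n+1, ℓ) = 0` for `ℓ < 0` (and for `ℓ > 2n+1`). -/
def Mmat' (n k : ℕ) : Matrix (Fin n) (Fin (k + 1)) ℝ :=
  Matrix.of fun i j =>
    if (j : ℕ) ≤ n + 1 + (i : ℕ) then
      ((2 * n + 1).choose (n + 1 + (i : ℕ) - (j : ℕ)) : ℝ)
    else 0

private lemma coeff_X_mul_deriv (p : ℝ[X]) (d : ℕ) :
    (X * derivative p).coeff d = (d : ℝ) * p.coeff d := by
  cases d with
  | zero => simp [Polynomial.mul_coeff_zero]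
  | succ m =>
    rw [Polynomial.coeff_X_mul, Polynomial.coeff_derivative]
    push_cast
    ring

private lemma dvd_op {r : ℕ} {p : ℝ[X]} (c : ℝ) (h : (X + 1) ^ (r + 1) ∣ p) :
    (X + 1) ^ r ∣ X * derivative p - C c * p := by
  obtain ⟨g, rfl⟩ := h
  refine ⟨X * (C ((r : ℝ) + 1) * g) + (X + 1) * (X * derivative g - C c * g), ?_⟩
  rw [derivative_mul, derivative_pow]
  simp only [derivative_add, derivative_X, derivative_one, add_zero, mul_one, Nat.cast_add,
    Nat.cast_one, Nat.add_sub_cancel, C_add, C_1]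
  ring

private lemma kill_lemma : ∀ (m : ℕ) (s a t : ℕ) (p : ℝ[X]),
    a ≤ s → (X + 1) ^ (m + s) ∣ p →
    (∀ d, p.coeff d ≠ 0 → d < a ∨ (t ≤ d ∧ d < t + m)) → p = 0 := by
  intro m
  induction m with
  | zero =>
    intro s a t p has hdvd hsupp
    by_contra hp
    have h1 : ((X + 1 : ℝ[X]) ^ s).degree = (s : WithBot ℕ) := by
      rw [show (X + 1 : ℝ[X]) = X + C 1 by simp, degree_pow, degree_X_add_C]
      simp
    have h2 : p.degree < ((X + 1 : ℝ[X]) ^ s).degree := by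
      rw [h1]
      refine lt_of_lt_of_le ?_ (by exact_mod_cast Nat.cast_le.mpr has : (a : WithBot ℕ) ≤ s)
      rw [Polynomial.degree_lt_iff_coeff_zero]
      intro d hd
      by_contra hcd
      rcases hsupp d hcd with h | h <;> omega
    exact hp (Polynomial.eq_zero_of_dvd_of_degree_lt (by simpa using hdvd) h2)
  | succ m ih =>
    intro s a t p has hdvd hsupp
    set P := X * derivative p - C ((t + m : ℕ) : ℝ) * p with hPdef
    have hdvd' : (X + 1) ^ (m + s) ∣ P := by
      apply dvd_op
      rwa [show m + s + 1 = m + 1 + s by ring]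
    have hcoeffP : ∀ d, P.coeff d = ((d : ℝ) - ((t + m : ℕ) : ℝ)) * p.coeff d := by
      intro d
      rw [hPdef, Polynomial.coeff_sub, coeff_X_mul_deriv, Polynomial.coeff_C_mul]
      ring
    have hP0 : P = 0 := by
      refine ih s a t P has hdvd' ?_
      intro d hd
      have hpd : p.coeff d ≠ 0 := by
        intro h0
        rw [hcoeffP, h0, mul_zero] at hd
        exact hd rfl
      rcases hsupp d hpd with h | h
      · exact Or.inl h
      · refine Or.inr ⟨h.1, ?_⟩
        rcases Nat.lt_succ_iff_lt_or_eq.mp (by omega : d < t + m + 1) with h' | h'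
        · exact h'
        · exfalso
          apply hd
          rw [hcoeffP, h']
          simp
    have hpc : ∀ d, d ≠ t + m → p.coeff d = 0 := by
      intro d hd
      have h0 : P.coeff d = 0 := by rw [hP0]; simp
      rw [hcoeffP] at h0
      have hne : ((d : ℝ) - ((t + m : ℕ) : ℝ)) ≠ 0 := by
        rw [sub_ne_zero]
        exact_mod_cast hd
      exact (mul_eq_zero.mp h0).resolve_left hne
    have hpeq : p = C (p.coeff (t + m)) * X ^ (t + m) := by
      ext d
      rw [Polynomial.coeff_C_mul, Polynomial.coeff_X_pow]
      by_cases h : d = t + m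
      · subst h; simp
      · simp [h, hpc d h]
    have hdvd1 : (X + 1 : ℝ[X]) ∣ p :=
      dvd_trans (dvd_pow_self _ (by omega : m + 1 + s ≠ 0)) hdvd
    have heval : p.eval (-1 : ℝ) = 0 := by
      obtain ⟨g, hg⟩ := hdvd1
      rw [hg]
      simp
    rw [hpeq] at heval
    simp only [eval_mul, eval_C, eval_pow, eval_X] at heval
    have hc0 : p.coeff (t + m) = 0 := by
      rcases mul_eq_zero.mp heval with h | h
      · exact h
      · exact absurd h (pow_ne_zero _ (by norm_num))
    rw [hpeq, hc0]
    simp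

private lemma rows_indep (n k : ℕ) (hnk : n ≤ k) (hk2 : k ≤ 2 * n)
    (c : Fin n → ℝ) (hc : ∀ j : Fin (k + 1), ∑ i, Mmat' n k i j * c i = 0) : c = 0 := by
  set q : ℝ[X] := ∑ i : Fin n, C (c i) * X ^ (n - 1 - (i : ℕ)) with hq
  set f : ℝ[X] := q * (X + 1) ^ (2 * n + 1) with hf
  have hcoeff : ∀ m : ℕ, f.coeff m = ∑ i : Fin n,
      c i * (if n - 1 - (i : ℕ) ≤ m then
        ((2 * n + 1).choose (m - (n - 1 - (i : ℕ))) : ℝ) else 0) := by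
    intro m
    rw [hf, hq, Finset.sum_mul, Polynomial.finset_sum_coeff]
    refine Finset.sum_congr rfl fun i _ => ?_
    rw [mul_right_comm, Polynomial.coeff_mul_X_pow']
    split_ifs with h
    · rw [Polynomial.coeff_C_mul, Polynomial.coeff_X_add_one_pow]
    · simp
  have hwin : ∀ d : ℕ, 2 * n - k ≤ d → d ≤ 2 * n → f.coeff d = 0 := by
    intro d h1 h2
    have hj := hc ⟨2 * n - d, by omega⟩
    have key : f.coeff d = ∑ i : Fin n, Mmat' n k i ⟨2 * n - d, by omega⟩ * c i := by
      rw [hcoeff]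
      refine Finset.sum_congr rfl fun i _ => ?_
      rw [mul_comm]
      congr 1
      have hi : (i : ℕ) < n := i.isLt
      simp only [Mmat', Matrix.of_apply]
      split_ifs with h3 h4 h4
      · have harg : d - (n - 1 - (i : ℕ)) = n + 1 + (i : ℕ) - (2 * n - d) := by omega
        rw [harg]
      · exfalso; omega
      · exfalso; omega
      · rfl
    rw [key, hj]
  have hhigh : ∀ d : ℕ, 3 * n + 1 ≤ d → f.coeff d = 0 := by
    intro d hd
    rw [hcoeff]
    refine Finset.sum_eq_zero fun i _ => ?_
    have hi : (i : ℕ) < n := i.isLt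
    rw [if_pos (by omega : n - 1 - (i : ℕ) ≤ d),
      Nat.choose_eq_zero_of_lt (by omega : 2 * n + 1 < d - (n - 1 - (i : ℕ)))]
    simp
  have hf0 : f = 0 := by
    refine kill_lemma n (n + 1) (2 * n - k) (2 * n + 1) f (by omega) ?_ ?_
    · rw [show n + (n + 1) = 2 * n + 1 by ring, hf]
      exact Dvd.intro_left q rfl
    · intro d hd
      by_cases h1 : d ≤ 2 * n
      · by_cases h2 : d < 2 * n - k
        · exact Or.inl h2
        · exact absurd (hwin d (by omega) h1) hd
      · by_cases h3 : d ≤ 3 * n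
        · exact Or.inr ⟨by omega, by omega⟩
        · exact absurd (hhigh d (by omega)) hd
  have hX1 : (X + 1 : ℝ[X]) ≠ 0 := by
    intro h
    simpa [Polynomial.coeff_one] using congrArg (fun p => Polynomial.coeff p 1) h
  have hq0 : q = 0 := by
    rcases mul_eq_zero.mp (hf.symm.trans hf0) with h | h
    · exact h
    · exact absurd h (pow_ne_zero _ hX1)
  funext i0
  have hco : q.coeff (n - 1 - (i0 : ℕ)) = c i0 := by
    rw [hq, Polynomial.finset_sum_coeff,
      Finset.sum_eq_single_of_mem i0 (Finset.mem_univ i0) ?_]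
    · rw [Polynomial.coeff_C_mul, Polynomial.coeff_X_pow, if_pos rfl, mul_one]
    · intro i _ hne
      rw [Polynomial.coeff_C_mul, Polynomial.coeff_X_pow, if_neg, mul_zero]
      intro heq
      have h1 : (i : ℕ) < n := i.isLt
      have h2 : (i0 : ℕ) < n := i0.isLt
      exact hne (Fin.ext (by omega))
  rw [hq0] at hco
  simpa using hco.symm

private lemma rank_M (n k : ℕ) (hnk : n ≤ k) (hk2 : k ≤ 2 * n) :
    (Mmat' n k).rank = n := by
  rw [← Matrix.rank_transpose]
  have hinj : Function.Injective ((Mmat' n k).transpose.mulVecLin) := by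
    rw [← LinearMap.ker_eq_bot, LinearMap.ker_eq_bot']
    intro c hc0
    refine rows_indep n k hnk hk2 c fun j => ?_
    have h := congrFun hc0 j
    simpa [Matrix.mulVecLin_apply, Matrix.mulVec, Matrix.vecMul, dotProduct, Matrix.transpose_apply, mul_comm] using h
  rw [Matrix.rank, LinearMap.finrank_range_of_inj hinj]
  simp

/-- Lemma 3.3: for `n ≤ k ≤ 2n` each `M(k)` has rank `n`, and consequently
`Σ_{k=n}^{2n} dim ker(M(k)) = Σ_{k=n}^{2n} (k+1−n) = (n+1)(n+2)/2`. -/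
theorem lemma_3_3 (n : ℕ) (hn : 1 ≤ n) :
    (∀ k, n ≤ k → k ≤ 2 * n → (Mmat' n k).rank = n) ∧
    ∑ k ∈ Finset.Icc n (2 * n),
        Module.finrank ℝ (LinearMap.ker (Mmat' n k).mulVecLin) = (n + 1) * (n + 2) / 2 := by
  constructor
  · exact fun k h1 h2 => rank_M n k h1 h2
  · have hker : ∀ k ∈ Finset.Icc n (2 * n),
        Module.finrank ℝ (LinearMap.ker (Mmat' n k).mulVecLin) = k + 1 - n := by
      intro k hk
      rw [Finset.mem_Icc] at hk
      have hrn := LinearMap.finrank_range_add_finrank_ker (Mmat' n k).mulVecLin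
      have hr : Module.finrank ℝ (LinearMap.range (Mmat' n k).mulVecLin) = n := by
        rw [← Matrix.rank]
        exact rank_M n k hk.1 hk.2
      rw [hr] at hrn
      have hdom : Module.finrank ℝ (Fin (k + 1) → ℝ) = k + 1 := by simp
      rw [hdom] at hrn
      omega
    rw [Finset.sum_congr rfl hker]
    have hmap : Finset.Icc n (2 * n) = (Finset.Icc 0 n).map (addRightEmbedding n) := by
      rw [Finset.map_add_right_Icc]
      congr 1 <;> omega
    rw [hmap, Finset.sum_map]
    have hterm : ∀ j ∈ Finset.Icc 0 n, (addRightEmbedding n) j + 1 - n = j + 1 := by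
      intro j _
      simp [addRightEmbedding]
      omega
    rw [Finset.sum_congr rfl hterm]
    have gauss : ∀ N : ℕ, 2 * (∑ j ∈ Finset.Icc 0 N, (j + 1)) = (N + 1) * (N + 2) := by
      intro N
      induction N with
      | zero => simp
      | succ m ih =>
        rw [Finset.sum_Icc_succ_top (by omega : 0 ≤ m + 1), Nat.mul_add, ih]
        ring
    have := gauss n
    omega

end
end

section
/- (Invertibility of the Toeplitz binomial block, even case) Let n ≥ 1 and let 𝒩 be the n×n real matrix with entries 𝒩_{i,j} = C(2n+1, n+1+i−j) for 0 ≤ i, j ≤ n−1. Then det 𝒩 > 0; in particular 𝒩 is invertible. (This determinant equals the dimension of the irreducible SL_{2n+1}-representation given by the Schur module for the partition (n+1,…,n+1).) -/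
noncomputable section

open Finset Polynomial

/-- Vandermonde convolution, truncated to `range N`. -/
lemma sum_choose_mul_choose_sub (m R N jj : ℕ) (hj : jj < N) (hR : N ≤ R) :
    ∑ k ∈ Finset.range N, jj.choose k * m.choose (R - k) = (m + jj).choose R := by
  rw [add_comm m jj, Nat.add_choose_eq, Finset.Nat.sum_antidiagonal_eq_sum_range_succ_mk]
  refine Finset.sum_subset (Finset.range_subset_range.2 (by omega)) ?_
  intro x _ hx
  simp only [Finset.mem_range, not_lt] at hx
  rw [Nat.choose_eq_zero_of_lt (by omega), zero_mul]

/-- Real-cast version of the truncated Vandermonde convolution, as a sum over `Fin N`. -/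
lemma sum_choose_mul_choose_sub_real (m R N jj : ℕ) (hj : jj < N) (hR : N ≤ R) :
    ∑ k : Fin N, (jj.choose (k : ℕ) : ℝ) * (m.choose (R - (k : ℕ)) : ℝ)
      = ((m + jj).choose R : ℝ) := by
  rw [← sum_choose_mul_choose_sub m R N jj hj hR,
    Fin.sum_univ_eq_sum_range (fun k => (jj.choose k : ℝ) * (m.choose (R - k) : ℝ)) N]
  push_cast
  rfl

/-- `a! * (a+1)(a+2)⋯(a+j) = (a+j)!`. -/
lemma factorial_mul_prod_range (a j : ℕ) :
    a.factorial * ∏ t ∈ Finset.range j, (a + 1 + t) = (a + j).factorial := by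
  induction j with
  | zero => simp
  | succ k ih =>
    rw [Finset.prod_range_succ, ← mul_assoc, ih, show a + (k + 1) = (a + k) + 1 from rfl,
      Nat.factorial_succ]
    ring

/-- The `n × n` real matrix `𝒩` with entries `𝒩_{i,j} = C(2n+1, n+1+i−j)` for
`0 ≤ i, j ≤ n−1` (here `n + 1 + i − j ≥ 2 > 0` always, so the `ℓ < 0`
convention is not needed). -/
def Nmat' (n : ℕ) : Matrix (Fin n) (Fin n) ℝ :=
  Matrix.of fun i j => ((2 * n + 1).choose (n + 1 + (i : ℕ) - (j : ℕ)) : ℝ)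

/-- Positivity of the determinant of the matrix `C(2n+1+i+j, n+j)`. -/
lemma det_hankel_pos (n : ℕ) : 0 < (Matrix.of fun i j : Fin n =>
    ((2 * n + 1 + (i : ℕ) + (j : ℕ)).choose (n + (j : ℕ)) : ℝ)).det := by
  set a : Fin n → ℝ := fun i => ((2 * n + 1 + (i : ℕ)).factorial : ℝ) /
    ((n + 1 + (i : ℕ)).factorial : ℝ) with ha
  set b : Fin n → ℝ := fun j => (((n + (j : ℕ)).factorial : ℝ))⁻¹ with hb
  set p : Fin n → ℝ[X] := fun j =>
    ∏ t ∈ Finset.range (j : ℕ), (X + C (((2 * n + 2 + t : ℕ) : ℝ))) with hp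
  have hdeg : ∀ j : Fin n, (p j).natDegree = (j : ℕ) := by
    intro j
    rw [hp]
    rw [Polynomial.natDegree_prod_of_monic _ _ (fun t _ => Polynomial.monic_X_add_C _),
      Finset.sum_congr rfl fun t _ => Polynomial.natDegree_X_add_C _]
    simp
  have hmonic : ∀ j : Fin n, (p j).Monic := fun j =>
    Polynomial.monic_prod_of_monic _ _ fun t _ => Polynomial.monic_X_add_C _
  have hentry : ∀ i j : Fin n,
      ((2 * n + 1 + (i : ℕ) + (j : ℕ)).choose (n + (j : ℕ)) : ℝ)
        = a i * (b j * (p j).eval (((i : ℕ) : ℝ))) := by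
    intro i j
    have heval : (p j).eval (((i : ℕ) : ℝ))
        = ((∏ t ∈ Finset.range (j : ℕ), (2 * n + 2 + (i : ℕ) + t) : ℕ) : ℝ) := by
      rw [hp, Polynomial.eval_prod]
      push_cast
      exact Finset.prod_congr rfl fun t _ => by simp; ring
    have h2 : (2 * n + 1 + (i : ℕ) + (j : ℕ)).choose (n + (j : ℕ)) * (n + (j : ℕ)).factorial
        * (n + 1 + (i : ℕ)).factorial = (2 * n + 1 + (i : ℕ) + (j : ℕ)).factorial := by
      have := Nat.choose_mul_factorial_mul_factorial
        (show n + (j : ℕ) ≤ 2 * n + 1 + (i : ℕ) + (j : ℕ) by omega)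
      rw [show 2 * n + 1 + (i : ℕ) + (j : ℕ) - (n + (j : ℕ)) = n + 1 + (i : ℕ) by omega] at this
      exact this
    have h3 : (2 * n + 1 + (i : ℕ)).factorial
        * ∏ t ∈ Finset.range (j : ℕ), (2 * n + 2 + (i : ℕ) + t)
        = (2 * n + 1 + (i : ℕ) + (j : ℕ)).factorial := by
      have := factorial_mul_prod_range (2 * n + 1 + (i : ℕ)) (j : ℕ)
      rw [Finset.prod_congr rfl
        (fun t _ => show 2*n+1+(i:ℕ)+1+t = 2*n+2+(i:ℕ)+t by omega)] at this
      exact this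
    rw [heval, ha, hb]
    have fpos1 : (0 : ℝ) < ((n + 1 + (i : ℕ)).factorial : ℝ) := by
      exact_mod_cast Nat.factorial_pos _
    have fpos2 : (0 : ℝ) < ((n + (j : ℕ)).factorial : ℝ) := by
      exact_mod_cast Nat.factorial_pos _
    have hN : (2*n+1+(i:ℕ)+(j:ℕ)).choose (n+(j:ℕ))
        * ((n+1+(i:ℕ)).factorial * (n+(j:ℕ)).factorial)
        = (2*n+1+(i:ℕ)).factorial * ∏ t ∈ Finset.range (j:ℕ), (2*n+2+(i:ℕ)+t) := by
      rw [h3, ← h2]; ring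
    field_simp
    rw [← mul_assoc] at hN
    exact_mod_cast hN
  have hGfact : (Matrix.of fun i j : Fin n =>
      ((2 * n + 1 + (i : ℕ) + (j : ℕ)).choose (n + (j : ℕ)) : ℝ)).det
      = (∏ i, a i) * ((∏ j, b j) *
        (Matrix.of fun i j : Fin n => (p j).eval (((i : ℕ) : ℝ))).det) := by
    have e1 : (Matrix.of fun i j : Fin n =>
        ((2 * n + 1 + (i : ℕ) + (j : ℕ)).choose (n + (j : ℕ)) : ℝ))
        = Matrix.of fun i j => a i *
          ((Matrix.of fun i j : Fin n => b j * (p j).eval (((i : ℕ) : ℝ))) i j) := by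
      ext i j; simp only [Matrix.of_apply]; exact hentry i j
    rw [e1, Matrix.det_mul_column a, ← Matrix.det_mul_row b]
    rfl
  rw [hGfact]
  have hvdm : (Matrix.of fun i j : Fin n => (p j).eval (((i : ℕ) : ℝ))).det
      = (Matrix.vandermonde fun i : Fin n => ((i : ℕ) : ℝ)).det :=
    (Matrix.det_eval_matrixOfPolynomials_eq_det_vandermonde _ p hdeg hmonic).symm
  rw [hvdm, Matrix.det_vandermonde]
  have hapos : 0 < ∏ i, a i := Finset.prod_pos fun i _ => by
    apply div_pos <;> exact_mod_cast Nat.factorial_pos _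
  have hbpos : 0 < ∏ j, b j := Finset.prod_pos fun j _ => by
    rw [hb]; positivity
  have hvpos : 0 < ∏ i : Fin n, ∏ j ∈ Finset.Ioi i, (((j : ℕ) : ℝ) - ((i : ℕ) : ℝ)) := by
    apply Finset.prod_pos
    intro i _
    apply Finset.prod_pos
    intro j hj
    rw [sub_pos]
    exact_mod_cast Finset.mem_Ioi.1 hj
  positivity

/-- Invertibility of the Toeplitz binomial block, even case: `det 𝒩 > 0`
(this determinant is the dimension of the Schur module for the partition
`(n+1,…,n+1)` of the `(2n+1)`-dimensional representation, hence positive);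
in particular `𝒩` is invertible. -/
theorem det_Nmat'_pos (n : ℕ) (hn : 1 ≤ n) : 0 < (Nmat' n).det := by
  set U : Matrix (Fin n) (Fin n) ℝ :=
    Matrix.of fun k j => (((j : ℕ).choose (k : ℕ) : ℕ) : ℝ) with hU
  set L : Matrix (Fin n) (Fin n) ℝ :=
    Matrix.of fun i k => (((i : ℕ).choose (k : ℕ) : ℕ) : ℝ) with hL
  set B : Matrix (Fin n) (Fin n) ℝ :=
    Matrix.of fun i j => ((2 * n + 1 + (j : ℕ)).choose (n + 1 + (i : ℕ)) : ℝ) with hB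
  set G : Matrix (Fin n) (Fin n) ℝ :=
    Matrix.of fun i j => ((2 * n + 1 + (i : ℕ) + (j : ℕ)).choose (n + (j : ℕ)) : ℝ) with hG
  have hMU : Nmat' n * U = B := by
    ext i j
    simp only [Matrix.mul_apply, Matrix.of_apply, Nmat', hU, hB]
    have h := sum_choose_mul_choose_sub_real (2 * n + 1) (n + 1 + (i : ℕ)) n (j : ℕ)
      j.isLt (by omega)
    rw [← h]
    exact Finset.sum_congr rfl fun k _ => mul_comm _ _
  have hLB : L * B = G := by
    ext i j
    simp only [Matrix.mul_apply, Matrix.of_apply, hL, hB, hG]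
    have hsym : ∀ k : Fin n,
        ((2 * n + 1 + (j : ℕ)).choose (n + 1 + (k : ℕ)) : ℝ)
          = ((2 * n + 1 + (j : ℕ)).choose (n + (j : ℕ) - (k : ℕ)) : ℝ) := by
      intro k
      rw [← Nat.choose_symm (show n + 1 + (k : ℕ) ≤ 2 * n + 1 + (j : ℕ) by omega)]
      congr 2
      omega
    simp_rw [hsym]
    have h := sum_choose_mul_choose_sub_real (2 * n + 1 + (j : ℕ)) (n + (j : ℕ)) n (i : ℕ)
      i.isLt (by omega)
    rw [show (2 * n + 1 + (i : ℕ) + (j : ℕ)) = (2 * n + 1 + (j : ℕ)) + (i : ℕ) by omega]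
    exact h
  have hLdet : L.det = 1 := by
    rw [Matrix.det_of_lowerTriangular L (fun i k h => by
      simp only [hL, Matrix.of_apply]
      rw [Nat.choose_eq_zero_of_lt (by exact_mod_cast h), Nat.cast_zero])]
    simp [hL]
  have hUdet : U.det = 1 := by
    rw [Matrix.det_of_upperTriangular (show U.BlockTriangular id from fun i k h => by
      simp only [hU, Matrix.of_apply]
      rw [Nat.choose_eq_zero_of_lt (by exact_mod_cast h), Nat.cast_zero])]
    simp [hU]
  have hdet : (Nmat' n).det = G.det := by
    calc (Nmat' n).det = L.det * ((Nmat' n).det * U.det) := by rw [hLdet, hUdet]; ring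
    _ = (L * (Nmat' n * U)).det := by rw [Matrix.det_mul, Matrix.det_mul]
    _ = G.det := by rw [hMU, hLB]
  rw [hdet, hG]
  exact det_hankel_pos n

end
end

section
/- (Lemma 3.6) Let p ≥ 1, let W be an invertible p×p real matrix admitting an LU-decomposition W = V·U with V lower triangular and U upper triangular, and let C be an arbitrary p×p real matrix. Then there exist two upper-triangular p×p real matrices X and Y such that C = W·X − Yᵀ·Wᵀ. -/
open Matrix

noncomputable section

/-- Lemma 3.6: if `W` is an invertible `p × p` real matrix admitting an
LU-decomposition `W = V·U` (`V` lower triangular, `U` upper triangular), then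
for every `p × p` real matrix `C` there exist upper-triangular matrices `X, Y`
with `C = W·X − Yᵀ·Wᵀ`. -/
theorem lemma_3_6 (p : ℕ) (hp : 1 ≤ p) (W V U C : Matrix (Fin p) (Fin p) ℝ)
    (hW : IsUnit W)
    (hV : ∀ i j : Fin p, i < j → V i j = 0)
    (hU : ∀ i j : Fin p, j < i → U i j = 0)
    (hLU : W = V * U) :
    ∃ X Y : Matrix (Fin p) (Fin p) ℝ,
      (∀ i j : Fin p, j < i → X i j = 0) ∧
      (∀ i j : Fin p, j < i → Y i j = 0) ∧
      C = W * X - Yᵀ * Wᵀ := by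
  have hdetW : IsUnit W.det := (Matrix.isUnit_iff_isUnit_det W).mp hW
  have hdetVU : IsUnit (V.det * U.det) := by
    rwa [hLU, Matrix.det_mul] at hdetW
  have hdetV : IsUnit V.det := isUnit_of_mul_isUnit_left hdetVU
  have hdetU : IsUnit U.det := isUnit_of_mul_isUnit_right hdetVU
  have hVu : IsUnit V := (Matrix.isUnit_iff_isUnit_det V).mpr hdetV
  have hUu : IsUnit U := (Matrix.isUnit_iff_isUnit_det U).mpr hdetU
  haveI : Invertible V := hVu.invertible
  haveI : Invertible U := hUu.invertible
  set D : Matrix (Fin p) (Fin p) ℝ := V⁻¹ * C * (Vᵀ)⁻¹ with hD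
  set D₁ : Matrix (Fin p) (Fin p) ℝ :=
    Matrix.of (fun i j => if i ≤ j then D i j else 0) with hD₁
  set D₂ : Matrix (Fin p) (Fin p) ℝ :=
    Matrix.of (fun i j => if i < j then -(D j i) else 0) with hD₂
  -- triangularity facts
  have htU : U.BlockTriangular id := fun i j h => hU i j h
  have htUinv : U⁻¹.BlockTriangular (id : Fin p → Fin p) :=
    Matrix.blockTriangular_inv_of_blockTriangular htU
  have htVT : Vᵀ.BlockTriangular (id : Fin p → Fin p) := fun i j h => hV j i h
  have htD₁ : D₁.BlockTriangular (id : Fin p → Fin p) := by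
    intro i j h
    have h' : j < i := h
    simp only [hD₁, Matrix.of_apply]
    rw [if_neg (not_le.mpr h')]
  have htD₂ : D₂.BlockTriangular (id : Fin p → Fin p) := by
    intro i j h
    have h' : j < i := h
    simp only [hD₂, Matrix.of_apply]
    rw [if_neg (not_lt.mpr h'.le)]
  refine ⟨U⁻¹ * D₁ * Vᵀ, U⁻¹ * D₂ * Vᵀ, ?_, ?_, ?_⟩
  · exact (htUinv.mul htD₁).mul htVT
  · exact (htUinv.mul htD₂).mul htVT
  · have hD12 : D₁ - D₂ᵀ = D := by
      ext i j
      simp only [Matrix.sub_apply, Matrix.transpose_apply, hD₁, hD₂, Matrix.of_apply]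
      rcases le_or_gt i j with h | h
      · rw [if_pos h, if_neg (not_lt.mpr h)]; ring
      · rw [if_neg (not_le.mpr h), if_pos h]; ring
    have hUUinv : U * U⁻¹ = 1 := Matrix.mul_nonsing_inv U hdetU
    have hW1 : W * (U⁻¹ * D₁ * Vᵀ) = V * D₁ * Vᵀ := by
      rw [hLU]
      rw [show V * U * (U⁻¹ * D₁ * Vᵀ) = V * (U * U⁻¹) * D₁ * Vᵀ by
        simp only [Matrix.mul_assoc], hUUinv, Matrix.mul_one]
    have hW2 : (U⁻¹ * D₂ * Vᵀ)ᵀ * Wᵀ = V * D₂ᵀ * Vᵀ := by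
      rw [hLU, Matrix.transpose_mul, Matrix.transpose_mul, Matrix.transpose_mul,
        Matrix.transpose_transpose, Matrix.transpose_nonsing_inv]
      rw [show V * (D₂ᵀ * (Uᵀ)⁻¹) * (Uᵀ * Vᵀ) = V * D₂ᵀ * ((Uᵀ)⁻¹ * Uᵀ) * Vᵀ by
        simp only [Matrix.mul_assoc]]
      rw [Matrix.nonsing_inv_mul Uᵀ (by simpa using hdetU), Matrix.mul_one]
    rw [hW1, hW2, ← Matrix.sub_mul, ← Matrix.mul_sub, hD12, hD]
    rw [show V * (V⁻¹ * C * (Vᵀ)⁻¹) * Vᵀ = (V * V⁻¹) * C * ((Vᵀ)⁻¹ * Vᵀ) by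
      simp only [Matrix.mul_assoc]]
    rw [Matrix.mul_nonsing_inv V hdetV, Matrix.nonsing_inv_mul Vᵀ (by simpa using hdetV),
      Matrix.one_mul, Matrix.mul_one]

end
end

section
/- (Proposition 3.7(1), odd case) Let n ≥ 1. With 𝒩, 𝒟, 𝒥 as below and 𝒰 = 𝒥·𝒟·𝒩⁻¹·𝒟, the matrix 𝒰 is symmetric: 𝒰ᵀ = 𝒰. -/
open Matrix

noncomputable section

/-- `𝒟`: the `n × n` lower-triangular matrix with `𝒟_{i,j} = C(2n, i−j)` for
`i ≥ j` and `0` otherwise. -/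
def Dmat (n : ℕ) : Matrix (Fin n) (Fin n) ℝ :=
  Matrix.of fun i j =>
    if (j : ℕ) ≤ (i : ℕ) then ((2 * n).choose ((i : ℕ) - (j : ℕ)) : ℝ) else 0

/-- `𝒥`: the `n × n` exchange matrix, `𝒥_{i,j} = 1` if `i + j = n − 1` and `0`
otherwise. -/
def Jmat (n : ℕ) : Matrix (Fin n) (Fin n) ℝ :=
  Matrix.of fun i j => if (i : ℕ) + (j : ℕ) = n - 1 then 1 else 0

/-- `𝒰 = 𝒥·𝒟·𝒩⁻¹·𝒟`. -/
def Umat (n : ℕ) : Matrix (Fin n) (Fin n) ℝ :=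
  Jmat n * Dmat n * (Nmat n)⁻¹ * Dmat n

/-- Multiplying by `𝒥` on the left reverses the rows. -/
lemma Jmat_mul (n : ℕ) (M : Matrix (Fin n) (Fin n) ℝ) :
    Jmat n * M = Matrix.of fun i j => M i.rev j := by
  ext i j
  have h : ∀ k : Fin n, Jmat n i k = if k = i.rev then (1:ℝ) else 0 := by
    intro k
    have : ((i : ℕ) + (k : ℕ) = n - 1) ↔ k = i.rev := by
      rw [Fin.ext_iff, Fin.val_rev]; omega
    simp [Jmat, this]
  simp only [mul_apply, h, ite_mul, one_mul, zero_mul]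
  simp

/-- Multiplying by `𝒥` on the right reverses the columns. -/
lemma mul_Jmat (n : ℕ) (M : Matrix (Fin n) (Fin n) ℝ) :
    M * Jmat n = Matrix.of fun i j => M i j.rev := by
  ext i j
  have h : ∀ k : Fin n, Jmat n k j = if k = j.rev then (1:ℝ) else 0 := by
    intro k
    have : ((k : ℕ) + (j : ℕ) = n - 1) ↔ k = j.rev := by
      rw [Fin.ext_iff, Fin.val_rev]; omega
    simp [Jmat, this]
  simp only [mul_apply, h, mul_ite, mul_one, mul_zero]
  simp

/-- `𝒥` is symmetric. -/
lemma Jmat_transpose (n : ℕ) : (Jmat n)ᵀ = Jmat n := by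
  ext i j; simp [Jmat, transpose_apply, add_comm]

/-- `𝒥` is an involution. -/
lemma Jmat_mul_Jmat (n : ℕ) : Jmat n * Jmat n = 1 := by
  rw [Jmat_mul]
  ext i j
  have hi := i.isLt
  have hj := j.isLt
  simp only [Matrix.of_apply, Jmat, one_apply, Fin.ext_iff, Fin.val_rev]
  have : (n - ((i:ℕ) + 1) + (j:ℕ) = n - 1) ↔ (i : ℕ) = (j : ℕ) := by omega
  simp [this]

/-- `𝒩` is symmetric (by `C(2n,k) = C(2n,2n−k)`). -/
lemma Nmat_symm (n : ℕ) : (Nmat n)ᵀ = Nmat n := by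
  ext i j
  simp only [Nmat, transpose_apply, Matrix.of_apply]
  have hi := i.isLt; have hj := j.isLt
  have h2 : n + (j : ℕ) - (i : ℕ) = 2 * n - (n + (i : ℕ) - (j : ℕ)) := by omega
  rw [h2, Nat.choose_symm (by omega)]

/-- `𝒥` commutes with `𝒩`: indeed `𝒩𝒥` has entries `C(2n, i+j+1)`,
which are symmetric in `i, j`. -/
lemma Nmat_comm_Jmat (n : ℕ) : Nmat n * Jmat n = Jmat n * Nmat n := by
  rw [Jmat_mul, mul_Jmat]
  ext i j
  have hi := i.isLt; have hj := j.isLt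
  simp only [Matrix.of_apply, Nmat, Fin.val_rev]
  have h1 : n + (i : ℕ) - (n - ((j:ℕ)+1)) = (i:ℕ) + (j:ℕ) + 1 := by omega
  have h2 : n + (n - ((i:ℕ)+1)) - (j:ℕ) = 2*n - ((i:ℕ) + (j:ℕ) + 1) := by omega
  rw [h1, h2, Nat.choose_symm (by omega)]

/-- Conjugating `𝒟ᵀ` by `𝒥` gives back `𝒟`, in the form `𝒟ᵀ𝒥 = 𝒥𝒟`. -/
lemma Dmat_rev (n : ℕ) : (Dmat n)ᵀ * Jmat n = Jmat n * Dmat n := by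
  rw [Jmat_mul, mul_Jmat]
  ext i j
  have hi := i.isLt; have hj := j.isLt
  simp only [Matrix.of_apply, transpose_apply, Dmat, Fin.val_rev]
  rcases le_or_gt ((i:ℕ) + (j:ℕ) + 1) n with h | h
  · rw [if_pos (by omega), if_pos (by omega)]
    have : n - ((j:ℕ)+1) - (i:ℕ) = n - ((i:ℕ)+1) - (j:ℕ) := by omega
    rw [this]
  · rw [if_neg (by omega), if_neg (by omega)]

lemma Jmat_inv (n : ℕ) : (Jmat n)⁻¹ = Jmat n :=
  inv_eq_right_inv (Jmat_mul_Jmat n)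

/-- `𝒥` commutes with `𝒩⁻¹`. -/
lemma Ninv_comm_Jmat (n : ℕ) : (Nmat n)⁻¹ * Jmat n = Jmat n * (Nmat n)⁻¹ := by
  have key : Jmat n * Nmat n * Jmat n = Nmat n := by
    rw [← Nmat_comm_Jmat, mul_assoc, Jmat_mul_Jmat, mul_one]
  have h : (Nmat n)⁻¹ = Jmat n * (Nmat n)⁻¹ * Jmat n := by
    conv_lhs => rw [← key]
    rw [Matrix.mul_inv_rev, Matrix.mul_inv_rev, Jmat_inv, mul_assoc]
  conv_lhs => rw [h]
  rw [mul_assoc, mul_assoc, Jmat_mul_Jmat, mul_one]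

/-- Proposition 3.7(1), odd case: `𝒰` is symmetric. -/
theorem prop_3_7_1 (n : ℕ) (hn : 1 ≤ n) : (Umat n)ᵀ = Umat n := by
  have hD := Dmat_rev n
  calc (Umat n)ᵀ
      = (Dmat n)ᵀ * ((Nmat n)⁻¹ * ((Dmat n)ᵀ * Jmat n)) := by
        simp [Umat, transpose_mul, Matrix.transpose_nonsing_inv, Nmat_symm,
          Jmat_transpose, mul_assoc]
    _ = (Dmat n)ᵀ * ((Nmat n)⁻¹ * Jmat n) * Dmat n := by
        rw [hD, ← mul_assoc, ← mul_assoc, mul_assoc _ _ (Jmat n)]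
    _ = (Dmat n)ᵀ * Jmat n * (Nmat n)⁻¹ * Dmat n := by
        rw [Ninv_comm_Jmat, ← mul_assoc]
    _ = Umat n := by rw [hD, Umat]

end
end
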